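/- arXiv:math/0603069 — 7 statements merged into one kernel-verified Lean document; each statement's English description precedes it below -/
import Mathlib

section
/- If A_1, A_2, ... is any sequence of subsets of a separable metric space S, then there is a subsequence that converges, i.e. whose lim inf equals its lim sup. -/
open Filter Topology Set

/-- The lim inf of a sequence of subsets: points every neighborhood of which
meets all but finitely many of the sets. -/
def setLimInf {S : Type*} [TopologicalSpace S] (A : ℕ → Set S) : Set S :=
  {x | ∀ U ∈ 𝓝 x, ∀ᶠ n in atTop, (A n ∩ U).Nonempty}

/-- The lim sup of a sequence of subsets: points every neighborhood of which
meets infinitely many of the sets. -/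
def setLimSup {S : Type*} [TopologicalSpace S] (A : ℕ → Set S) : Set S :=
  {x | ∀ U ∈ 𝓝 x, ∃ᶠ n in atTop, (A n ∩ U).Nonempty}

/-- Every sequence of subsets of a separable metric space has a convergent
subsequence (one whose lim inf equals its lim sup). -/
theorem stmt_0 {S : Type*} [MetricSpace S] [TopologicalSpace.SeparableSpace S]
    (A : ℕ → Set S) :
    ∃ φ : ℕ → ℕ, StrictMono φ ∧ setLimInf (A ∘ φ) = setLimSup (A ∘ φ) := by
  have : SecondCountableTopology S :=
    UniformSpace.secondCountable_of_separable S
  obtain ⟨b, hbc, -, hb⟩ := TopologicalSpace.exists_countable_basis S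
  obtain ⟨g, hg⟩ := Set.Countable.exists_surjective (Set.insert_nonempty ∅ b) (hbc.insert ∅)
  set U : ℕ → Set S := fun k => (g k : Set S) with hUdef
  set x : ℕ → ℕ → Bool := fun n k => @decide (A n ∩ U k).Nonempty (Classical.dec _) with hx
  obtain ⟨f, -, φ, hφ, hconv⟩ :=
    IsCompact.tendsto_subseq (x := x) isCompact_univ (fun n => Set.mem_univ _)
  refine ⟨φ, hφ, Set.Subset.antisymm (fun y hy V hV => (hy V hV).frequently) ?_⟩
  intro y hy V hV
  obtain ⟨W, hWb, hyW, hWV⟩ := hb.mem_nhds_iff.mp hV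
  obtain ⟨k, hk⟩ := hg ⟨W, Set.mem_insert_of_mem _ hWb⟩
  have hUkW : U k = W := by simp [hUdef, hk]
  have hfreq : ∃ᶠ n in atTop, (A (φ n) ∩ U k).Nonempty := by
    rw [hUkW]; exact hy W (hb.mem_nhds hWb hyW)
  have hcoord : Tendsto (fun n => x (φ n) k) atTop (𝓝 (f k)) :=
    ((continuous_apply k).tendsto f).comp hconv
  have hev : ∀ᶠ n in atTop, x (φ n) k = f k :=
    hcoord (IsOpen.mem_nhds (isOpen_discrete {f k}) rfl)
  have hfk : f k = true := by
    obtain ⟨n, hne, heq⟩ := (hfreq.and_eventually hev).exists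
    rw [← heq]; simpa [hx] using hne
  have : ∀ᶠ n in atTop, (A (φ n) ∩ U k).Nonempty := by
    filter_upwards [hev] with n hn
    have : x (φ n) k = true := hn.trans hfk
    simpa [hx] using this
  filter_upwards [this] with n ⟨z, hz1, hz2⟩
  exact ⟨z, hz1, hWV (hUkW ▸ hz2)⟩
end

section
/- Suppose M is a continuum in S² such that for each closed annulus A in S², only finitely many components of A ∩ M intersect both boundary circles of A. Then M is locally connected. -/
open Set Function Topology

/-- The 2-sphere, as the unit sphere in ℝ³. -/
abbrev Sphere2 : Set (EuclideanSpace ℝ (Fin 3)) := Metric.sphere 0 1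

/-- The unit circle in ℝ². -/
abbrev Circle1 : Set (EuclideanSpace ℝ (Fin 2)) := Metric.sphere 0 1

/-- Clopen separation in a compact set: if the connected component (in `K`) of `x`
is disjoint from a closed subset `F` of `K`, there is a relatively clopen subset of `K`
containing the component and disjoint from `F`. -/
lemma clopen_sep {X : Type*} [TopologicalSpace X] [T2Space X] {K F : Set X}
    (hK : IsCompact K) (hF : IsClosed F) (hFK : F ⊆ K) {x : X} (hx : x ∈ K)
    (hdisj : connectedComponentIn K x ∩ F = ∅) :
    ∃ U O : Set X, IsOpen O ∧ U = K ∩ O ∧ IsClosed U ∧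
      connectedComponentIn K x ⊆ U ∧ U ∩ F = ∅ := by
  haveI : CompactSpace ↥K := isCompact_iff_compactSpace.mp hK
  set x' : ↥K := ⟨x, hx⟩
  have hcomp : connectedComponent x' = ⋂ s : { s : Set ↥K // IsClopen s ∧ x' ∈ s }, ↑s :=
    connectedComponent_eq_iInter_isClopen x'
  set F' : Set ↥K := Subtype.val ⁻¹' F with hF'def
  have hF'closed : IsClosed F' := hF.preimage continuous_subtype_val
  have hF'cpt : IsCompact F' := hF'closed.isCompact
  have hcover : F' ⊆ ⋃ s : { s : Set ↥K // IsClopen s ∧ x' ∈ s }, (↑s : Set ↥K)ᶜ := by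
    intro y hy
    have hynotin : y ∉ connectedComponent x' := by
      intro hmem
      have : (y : X) ∈ connectedComponentIn K x := by
        rw [connectedComponentIn_eq_image hx]
        exact ⟨y, hmem, rfl⟩
      have : (y : X) ∈ connectedComponentIn K x ∩ F := ⟨this, hy⟩
      rw [hdisj] at this
      exact this
    rw [hcomp] at hynotin
    simp only [mem_iInter, not_forall] at hynotin
    obtain ⟨s, hs⟩ := hynotin
    exact mem_iUnion.mpr ⟨s, hs⟩
  obtain ⟨t, ht⟩ := hF'cpt.elim_finite_subcover _ (fun s => s.2.1.compl.isOpen) hcover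
  set Ut : Set ↥K := ⋂ s ∈ t, (s : { s : Set ↥K // IsClopen s ∧ x' ∈ s }).1 with hUtdef
  have hUtclopen : IsClopen Ut := isClopen_biInter_finset fun s _ => s.2.1
  have hcompsub : connectedComponent x' ⊆ Ut := by
    rw [hcomp]
    intro y hy
    exact mem_iInter₂.mpr fun s _ => mem_iInter.mp hy s
  have hUtF' : Ut ∩ F' = ∅ := by
    ext y
    simp only [mem_inter_iff, mem_empty_iff_false, iff_false, not_and]
    intro hyU hyF
    obtain ⟨s, hs, hys⟩ := mem_iUnion₂.mp (ht hyF)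
    exact hys (mem_iInter₂.mp hyU s hs)
  obtain ⟨O, hOopen, hOeq⟩ := isOpen_induced_iff.mp hUtclopen.isOpen
  refine ⟨Subtype.val '' Ut, O, hOopen, ?_, ?_, ?_, ?_⟩
  · rw [← hOeq]
    ext z
    constructor
    · rintro ⟨w, hw, rfl⟩
      exact ⟨w.2, by simpa using hw⟩
    · rintro ⟨hzK, hzO⟩
      exact ⟨⟨z, hzK⟩, by simpa [hOeq.symm] using hzO, rfl⟩
  · exact ((hUtclopen.isClosed.isCompact).image continuous_subtype_val).isClosed
  · rw [connectedComponentIn_eq_image hx]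
    exact image_mono hcompsub
  · ext z
    simp only [mem_inter_iff, mem_empty_iff_false, iff_false, not_and]
    rintro ⟨w, hw, rfl⟩ hzF
    have : w ∈ Ut ∩ F' := ⟨hw, hzF⟩
    rw [hUtF'] at this
    exact this

/-- If the component of `q` in `N ∩ closedBall c r` misses the sphere, then `N ⊆ ball c r`. -/
lemma comp_meets_sphere {X : Type*} [MetricSpace X] {N : Set X} (hN : IsCompact N)
    (hNconn : IsPreconnected N) {c : X} {r : ℝ} {q : X}
    (hq : q ∈ N ∩ Metric.closedBall c r)
    (hdisj : connectedComponentIn (N ∩ Metric.closedBall c r) q ∩ Metric.sphere c r = ∅) :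
    N ⊆ Metric.ball c r := by
  set K := N ∩ Metric.closedBall c r with hKdef
  have hKcpt : IsCompact K := hN.inter_right Metric.isClosed_closedBall
  have hFclosed : IsClosed (K ∩ Metric.sphere c r) :=
    (hKcpt.isClosed.inter Metric.isClosed_sphere)
  have hdisj' : connectedComponentIn K q ∩ (K ∩ Metric.sphere c r) = ∅ := by
    apply eq_empty_of_subset_empty
    rw [← hdisj]
    exact fun z hz => ⟨hz.1, hz.2.2⟩
  obtain ⟨U, O, hOopen, hUeq, hUclosed, hcompU, hUF⟩ :=
    clopen_sep hKcpt hFclosed inter_subset_left hq hdisj'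
  have hUball : U ⊆ Metric.ball c r := by
    intro z hz
    have hzK : z ∈ K := hUeq ▸ hz |>.1
    have hle : dist z c ≤ r := hzK.2
    rcases lt_or_eq_of_le hle with hlt | heq
    · exact hlt
    · exfalso
      have : z ∈ U ∩ (K ∩ Metric.sphere c r) := ⟨hz, hzK, heq⟩
      rw [hUF] at this
      exact this
  have hUopenN : U = N ∩ (O ∩ Metric.ball c r) := by
    ext z
    constructor
    · intro hz
      have hzKO : z ∈ K ∩ O := hUeq ▸ hz
      exact ⟨hzKO.1.1, hzKO.2, hUball hz⟩
    · rintro ⟨hzN, hzO, hzb⟩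
      rw [hUeq]
      exact ⟨⟨hzN, Metric.ball_subset_closedBall hzb⟩, hzO⟩
  -- now use connectedness of N
  haveI : PreconnectedSpace ↥N := Subtype.preconnectedSpace hNconn
  have hVclopen : IsClopen (Subtype.val ⁻¹' U : Set ↥N) := by
    constructor
    · exact hUclosed.preimage continuous_subtype_val
    · have : (Subtype.val ⁻¹' U : Set ↥N) = Subtype.val ⁻¹' (O ∩ Metric.ball c r) := by
        ext z
        simp only [mem_preimage, hUopenN, mem_inter_iff]
        exact ⟨fun h => ⟨h.2.1, h.2.2⟩, fun h => ⟨z.2, h.1, h.2⟩⟩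
      rw [this]
      exact (hOopen.inter Metric.isOpen_ball).preimage continuous_subtype_val
  rcases isClopen_iff.mp hVclopen with hemp | huniv
  · exfalso
    have hqU : q ∈ U := hcompU (mem_connectedComponentIn hq)
    have : (⟨q, hq.1⟩ : ↥N) ∈ (Subtype.val ⁻¹' U : Set ↥N) := hqU
    rw [hemp] at this
    exact this
  · intro z hz
    have : (⟨z, hz⟩ : ↥N) ∈ (Subtype.val ⁻¹' U : Set ↥N) := huniv ▸ mem_univ _
    exact hUball this

/-- Crossing lemma: a continuum meeting both the inner ball and the outer region of an
annulus has a component of its intersection with the annulus meeting both spheres. -/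
lemma crossing {X : Type*} [MetricSpace X] {C : Set X} (hC : IsCompact C)
    (hCconn : IsPreconnected C) {c : X} {a b : ℝ} (hab : a < b)
    (hin : (C ∩ Metric.closedBall c a).Nonempty) (hout : ∃ y ∈ C, b ≤ dist y c) :
    ∃ x ∈ C ∩ (fun z => dist z c) ⁻¹' Icc a b,
      (connectedComponentIn (C ∩ (fun z => dist z c) ⁻¹' Icc a b) x ∩
        Metric.sphere c a).Nonempty ∧
      (connectedComponentIn (C ∩ (fun z => dist z c) ⁻¹' Icc a b) x ∩
        Metric.sphere c b).Nonempty := by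
  by_contra hcon
  push_neg at hcon
  have hdistc : Continuous fun z : X => dist z c := continuous_id.dist continuous_const
  set Ann : Set X := (fun z => dist z c) ⁻¹' Icc a b with hAnndef
  have hAnnclosed : IsClosed Ann := isClosed_Icc.preimage hdistc
  set K := C ∩ Ann with hKdef
  have hKcpt : IsCompact K := hC.inter_right hAnnclosed
  -- for each x in K, pick a relatively clopen set around its component missing one sphere
  have key : ∀ x : ↥K, ∃ U O : Set X, IsOpen O ∧ U = K ∩ O ∧ IsClosed U ∧
      connectedComponentIn K x.1 ⊆ U ∧
      (U ∩ Metric.sphere c a = ∅ ∨ U ∩ Metric.sphere c b = ∅) := by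
    rintro ⟨x, hx⟩
    by_cases hs : (connectedComponentIn K x ∩ Metric.sphere c a).Nonempty
    case neg =>
      have hca := not_nonempty_iff_eq_empty.mp hs
      have hdisj : connectedComponentIn K x ∩ (K ∩ Metric.sphere c a) = ∅ := by
        apply eq_empty_of_subset_empty
        intro z hz
        have : z ∈ connectedComponentIn K x ∩ Metric.sphere c a := ⟨hz.1, hz.2.2⟩
        rwa [hca] at this
      obtain ⟨U, O, h1, h2, h3, h4, h5⟩ := clopen_sep hKcpt
        (hKcpt.isClosed.inter Metric.isClosed_sphere) inter_subset_left hx hdisj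
      refine ⟨U, O, h1, h2, h3, h4, Or.inl ?_⟩
      apply eq_empty_of_subset_empty
      intro z hz
      have : z ∈ U ∩ (K ∩ Metric.sphere c a) := ⟨hz.1, (h2 ▸ hz.1 : z ∈ K ∩ O).1, hz.2⟩
      rwa [h5] at this
    case pos =>
      have hcb := hcon x hx hs
      have hdisj : connectedComponentIn K x ∩ (K ∩ Metric.sphere c b) = ∅ := by
        apply eq_empty_of_subset_empty
        intro z hz
        have : z ∈ connectedComponentIn K x ∩ Metric.sphere c b := ⟨hz.1, hz.2.2⟩
        rwa [hcb] at this
      obtain ⟨U, O, h1, h2, h3, h4, h5⟩ := clopen_sep hKcpt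
        (hKcpt.isClosed.inter Metric.isClosed_sphere) inter_subset_left hx hdisj
      refine ⟨U, O, h1, h2, h3, h4, Or.inr ?_⟩
      apply eq_empty_of_subset_empty
      intro z hz
      have : z ∈ U ∩ (K ∩ Metric.sphere c b) := ⟨hz.1, (h2 ▸ hz.1 : z ∈ K ∩ O).1, hz.2⟩
      rwa [h5] at this
  classical
  choose U O hOopen hUeq hUclosed hcompU hside using key
  have hUK : ∀ x, U x ⊆ K := fun x => by rw [hUeq x]; exact inter_subset_left
  have hmemU : ∀ z (hz : z ∈ K), z ∈ U ⟨z, hz⟩ :=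
    fun z hz => hcompU ⟨z, hz⟩ (mem_connectedComponentIn hz)
  have hcover : K ⊆ ⋃ x : ↥K, O x := by
    intro z hz
    have : z ∈ U ⟨z, hz⟩ := hmemU z hz
    rw [hUeq] at this
    exact mem_iUnion.mpr ⟨⟨z, hz⟩, this.2⟩
  obtain ⟨t, ht⟩ := hKcpt.elim_finite_subcover O (fun x => hOopen x) hcover
  set t' := t.filter (fun x => U x ∩ Metric.sphere c b = ∅) with ht'def
  set V : Set X := ⋃ x ∈ t', U x with hVdef
  have hVclosed : IsClosed V := (t'.finite_toSet).isClosed_biUnion fun x _ => hUclosed x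
  have hVK : V ⊆ K := by
    intro z hz
    obtain ⟨x, _, hzx⟩ := mem_iUnion₂.mp hz
    exact hUK x hzx
  have hVb : V ∩ Metric.sphere c b = ∅ := by
    apply eq_empty_of_subset_empty
    rintro z ⟨hzV, hzs⟩
    obtain ⟨x, hxt', hzx⟩ := mem_iUnion₂.mp hzV
    have : z ∈ U x ∩ Metric.sphere c b := ⟨hzx, hzs⟩
    rwa [(Finset.mem_filter.mp hxt').2] at this
  set W : Set X := K ∩ (⋃ x ∈ t', O x)ᶜ with hWdef
  have hWclosed : IsClosed W :=
    hKcpt.isClosed.inter (isClosed_compl_iff.mpr (isOpen_biUnion fun x _ => hOopen x))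
  have hVWdisj : V ∩ W = ∅ := by
    apply eq_empty_of_subset_empty
    rintro z ⟨hzV, hzW⟩
    obtain ⟨x, hxt', hzx⟩ := mem_iUnion₂.mp hzV
    have : z ∈ O x := by
      have := hUeq x ▸ hzx
      exact this.2
    exact hzW.2 (mem_iUnion₂.mpr ⟨x, hxt', this⟩)
  have hKVW : K ⊆ V ∪ W := by
    intro z hz
    by_cases hzO : z ∈ ⋃ x ∈ t', O x
    · obtain ⟨x, hxt', hzx⟩ := mem_iUnion₂.mp hzO
      exact Or.inl (mem_iUnion₂.mpr ⟨x, hxt', by rw [hUeq x]; exact ⟨hz, hzx⟩⟩)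
    · exact Or.inr ⟨hz, hzO⟩
  have hWa : W ∩ Metric.sphere c a = ∅ := by
    apply eq_empty_of_subset_empty
    rintro z ⟨hzW, hzs⟩
    have hzK : z ∈ K := hzW.1
    obtain ⟨x, hxt, hzx⟩ := mem_iUnion₂.mp (ht hzK)
    have hzU : z ∈ U x := by rw [hUeq x]; exact ⟨hzK, hzx⟩
    by_cases hxt' : x ∈ t'
    · exact hzW.2 (mem_iUnion₂.mpr ⟨x, hxt', hzx⟩)
    · have hnb : ¬(U x ∩ Metric.sphere c b = ∅) := by
        intro hbx
        exact hxt' (Finset.mem_filter.mpr ⟨hxt, hbx⟩)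
      rcases hside x with hsa | hsb
      · have : z ∈ U x ∩ Metric.sphere c a := ⟨hzU, hzs⟩
        rwa [hsa] at this
      · exact hnb hsb
  -- the two closed pieces
  set X₁ : Set X := (C ∩ Metric.closedBall c a) ∪ V with hX1def
  set X₂ : Set X := (C ∩ (fun z => dist z c) ⁻¹' Ici b) ∪ W with hX2def
  have hX1closed : IsClosed X₁ := (hC.isClosed.inter Metric.isClosed_closedBall).union hVclosed
  have hX2closed : IsClosed X₂ :=
    (hC.isClosed.inter (isClosed_Ici.preimage hdistc)).union hWclosed
  have hCsub : C ⊆ X₁ ∪ X₂ := by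
    intro z hz
    rcases le_or_gt (dist z c) a with h1 | h1
    · exact Or.inl (Or.inl ⟨hz, h1⟩)
    rcases le_or_gt b (dist z c) with h2 | h2
    · exact Or.inr (Or.inl ⟨hz, h2⟩)
    have hzK : z ∈ K := ⟨hz, le_of_lt h1, le_of_lt h2⟩
    rcases hKVW hzK with hV | hW
    · exact Or.inl (Or.inr hV)
    · exact Or.inr (Or.inr hW)
  have hX12 : X₁ ∩ X₂ = ∅ := by
    apply eq_empty_of_subset_empty
    rintro z ⟨hz1, hz2⟩
    rcases hz1 with hz1 | hz1 <;> rcases hz2 with hz2 | hz2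
    · exact absurd (le_trans hz2.2 hz1.2) (not_le.mpr hab)
    · -- z in closed ball a and in W ⊆ K : dist = a, so z in sphere a ∩ W
      have hzK : z ∈ K := hz2.1
      have : dist z c = a := le_antisymm hz1.2 hzK.2.1
      have : z ∈ W ∩ Metric.sphere c a := ⟨hz2, this⟩
      rwa [hWa] at this
    · -- z in V ⊆ K and dist ≥ b: dist = b
      have hzK : z ∈ K := hVK hz1
      have : dist z c = b := le_antisymm hzK.2.2 hz2.2
      have : z ∈ V ∩ Metric.sphere c b := ⟨hz1, this⟩
      rwa [hVb] at this
    · have : z ∈ V ∩ W := ⟨hz1, hz2⟩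
      rwa [hVWdisj] at this
  -- contradiction with connectedness of C
  have h1ne : (C ∩ X₂ᶜ).Nonempty := by
    obtain ⟨z, hz⟩ := hin
    refine ⟨z, hz.1, fun hz2 => ?_⟩
    have : z ∈ X₁ ∩ X₂ := ⟨Or.inl hz, hz2⟩
    rwa [hX12] at this
  have h2ne : (C ∩ X₁ᶜ).Nonempty := by
    obtain ⟨z, hzC, hzb⟩ := hout
    refine ⟨z, hzC, fun hz1 => ?_⟩
    have : z ∈ X₁ ∩ X₂ := ⟨hz1, Or.inl ⟨hzC, hzb⟩⟩
    rwa [hX12] at this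
  have hCuv : C ⊆ X₂ᶜ ∪ X₁ᶜ := by
    intro z hz
    rcases hCsub hz with hz1 | hz2
    · exact Or.inl fun hz2 => by
        have : z ∈ X₁ ∩ X₂ := ⟨hz1, hz2⟩
        rwa [hX12] at this
    · exact Or.inr fun hz1 => by
        have : z ∈ X₁ ∩ X₂ := ⟨hz1, hz2⟩
        rwa [hX12] at this
  obtain ⟨z, hzC, hz2, hz1⟩ := hCconn X₂ᶜ X₁ᶜ hX2closed.isOpen_compl hX1closed.isOpen_compl
    hCuv h1ne h2ne
  rcases hCsub hzC with h | h
  · exact hz1 h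
  · exact hz2 h

/-- An embedding maps connected components within a set to connected components
within the image. -/
lemma embedding_image_connectedComponentIn {X Y : Type*} [TopologicalSpace X]
    [TopologicalSpace Y] {f : X → Y} (hf : IsEmbedding f) {s : Set X} {x : X} (hx : x ∈ s) :
    f '' connectedComponentIn s x = connectedComponentIn (f '' s) (f x) := by
  apply Subset.antisymm
  · exact hf.continuous.image_connectedComponentIn_subset hx
  · set T := connectedComponentIn (f '' s) (f x) with hTdef
    have hTsub : T ⊆ f '' s := connectedComponentIn_subset _ _
    have hTrange : T ⊆ range f := hTsub.trans (image_subset_range _ _)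
    have hTimg : f '' (f ⁻¹' T) = T := image_preimage_eq_of_subset hTrange
    have hpre : f ⁻¹' T ⊆ s := by
      intro z hz
      obtain ⟨w, hws, hw⟩ := hTsub hz
      rwa [← hf.injective hw]
    have hconn : IsPreconnected (f ⁻¹' T) := by
      rw [← hf.isInducing.isPreconnected_image, hTimg]
      exact isPreconnected_connectedComponentIn
    have hxT : x ∈ f ⁻¹' T := mem_connectedComponentIn (mem_image_of_mem f hx)
    calc T = f '' (f ⁻¹' T) := hTimg.symm
    _ ⊆ f '' connectedComponentIn s x :=
        image_mono (hconn.subset_connectedComponentIn hxT hpre)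

/-- The main metric-space criterion: a continuum such that every metric annulus
meets it in only finitely many components touching both spheres is locally connected. -/
lemma main_metric {X : Type*} [MetricSpace X] {N : Set X} (hN : IsCompact N)
    (hNconn : IsPreconnected N)
    (hfin : ∀ (c : X) (r R : ℝ), 0 < r → r < R →
      {C : Set X | (∃ x ∈ (fun z => dist z c) ⁻¹' Icc r R ∩ N,
          C = connectedComponentIn ((fun z => dist z c) ⁻¹' Icc r R ∩ N) x) ∧
        (C ∩ Metric.sphere c r).Nonempty ∧ (C ∩ Metric.sphere c R).Nonempty}.Finite) :
    LocallyConnectedSpace ↥N := by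
  by_contra hLC
  rw [locallyConnectedSpace_iff_connected_subsets] at hLC
  push_neg at hLC
  obtain ⟨x, U, hU, hbad⟩ := hLC
  set p : X := x.1 with hpdef
  have hpN : p ∈ N := x.2
  -- find ε₀ > 0 with the ball neighborhood inside U
  obtain ⟨ε₀, hε₀pos, hball⟩ : ∃ ε > 0, Subtype.val ⁻¹' Metric.ball p ε ⊆ U := by
    obtain ⟨ε, hεpos, hsub⟩ := Metric.mem_nhds_iff.mp hU
    refine ⟨ε, hεpos, ?_⟩
    intro z hz
    apply hsub
    rw [Metric.mem_ball]
    exact hz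
  set ε : ℝ := ε₀ / 2 with hεdef
  have hεpos : 0 < ε := by positivity
  set K : Set X := N ∩ Metric.closedBall p ε with hKdef
  have hKcpt : IsCompact K := hN.inter_right Metric.isClosed_closedBall
  have hpK : p ∈ K := ⟨hpN, Metric.mem_closedBall.mpr (by simp [hεpos.le])⟩
  set comp : Set X := connectedComponentIn K p with hcompdef
  -- claim 1: points of N arbitrarily close to p outside comp
  have claim1 : ∀ δ > 0, ∃ q, q ∈ N ∧ dist q p < δ ∧ q ∉ comp := by
    intro δ hδ
    by_contra hcon
    push_neg at hcon
    set V : Set ↥N := Subtype.val ⁻¹' comp with hVdef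
    have hVnhds : V ∈ 𝓝 x := by
      have : Subtype.val ⁻¹' Metric.ball p δ ⊆ V := by
        rintro ⟨z, hzN⟩ hz
        exact hcon z hzN (Metric.mem_ball.mp hz)
      refine Filter.mem_of_superset ?_ this
      exact (Metric.isOpen_ball.preimage continuous_subtype_val).mem_nhds
        (by simpa [hpdef] using hδ)
    have hVconn : IsPreconnected V := by
      rw [← IsInducing.subtypeVal.isPreconnected_image (f := (Subtype.val : ↥N → X))]
      have : Subtype.val '' V = comp := by
        apply image_preimage_eq_of_subset
        rw [Subtype.range_coe]
        exact (connectedComponentIn_subset K p).trans inter_subset_left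
      rw [this]
      exact isPreconnected_connectedComponentIn
    have hVU : V ⊆ U := by
      intro z hz
      apply hball
      have : (z : X) ∈ Metric.closedBall p ε := ((connectedComponentIn_subset K p) hz).2
      have : dist (z : X) p < ε₀ := lt_of_le_of_lt this (by rw [hεdef]; linarith)
      exact this
    exact hbad V hVnhds hVconn hVU
  -- claim 2: every component of K other than comp meets the sphere of radius ε
  have claim2 : ∀ q ∈ K, q ∉ comp →
      (connectedComponentIn K q ∩ Metric.sphere p ε).Nonempty := by
    intro q hq hqcomp
    by_contra hcon
    rw [not_nonempty_iff_eq_empty] at hcon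
    have hsub : N ⊆ Metric.ball p ε := comp_meets_sphere hN hNconn hq hcon
    have hKN : K = N := by
      apply Subset.antisymm inter_subset_left
      intro z hz
      exact ⟨hz, Metric.ball_subset_closedBall (hsub hz)⟩
    have : comp = N := by
      rw [hcompdef, hKN]
      exact hNconn.connectedComponentIn hpN
    rw [this] at hqcomp
    exact hqcomp (hKN ▸ hq : q ∈ N)
  -- the annulus
  set a : ℝ := ε / 3 with hadef
  set b : ℝ := 2 * ε / 3 with hbdef
  have hapos : 0 < a := by positivity
  have hab : a < b := by rw [hadef, hbdef]; linarith
  have hbε : b ≤ ε := by rw [hbdef]; linarith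
  set Ann : Set X := (fun z => dist z p) ⁻¹' Icc a b with hAnndef
  have hAnnK : Ann ∩ N ⊆ K := by
    rintro z ⟨hz1, hz2⟩
    exact ⟨hz2, le_trans hz1.2 hbε⟩
  set S := {C : Set X | (∃ x ∈ Ann ∩ N, C = connectedComponentIn (Ann ∩ N) x) ∧
        (C ∩ Metric.sphere p a).Nonempty ∧ (C ∩ Metric.sphere p b).Nonempty} with hSdef
  have hSfin : S.Finite := hfin p a b hapos hab
  -- the collection of components near p
  set 𝒞 := {C : Set X | ∃ q, q ∈ N ∧ dist q p < a ∧ q ∉ comp ∧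
      C = connectedComponentIn K q} with h𝒞def
  have hmemK : ∀ q, q ∈ N → dist q p < a → q ∈ K :=
    fun q hqN hqa => ⟨hqN, Metric.mem_closedBall.mpr (le_trans hqa.le (by linarith))⟩
  -- each element of 𝒞 is closed and avoids p
  have h𝒞closed : ∀ C ∈ 𝒞, IsClosed C ∧ p ∉ C := by
    rintro C ⟨q, hqN, hqa, hqcomp, rfl⟩
    have hqK : q ∈ K := hmemK q hqN hqa
    constructor
    · haveI : CompactSpace ↥K := isCompact_iff_compactSpace.mp hKcpt
      rw [connectedComponentIn_eq_image hqK]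
      exact ((isClosed_connectedComponent.isCompact).image continuous_subtype_val).isClosed
    · intro hp
      have heq : connectedComponentIn K q = connectedComponentIn K p :=
        connectedComponentIn_eq hp
      apply hqcomp
      rw [hcompdef, ← heq]
      exact mem_connectedComponentIn hqK
  -- claim 3 : 𝒞 is infinite
  have claim3 : 𝒞.Infinite := by
    intro hfin𝒞
    have hTclosed : IsClosed (⋃₀ 𝒞) := by
      rw [sUnion_eq_biUnion]
      exact hfin𝒞.isClosed_biUnion fun C hC => (h𝒞closed C hC).1
    have hpnot : p ∉ ⋃₀ 𝒞 := by
      rintro ⟨C, hC, hpC⟩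
      exact (h𝒞closed C hC).2 hpC
    obtain ⟨δ, hδpos, hδ⟩ := Metric.isOpen_iff.mp hTclosed.isOpen_compl p hpnot
    obtain ⟨q, hqN, hqd, hqcomp⟩ := claim1 (min δ a) (lt_min hδpos hapos)
    have hq𝒞 : connectedComponentIn K q ∈ 𝒞 :=
      ⟨q, hqN, lt_of_lt_of_le hqd (min_le_right _ _), hqcomp, rfl⟩
    have hqmem : q ∈ connectedComponentIn K q :=
      mem_connectedComponentIn (hmemK q hqN (lt_of_lt_of_le hqd (min_le_right _ _)))
    have : q ∈ (⋃₀ 𝒞)ᶜ := hδ (Metric.mem_ball.mpr (lt_of_lt_of_le hqd (min_le_left _ _)))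
    exact this ⟨_, hq𝒞, hqmem⟩
  -- claim 4 : each C in 𝒞 contains a nonempty element of S
  have claim4 : ∀ C ∈ 𝒞, ∃ E ∈ S, E ⊆ C ∧ E.Nonempty := by
    rintro C ⟨q, hqN, hqa, hqcomp, rfl⟩
    have hqK : q ∈ K := hmemK q hqN hqa
    have hCcpt : IsCompact (connectedComponentIn K q) := by
      haveI : CompactSpace ↥K := isCompact_iff_compactSpace.mp hKcpt
      rw [connectedComponentIn_eq_image hqK]
      exact isClosed_connectedComponent.isCompact.image continuous_subtype_val
    have hCconn : IsPreconnected (connectedComponentIn K q) :=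
      isPreconnected_connectedComponentIn
    have hin : (connectedComponentIn K q ∩ Metric.closedBall p a).Nonempty :=
      ⟨q, mem_connectedComponentIn hqK, Metric.mem_closedBall.mpr hqa.le⟩
    have hout : ∃ y ∈ connectedComponentIn K q, b ≤ dist y p := by
      obtain ⟨y, hy1, hy2⟩ := claim2 q hqK hqcomp
      exact ⟨y, hy1, by rw [Metric.mem_sphere.mp hy2]; exact hbε⟩
    obtain ⟨z, hz, hza, hzb⟩ := crossing hCcpt hCconn hab hin hout
    set D := connectedComponentIn (connectedComponentIn K q ∩
      (fun w => dist w p) ⁻¹' Icc a b) z with hDdef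
    have hzAnnN : z ∈ Ann ∩ N := by
      refine ⟨hz.2, ?_⟩
      exact ((connectedComponentIn_subset K q).trans inter_subset_left) hz.1
    set E := connectedComponentIn (Ann ∩ N) z with hEdef
    have hDE : D ⊆ E := by
      apply IsPreconnected.subset_connectedComponentIn isPreconnected_connectedComponentIn
        (mem_connectedComponentIn hz)
      intro w hw
      have hw' := connectedComponentIn_subset _ _ hw
      exact ⟨hw'.2, ((connectedComponentIn_subset K q).trans inter_subset_left) hw'.1⟩
    have hES : E ∈ S := by
      refine ⟨⟨z, hzAnnN, rfl⟩, ?_, ?_⟩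
      · obtain ⟨w, hw1, hw2⟩ := hza
        exact ⟨w, hDE hw1, hw2⟩
      · obtain ⟨w, hw1, hw2⟩ := hzb
        exact ⟨w, hDE hw1, hw2⟩
    have hEC : E ⊆ connectedComponentIn K q := by
      have hzC : z ∈ connectedComponentIn K q := hz.1
      have : connectedComponentIn K q = connectedComponentIn K z :=
        connectedComponentIn_eq hzC
      rw [this]
      exact IsPreconnected.subset_connectedComponentIn isPreconnected_connectedComponentIn
        (mem_connectedComponentIn hzAnnN) ((connectedComponentIn_subset _ _).trans hAnnK)
    exact ⟨E, hES, hEC, ⟨z, mem_connectedComponentIn hzAnnN⟩⟩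
  -- build the injection and conclude
  classical
  set Φ : Set X → Set X := fun C => if h : C ∈ 𝒞 then (claim4 C h).choose else ∅ with hΦdef
  have hΦmem : ∀ C ∈ 𝒞, Φ C ∈ S ∧ Φ C ⊆ C ∧ (Φ C).Nonempty := by
    intro C hC
    rw [hΦdef]
    simp only [dif_pos hC]
    exact (claim4 C hC).choose_spec
  have hmapsTo : MapsTo Φ 𝒞 S := fun C hC => (hΦmem C hC).1
  have hinj : InjOn Φ 𝒞 := by
    rintro C hC C' hC' heq
    obtain ⟨q, hqN, hqa, hqcomp, rfl⟩ := hC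
    obtain ⟨q', hqN', hqa', hqcomp', rfl⟩ := hC'
    obtain ⟨y, hy⟩ := (hΦmem _ ⟨q, hqN, hqa, hqcomp, rfl⟩).2.2
    have hyC : y ∈ connectedComponentIn K q := (hΦmem _ ⟨q, hqN, hqa, hqcomp, rfl⟩).2.1 hy
    have hyC' : y ∈ connectedComponentIn K q' := by
      have := (hΦmem _ ⟨q', hqN', hqa', hqcomp', rfl⟩).2.1
      exact this (heq ▸ hy)
    rw [connectedComponentIn_eq hyC, connectedComponentIn_eq hyC']
  exact hSfin.not_infinite (Set.infinite_of_injOn_mapsTo hinj hmapsTo claim3)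

/-- Parametrization of a round annulus in the plane by `S¹ × [0,1]`. -/
lemma annulus_param (c : EuclideanSpace ℝ (Fin 2)) {r R : ℝ} (hr : 0 < r) (hrR : r < R) :
    ∃ A : ↥Circle1 × ↥(Icc (0:ℝ) 1) → EuclideanSpace ℝ (Fin 2),
      Continuous A ∧ Injective A ∧
      range A = (fun z => dist z c) ⁻¹' Icc r R ∧
      A '' {p | (p.2 : ℝ) = 0} = Metric.sphere c r ∧
      A '' {p | (p.2 : ℝ) = 1} = Metric.sphere c R := by
  have hRr : (0:ℝ) < R - r := by linarith
  set A : ↥Circle1 × ↥(Icc (0:ℝ) 1) → EuclideanSpace ℝ (Fin 2) :=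
    fun q => c + (r + (q.2 : ℝ) * (R - r)) • (q.1 : EuclideanSpace ℝ (Fin 2)) with hAdef
  have hnorm1 : ∀ θ : ↥Circle1, ‖(θ : EuclideanSpace ℝ (Fin 2))‖ = 1 := by
    intro θ
    have := θ.2
    rwa [mem_sphere_zero_iff_norm] at this
  have hs_pos : ∀ t : ↥(Icc (0:ℝ) 1), 0 < r + (t : ℝ) * (R - r) := by
    intro t
    have h0 : 0 ≤ (t : ℝ) := t.2.1
    nlinarith
  have hdist : ∀ q, dist (A q) c = r + (q.2 : ℝ) * (R - r) := by
    intro q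
    rw [hAdef, dist_eq_norm]
    simp only [add_sub_cancel_left]
    rw [norm_smul, hnorm1, mul_one, Real.norm_eq_abs, abs_of_pos (hs_pos q.2)]
  have hAcont : Continuous A := by
    apply continuous_const.add
    exact Continuous.smul
      (continuous_const.add ((continuous_subtype_val.comp continuous_snd).mul
        continuous_const))
      (continuous_subtype_val.comp continuous_fst)
  have hAinj : Injective A := by
    rintro ⟨θ, t⟩ ⟨θ', t'⟩ heq
    have hsmul : (r + (t:ℝ) * (R - r)) • (θ : EuclideanSpace ℝ (Fin 2)) =
        (r + (t':ℝ) * (R - r)) • (θ' : EuclideanSpace ℝ (Fin 2)) := by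
      have := congrArg (fun z => z - c) heq
      simpa [hAdef, add_sub_cancel_left] using heq
    have hseq : r + (t:ℝ) * (R - r) = r + (t':ℝ) * (R - r) := by
      have h1 := congrArg norm hsmul
      rw [norm_smul, norm_smul, hnorm1, hnorm1, mul_one, mul_one,
        Real.norm_eq_abs, Real.norm_eq_abs, abs_of_pos (hs_pos t), abs_of_pos (hs_pos t')] at h1
      exact h1
    have hteq : (t:ℝ) = (t':ℝ) := by
      have := hseq
      exact mul_right_cancel₀ (ne_of_gt hRr) (by linarith)
    have hθeq : (θ : EuclideanSpace ℝ (Fin 2)) = (θ' : EuclideanSpace ℝ (Fin 2)) := by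
      rw [hseq] at hsmul
      exact smul_right_injective _ (ne_of_gt (hseq ▸ hs_pos t)) hsmul
    exact Prod.ext (Subtype.ext hθeq) (Subtype.ext hteq)
  -- surjectivity helper
  have hsurj : ∀ z : EuclideanSpace ℝ (Fin 2), ∀ t : ℝ, (ht : t ∈ Icc (0:ℝ) 1) →
      r + t * (R - r) = dist z c →
      ∃ q : ↥Circle1 × ↥(Icc (0:ℝ) 1), (q.2 : ℝ) = t ∧ A q = z := by
    intro z t ht hteq
    have hspos : (0:ℝ) < dist z c := by
      rw [← hteq]
      exact hs_pos ⟨t, ht⟩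
    set s := dist z c with hsdef
    set θ : EuclideanSpace ℝ (Fin 2) := s⁻¹ • (z - c) with hθdef
    have hθmem : θ ∈ Circle1 := by
      rw [mem_sphere_zero_iff_norm, hθdef, norm_smul, Real.norm_eq_abs,
        abs_of_pos (inv_pos.mpr hspos), ← dist_eq_norm, ← hsdef]
      field_simp
    refine ⟨⟨⟨θ, hθmem⟩, ⟨t, ht⟩⟩, rfl, ?_⟩
    show c + (r + t * (R - r)) • θ = z
    rw [hteq, hθdef, smul_smul, mul_inv_cancel₀ (ne_of_gt hspos), one_smul]
    abel
  refine ⟨A, hAcont, hAinj, ?_, ?_, ?_⟩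
  · ext z
    constructor
    · rintro ⟨q, rfl⟩
      rw [mem_preimage, hdist]
      constructor
      · have h0 : 0 ≤ (q.2.1 : ℝ) := q.2.2.1
        nlinarith
      · have h1 : (q.2.1 : ℝ) ≤ 1 := q.2.2.2
        nlinarith
    · intro hz
      rw [mem_preimage] at hz
      have ht : (dist z c - r) / (R - r) ∈ Icc (0:ℝ) 1 := by
        constructor
        · apply div_nonneg _ hRr.le
          linarith [hz.1]
        · rw [div_le_one hRr]
          linarith [hz.2]
      obtain ⟨q, _, hq⟩ := hsurj z _ ht (by field_simp; ring)
      exact ⟨q, hq⟩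
  · ext z
    constructor
    · rintro ⟨q, hq0, rfl⟩
      rw [Metric.mem_sphere, hdist, hq0]
      ring
    · intro hz
      rw [Metric.mem_sphere] at hz
      obtain ⟨q, hq2, hq⟩ := hsurj z 0 ⟨le_refl 0, zero_le_one⟩ (by rw [hz]; ring)
      exact ⟨q, hq2, hq⟩
  · ext z
    constructor
    · rintro ⟨q, hq1, rfl⟩
      rw [Metric.mem_sphere, hdist, hq1]
      ring
    · intro hz
      rw [Metric.mem_sphere] at hz
      obtain ⟨q, hq2, hq⟩ := hsurj z 1 ⟨zero_le_one, le_refl 1⟩ (by rw [hz]; ring)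
      exact ⟨q, hq2, hq⟩

noncomputable section

/-- Stereographic projection gives an embedding of the plane into the 2-sphere with
range the complement of a point. -/
lemma stereo_embedding (v : ↥Sphere2) :
    ∃ F : EuclideanSpace ℝ (Fin 2) → ↥Sphere2,
      IsEmbedding F ∧ range F = {v}ᶜ := by
  haveI : Fact (Module.finrank ℝ (EuclideanSpace ℝ (Fin 3)) = 2 + 1) := ⟨by simp⟩
  set ψ := stereographic' 2 v with hψdef
  have hsrc : ψ.source = {v}ᶜ := stereographic'_source v
  have htgt : ψ.target = univ := stereographic'_target v
  set e₁ : EuclideanSpace ℝ (Fin 2) ≃ₜ ↥ψ.target :=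
    (Homeomorph.Set.univ _).symm.trans (Homeomorph.setCongr htgt.symm) with he₁
  set e₂ := e₁.trans ψ.toHomeomorphSourceTarget.symm with he₂
  refine ⟨fun z => ((e₂ z : ↥ψ.source) : ↥Sphere2), ?_, ?_⟩
  · exact IsEmbedding.subtypeVal.comp e₂.isEmbedding
  · have : (fun z => ((e₂ z : ↥ψ.source) : ↥Sphere2)) =
        (Subtype.val : ↥ψ.source → ↥Sphere2) ∘ e₂ := rfl
    rw [this, range_comp, e₂.surjective.range_eq, image_univ, Subtype.range_coe]
    exact hsrc

lemma sphere_locConn : LocallyConnectedSpace ↥Sphere2 := by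
  rw [locallyConnectedSpace_iff_connected_subsets]
  intro x U hU
  have hx1 : ‖(x : EuclideanSpace ℝ (Fin 3))‖ = 1 := by
    have := x.2
    rwa [mem_sphere_zero_iff_norm] at this
  have hvmem : -(x : EuclideanSpace ℝ (Fin 3)) ∈ Sphere2 := by
    rw [mem_sphere_zero_iff_norm, norm_neg]
    exact hx1
  set v : ↥Sphere2 := ⟨-(x : EuclideanSpace ℝ (Fin 3)), hvmem⟩ with hvdef
  have hvx : x ≠ v := by
    intro h
    have h' : (x : EuclideanSpace ℝ (Fin 3)) = -(x : EuclideanSpace ℝ (Fin 3)) :=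
      congrArg Subtype.val h
    have hx0 : (x : EuclideanSpace ℝ (Fin 3)) = 0 := by
      have h2 : (2 : ℝ) • (x : EuclideanSpace ℝ (Fin 3)) = 0 := by
        rw [two_smul]
        nth_rewrite 2 [h']
        simp
      simpa using h2
    rw [hx0] at hx1
    simp at hx1
  obtain ⟨F, hF, hrange⟩ := stereo_embedding v
  have hopen : IsOpen (range F) := by
    rw [hrange]
    exact isOpen_compl_singleton
  have hOE : IsOpenEmbedding F := ⟨hF, hopen⟩
  have hxr : x ∈ range F := by
    rw [hrange]
    exact hvx
  obtain ⟨y, rfl⟩ := hxr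
  have hmap : Filter.map F (𝓝 y) = 𝓝 (F y) := hOE.map_nhds_eq y
  have hU' : F ⁻¹' U ∈ 𝓝 y := by
    rw [← hmap] at hU
    exact hU
  obtain ⟨V', hV'n, hV'c, hV'sub⟩ :=
    locallyConnectedSpace_iff_connected_subsets.mp inferInstance y (F ⁻¹' U) hU'
  refine ⟨F '' V', ?_, hV'c.image F hF.continuous.continuousOn, ?_⟩
  · rw [← hmap, Filter.mem_map]
    exact Filter.mem_of_superset hV'n (subset_preimage_image F V')
  · exact (image_mono (f := F) hV'sub).trans (image_preimage_subset F U)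

end

/-- If `M` is a continuum in `S²` such that for every closed annulus `A`
(embedded copy of `S¹ × [0,1]`) only finitely many components of `A ∩ M`
meet both boundary circles of `A`, then `M` is locally connected. -/
theorem stmt_10 (M : Set ↥Sphere2) (hMc : IsCompact M) (hMconn : IsConnected M)
    (h : ∀ e : ↥Circle1 × ↥(Set.Icc (0 : ℝ) 1) → ↥Sphere2,
      Continuous e → Injective e →
      {C : Set ↥Sphere2 |
        (∃ x ∈ range e ∩ M, C = connectedComponentIn (range e ∩ M) x) ∧
        (C ∩ e '' {p | (p.2 : ℝ) = 0}).Nonempty ∧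
        (C ∩ e '' {p | (p.2 : ℝ) = 1}).Nonempty}.Finite) :
    LocallyConnectedSpace ↥M := by
  by_cases hMuniv : M = univ
  · subst hMuniv
    haveI := sphere_locConn
    exact (Homeomorph.Set.univ ↥Sphere2).locallyConnectedSpace
  · obtain ⟨v, hvM⟩ := (Set.ne_univ_iff_exists_notMem M).mp hMuniv
    obtain ⟨F, hF, hrange⟩ := stereo_embedding v
    have hMrange : M ⊆ range F := by
      rw [hrange]
      intro z hz hz'
      rw [mem_singleton_iff] at hz'
      exact hvM (hz' ▸ hz)
    set M' : Set (EuclideanSpace ℝ (Fin 2)) := F ⁻¹' M with hM'def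
    have hFM : F '' M' = M := image_preimage_eq_of_subset hMrange
    have hM'c : IsCompact M' := by
      rw [hF.isCompact_iff, hFM]
      exact hMc
    have hM'conn : IsPreconnected M' := by
      rw [← hF.isInducing.isPreconnected_image, hFM]
      exact hMconn.isPreconnected
    have hfin : ∀ (c : EuclideanSpace ℝ (Fin 2)) (r R : ℝ), 0 < r → r < R →
        {C : Set (EuclideanSpace ℝ (Fin 2)) |
          (∃ x ∈ (fun z => dist z c) ⁻¹' Icc r R ∩ M',
            C = connectedComponentIn ((fun z => dist z c) ⁻¹' Icc r R ∩ M') x) ∧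
          (C ∩ Metric.sphere c r).Nonempty ∧ (C ∩ Metric.sphere c R).Nonempty}.Finite := by
      intro c r R hr hrR
      obtain ⟨A, hAc, hAi, hAr, hA0, hA1⟩ := annulus_param c hr hrR
      set e : ↥Circle1 × ↥(Icc (0:ℝ) 1) → ↥Sphere2 := F ∘ A with hedef
      have hSfin := h e (hF.continuous.comp hAc) (hF.injective.comp hAi)
      have hre : range e ∩ M = F '' ((fun z => dist z c) ⁻¹' Icc r R ∩ M') := by
        rw [hedef, range_comp, hAr, ← hFM, ← image_inter hF.injective]
      apply Set.Finite.of_finite_image (f := Set.image F) _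
        ((Set.image_injective.mpr hF.injective).injOn)
      apply hSfin.subset
      rintro C' ⟨C, ⟨⟨x, hx, rfl⟩, h0, h1⟩, rfl⟩
      refine ⟨⟨F x, ?_, ?_⟩, ?_, ?_⟩
      · rw [hre]
        exact mem_image_of_mem F hx
      · rw [hre]
        exact (embedding_image_connectedComponentIn hF hx).symm ▸
          (embedding_image_connectedComponentIn hF hx)
      · have he0 : e '' {p | (p.2 : ℝ) = 0} = F '' Metric.sphere c r := by
          rw [hedef, image_comp, hA0]
        rw [he0, ← image_inter hF.injective]
        exact h0.image F
      · have he1 : e '' {p | (p.2 : ℝ) = 1} = F '' Metric.sphere c R := by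
          rw [hedef, image_comp, hA1]
        rw [he1, ← image_inter hF.injective]
        exact h1.image F
    haveI hLCM' : LocallyConnectedSpace ↥M' := main_metric hM'c hM'conn hfin
    -- transfer along the homeomorphism induced by F
    haveI : CompactSpace ↥M' := isCompact_iff_compactSpace.mp hM'c
    set g : ↥M' → ↥M := fun z => ⟨F z.1, z.2⟩ with hgdef
    have hgcont : Continuous g :=
      Continuous.subtype_mk (hF.continuous.comp continuous_subtype_val) _
    have hgbij : Bijective g := by
      constructor
      · rintro ⟨z, hz⟩ ⟨w, hw⟩ hzw
        have : F z = F w := congrArg Subtype.val hzw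
        exact Subtype.ext (hF.injective this)
      · rintro ⟨y, hy⟩
        rw [← hFM] at hy
        obtain ⟨w, hw, hwy⟩ := hy
        exact ⟨⟨w, hw⟩, Subtype.ext hwy⟩
    have homeo : ↥M' ≃ₜ ↥M :=
      Continuous.homeoOfEquivCompactToT2 (f := Equiv.ofBijective g hgbij) hgcont
    exact homeo.symm.locallyConnectedSpace
end

section
/- A subset B of the 2-sphere S² is the set of limit points of some discrete-in-its-complement countable set D (i.e., B = B(X) for some codiscrete X = S² \ D) if and only if B is closed and has topological dimension at most 1. -/
/-!
A discrete set `D` contains none of its accumulation points, so an interior point of `derivedSet D`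
would have points of `D` near it that are accumulation points of `D`; hence `derivedSet D` is a
closed set with empty interior. Conversely, a nonempty closed separable set `B` is the set of
cluster points of a sequence `b` which visits each point of a countable dense subset of `B`
infinitely often. As `Bᶜ` is dense, `b` can be shadowed by a sequence `d` in `Bᶜ` with
`dist (d k) (b k) → 0`; then `d` has the same cluster points, none of which lies on `d`, so
`range d` is discrete with derived set `B`.
-/

open Set Function Topology Filter

open TopologicalSpace Uniformity

section DerivedSet

variable {X : Type*} [TopologicalSpace X]

theorem setOf_clusterPt_diff_eq_derivedSet (D : Set X) :
    {x : X | ClusterPt x (𝓟 (D \ {x}))} = derivedSet D :=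
  ext fun _ => accPt_principal_iff_clusterPt.symm

theorem derivedSet_empty : derivedSet (∅ : Set X) = ∅ :=
  eq_empty_of_forall_notMem fun _ h => NeBot.ne h (by simp)

theorem discreteTopology_iff_disjoint_derivedSet {D : Set X} :
    DiscreteTopology D ↔ Disjoint D (derivedSet D) := by
  simp only [discreteTopology_subtype_iff, disjoint_left, mem_derivedSet, AccPt, not_neBot]

theorem interior_derivedSet_eq_empty {D : Set X} [hD : DiscreteTopology D] :
    interior (derivedSet D) = ∅ := by
  refine eq_empty_of_forall_notMem fun x hx => ?_
  obtain ⟨y, ⟨hyI, hyD⟩, -⟩ :=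
    accPt_iff_nhds.1 (mem_derivedSet.1 (interior_subset hx)) _ (isOpen_interior.mem_nhds hx)
  exact disjoint_left.1 (discreteTopology_iff_disjoint_derivedSet.1 hD) hyD (interior_subset hyI)

theorem setOf_mapClusterPt_subset_range_union_derivedSet (u : ℕ → X) :
    {x | MapClusterPt x atTop u} ⊆ range u ∪ derivedSet (range u) := fun x hx => by
  rw [← closure_eq_self_union_derivedSet]
  exact mem_closure_iff_clusterPt.2 (ClusterPt.mono hx (le_principal_iff.2 range_mem_map))

theorem derivedSet_range_subset_setOf_mapClusterPt [T1Space X] (u : ℕ → X) :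
    derivedSet (range u) ⊆ {x | MapClusterPt x atTop u} := fun x hx => by
  refine mapClusterPt_atTop_iff_forall_mem_closure.2 fun N => derivedSet_subset_closure _ ?_
  -- An initial segment of the sequence is finite, so it contributes no accumulation points.
  have hsplit : range u = u '' Iio N ∪ u '' Ici N := by
    rw [← image_union, Iio_union_Ici, image_univ]
  rw [hsplit, derivedSet_union] at hx
  refine hx.resolve_left fun hx' => ?_
  exact Set.Infinite.of_accPt hx' ((finite_Iio N).image u)

theorem derivedSet_range_eq_setOf_mapClusterPt [T1Space X] {u : ℕ → X}
    (hu : ∀ k, ¬MapClusterPt (u k) atTop u) :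
    derivedSet (range u) = {x | MapClusterPt x atTop u} := by
  refine (derivedSet_range_subset_setOf_mapClusterPt u).antisymm fun x hx => ?_
  refine (setOf_mapClusterPt_subset_range_union_derivedSet u hx).resolve_left ?_
  rintro ⟨k, rfl⟩
  exact hu k hx

theorem discreteTopology_range_of_forall_not_mapClusterPt [T1Space X] {u : ℕ → X}
    (hu : ∀ k, ¬MapClusterPt (u k) atTop u) : DiscreteTopology (range u) := by
  rw [discreteTopology_iff_disjoint_derivedSet, derivedSet_range_eq_setOf_mapClusterPt hu]
  exact disjoint_left.2 (forall_mem_range.2 hu)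

end DerivedSet

section ClusterPoints

variable {X : Type*}

theorem MapClusterPt.congr_uniformity [UniformSpace X] [FirstCountableTopology X] {u v : ℕ → X}
    {x : X} (hx : MapClusterPt x atTop u) (huv : Tendsto (fun k => (u k, v k)) atTop (𝓤 X)) :
    MapClusterPt x atTop v := by
  obtain ⟨ψ, hψ, hlim⟩ := hx.tendsto_subseq
  exact .of_comp hψ.tendsto_atTop
    (hlim.congr_uniformity (huv.comp hψ.tendsto_atTop)).mapClusterPt

theorem setOf_mapClusterPt_unpair_eq [TopologicalSpace X] {B : Set X} (hB : IsClosed B)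
    {s : ℕ → X} (hsB : range s ⊆ B) (hBs : B ⊆ closure (range s)) :
    {x | MapClusterPt x atTop (fun k : ℕ => s k.unpair.1)} = B := by
  refine Subset.antisymm (fun x hx => hB.mem_of_mapClusterPt hx (.of_forall fun k => ?_)) ?_
  · exact hsB (mem_range_self _)
  -- `s m` is the value at every index `Nat.pair m n`.
  have hs : ∀ m, MapClusterPt (s m) atTop (fun k : ℕ => s k.unpair.1) := fun m =>
    .of_comp (StrictMono.tendsto_atTop fun _ _ => Nat.pair_lt_pair_right m)
      (by simpa [comp_def] using tendsto_const_nhds.mapClusterPt)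
  exact hBs.trans (closure_minimal (forall_mem_range.2 hs) isClosed_setOfPred_clusterPt)

theorem IsClosed.exists_seq_setOf_mapClusterPt_eq [TopologicalSpace X]
    [PseudoMetrizableSpace X] {B : Set X} (hB : IsClosed B) (hBne : B.Nonempty)
    (hBsep : IsSeparable B) : ∃ b : ℕ → X, {x | MapClusterPt x atTop b} = B := by
  obtain ⟨t, htB, htc, hBt⟩ := hBsep.exists_countable_dense_subset
  obtain ⟨s, rfl⟩ := htc.exists_eq_range (hBne.mono hBt).of_closure
  exact ⟨_, setOf_mapClusterPt_unpair_eq hB htB hBt⟩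

theorem exists_seq_notMem_tendsto_uniformity [PseudoMetricSpace X] {B : Set X}
    (hB : interior B = ∅) (b : ℕ → X) :
    ∃ d : ℕ → X, (∀ k, d k ∉ B) ∧ Tendsto (fun k => (d k, b k)) atTop (𝓤 X) := by
  have hdense := interior_eq_empty_iff_dense_compl.1 hB
  have hex (k : ℕ) : ∃ y ∈ Bᶜ, dist y (b k) < 1 / (k + 1) := by
    obtain ⟨y, hy, hyb⟩ := Metric.mem_closure_iff.1 (hdense (b k)) _ Nat.one_div_pos_of_nat
    exact ⟨y, hy, by rwa [dist_comm]⟩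
  choose d hdB hdb using hex
  refine ⟨d, hdB, tendsto_uniformity_iff_dist_tendsto_zero.2 ?_⟩
  exact squeeze_zero (fun _ => dist_nonneg) (fun k => (hdb k).le)
    tendsto_one_div_add_atTop_nhds_zero_nat

end ClusterPoints

theorem exists_countable_discreteTopology_derivedSet_eq {X : Type*} [MetricSpace X]
    [SeparableSpace X] {B : Set X} (hBc : IsClosed B) (hBi : interior B = ∅) :
    ∃ D : Set X, D.Countable ∧ DiscreteTopology D ∧ derivedSet D = B := by
  rcases B.eq_empty_or_nonempty with rfl | hBne
  · exact ⟨∅, countable_empty, inferInstance, derivedSet_empty⟩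
  obtain ⟨b, hb⟩ := hBc.exists_seq_setOf_mapClusterPt_eq hBne (.of_separableSpace B)
  obtain ⟨d, hdB, hdb⟩ := exists_seq_notMem_tendsto_uniformity hBi b
  have hd : {x | MapClusterPt x atTop d} = B := hb ▸ ext fun x =>
    ⟨fun h => h.congr_uniformity hdb, fun h => h.congr_uniformity hdb.uniformity_symm⟩
  have hnot : ∀ k, ¬MapClusterPt (d k) atTop d := fun k h => hdB k (hd.subset h)
  exact ⟨range d, countable_range d, discreteTopology_range_of_forall_not_mapClusterPt hnot,
    (derivedSet_range_eq_setOf_mapClusterPt hnot).trans hd⟩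

/-- A subset `B` of `S²` is the set of limit points of some countable set `D`
that is discrete as a subspace (the bad set of the codiscrete set `S² \ D`)
if and only if `B` is closed and has dimension at most 1, i.e. (being closed)
has empty interior in `S²`. -/
theorem stmt_11 (B : Set ↥Sphere2) :
    (∃ D : Set ↥Sphere2, D.Countable ∧ DiscreteTopology ↥D ∧
      B = {x : ↥Sphere2 | ClusterPt x (𝓟 (D \ {x}))}) ↔
    (IsClosed B ∧ interior B = ∅) := by
  simp only [setOf_clusterPt_diff_eq_derivedSet]
  constructor
  · rintro ⟨D, -, hD, rfl⟩
    exact ⟨isClosed_derivedSet D, interior_derivedSet_eq_empty⟩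
  · rintro ⟨hBc, hBi⟩
    obtain ⟨D, hDc, hD, rfl⟩ := exists_countable_discreteTopology_derivedSet_eq hBc hBi
    exact ⟨D, hDc, hD, rfl⟩
end

section
/- Let h be a closed subset of the unit circle S¹ with at least three points, and let g = conv(h) be its convex hull in the closed unit disk B². Then g admits an ideal triangulation: a collection {T_i} of triangles with vertices in h, with pairwise disjoint interiors, whose union intersected with the open disk int(B²) is exactly g ∩ int(B²). -/
open Set Function Topology

/-- The plane. -/
abbrev Plane := EuclideanSpace ℝ (Fin 2)

noncomputable section

open Complex

namespace IdealTri

lemma normSq_one_of_norm_one {a : ℂ} (ha : ‖a‖ = 1) : Complex.normSq a = 1 := by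
  rw [Complex.normSq_eq_norm_sq, ha]; norm_num

/-- norm squared identity for points on the chord -/
lemma normSq_chord (a b : ℂ) (ha : ‖a‖ = 1) (hb : ‖b‖ = 1) (t : ℝ) :
    Complex.normSq (a + t • (b - a)) = 1 + t * (t - 1) * Complex.normSq (b - a) := by
  have ha' := normSq_one_of_norm_one ha
  have hb' := normSq_one_of_norm_one hb
  simp only [Complex.normSq_apply, Complex.add_re, Complex.add_im, Complex.real_smul,
    Complex.mul_re, Complex.mul_im, Complex.ofReal_re, Complex.ofReal_im,
    Complex.sub_re, Complex.sub_im] at *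
  linear_combination (1 - t) * ha' + t * hb'

/-- a point on the line through two unit vectors with norm ≤ 1 is on the chord -/
lemma mem_segment_of_line (a b z : ℂ) (ha : ‖a‖ = 1) (hb : ‖b‖ = 1) (hab : a ≠ b)
    (hz : ‖z‖ ≤ 1) (him : ((z - a) * (starRingEnd ℂ) (b - a)).im = 0) :
    z ∈ segment ℝ a b := by
  have hv : b - a ≠ 0 := sub_ne_zero.2 (Ne.symm hab)
  set k : ℝ := ((z - a) * (starRingEnd ℂ) (b - a)).re with hk
  have hzv : (z - a) * (starRingEnd ℂ) (b - a) = (k : ℝ) := by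
    apply Complex.ext
    · simp only [Complex.ofReal_re, hk]
    · simpa only [Complex.ofReal_im] using him
  have hnv : Complex.normSq (b - a) ≠ 0 := by simpa using hv
  set t : ℝ := k / Complex.normSq (b - a) with ht
  have hz' : z = a + t • (b - a) := by
    have h1 : (z - a) * ((starRingEnd ℂ) (b - a) * (b - a)) = (k : ℂ) * (b - a) := by
      rw [← mul_assoc, hzv]
    rw [show (starRingEnd ℂ) (b - a) * (b - a) = ((Complex.normSq (b - a) : ℝ) : ℂ) by
      rw [mul_comm, Complex.mul_conj]] at h1
    have h2 : z - a = (t : ℂ) * (b - a) := by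
      rw [ht]
      push_cast
      rw [div_mul_eq_mul_div, eq_div_iff (by exact_mod_cast hnv)]
      linear_combination h1
    rw [Complex.real_smul, ← h2]; ring
  have hq : Complex.normSq z = 1 + t * (t - 1) * Complex.normSq (b - a) := by
    rw [hz']; exact normSq_chord a b ha hb t
  have hzn : Complex.normSq z ≤ 1 := by
    rw [Complex.normSq_eq_norm_sq]
    nlinarith [norm_nonneg z, hz]
  have hpos : 0 < Complex.normSq (b - a) :=
    lt_of_le_of_ne (Complex.normSq_nonneg _) (Ne.symm hnv)
  have key : t * (t - 1) ≤ 0 := by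
    by_contra hcon
    push_neg at hcon
    nlinarith [mul_pos hcon hpos]
  have ht01 : 0 ≤ t ∧ t ≤ 1 := by
    constructor <;> nlinarith [sq_nonneg t, sq_nonneg (t - 1), key]
  rw [segment_eq_image']
  exact ⟨t, ⟨ht01.1, ht01.2⟩, hz'.symm⟩

lemma sin_identity (U V : ℝ) :
    Real.sin U + Real.sin V - Real.sin (U + V) =
    4 * Real.sin (U/2) * Real.sin (V/2) * Real.sin ((U+V)/2) := by
  have e1 := Real.sin_two_mul (U/2)
  have e2 := Real.sin_two_mul (V/2)
  have e3 := Real.sin_two_mul ((U+V)/2)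
  rw [show 2*(U/2) = U by ring] at e1
  rw [show 2*(V/2) = V by ring] at e2
  rw [show 2*((U+V)/2) = U + V by ring] at e3
  have e4 : (U+V)/2 = U/2 + V/2 := by ring
  rw [e1, e2, e3, e4, Real.sin_add, Real.cos_add]
  have p1 := Real.sin_sq_add_cos_sq (U/2)
  have p2 := Real.sin_sq_add_cos_sq (V/2)
  linear_combination (-(2*Real.sin (U/2)*Real.cos (U/2))) * p2 +
    (-(2*Real.sin (V/2)*Real.cos (V/2))) * p1

/-- angle of `s` relative to `x`, in `(0, 2π)` for `s ≠ x` on the unit circle -/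
def targ (x s : ℂ) : ℝ :=
  if Complex.arg (s * (starRingEnd ℂ) x) ≤ 0 then Complex.arg (s * (starRingEnd ℂ) x) + 2*Real.pi
  else Complex.arg (s * (starRingEnd ℂ) x)

lemma targ_spec {x s : ℂ} (hx : ‖x‖ = 1) (hs : ‖s‖ = 1) (hsx : s ≠ x) :
    0 < targ x s ∧ targ x s < 2*Real.pi ∧ s = x * Complex.exp (targ x s * I) := by
  set z := s * (starRingEnd ℂ) x with hz
  have hxz : x * z = s := by
    rw [hz, mul_comm s _, ← mul_assoc, Complex.mul_conj, normSq_one_of_norm_one hx]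
    simp
  have hz1 : z ≠ 1 := by
    intro h
    rw [h, mul_one] at hxz
    exact hsx hxz.symm
  have habs : ‖z‖ = 1 := by
    rw [hz, norm_mul, Complex.norm_conj, hx, hs]
    norm_num
  have hexp : Complex.exp (Complex.arg z * I) = z := by
    have := Complex.norm_mul_exp_arg_mul_I z
    rwa [habs, Complex.ofReal_one, one_mul] at this
  have harg0 : Complex.arg z ≠ 0 := by
    intro h
    apply hz1
    rw [← hexp, h]
    simp
  have hlo := Complex.neg_pi_lt_arg z
  have hhi := Complex.arg_le_pi z
  have hpi := Real.pi_pos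
  unfold targ
  rw [← hz]
  split_ifs with hcase
  · have harg' : Complex.arg z < 0 := lt_of_le_of_ne hcase harg0
    refine ⟨by linarith, by linarith, ?_⟩
    have : ((Complex.arg z + 2*Real.pi : ℝ) : ℂ) * I = Complex.arg z * I + 2*Real.pi*I := by
      push_cast; ring
    rw [this, Complex.exp_add, Complex.exp_two_pi_mul_I, mul_one, hexp, hxz]
  · push_neg at hcase
    exact ⟨hcase, by linarith, by rw [hexp, hxz]⟩

lemma fval (x : ℂ) (hx : ‖x‖ = 1) (α β γ : ℝ) :
    ((x * Complex.exp (γ*I) - x * Complex.exp (α*I)) *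
      (starRingEnd ℂ) (x * Complex.exp (β*I) - x * Complex.exp (α*I))).im
      = Real.sin (γ-β) + Real.sin (β-α) - Real.sin (γ-α) := by
  have h1 : (x * Complex.exp (γ*I) - x * Complex.exp (α*I)) *
      (starRingEnd ℂ) (x * Complex.exp (β*I) - x * Complex.exp (α*I))
      = (x * (starRingEnd ℂ) x) *
        ((Complex.exp (γ*I) - Complex.exp (α*I)) *
          (starRingEnd ℂ) (Complex.exp (β*I) - Complex.exp (α*I))) := by
    simp only [map_sub, map_mul]
    ring
  rw [h1, Complex.mul_conj, normSq_one_of_norm_one hx, Complex.ofReal_one, one_mul]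
  rw [Complex.mul_im, Complex.conj_re, Complex.conj_im, Complex.sub_re, Complex.sub_im,
    Complex.sub_re, Complex.sub_im, Complex.exp_ofReal_mul_I_re, Complex.exp_ofReal_mul_I_im,
    Complex.exp_ofReal_mul_I_re, Complex.exp_ofReal_mul_I_im,
    Complex.exp_ofReal_mul_I_re, Complex.exp_ofReal_mul_I_im]
  rw [Real.sin_sub, Real.sin_sub, Real.sin_sub]
  ring

lemma gval_neg {α β γ : ℝ} (h0 : 0 < α) (h1 : α < γ) (h2 : γ < β) (h3 : β < 2*Real.pi) :
    Real.sin (γ-β) + Real.sin (β-α) - Real.sin (γ-α) < 0 := by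
  have hpi := Real.pi_pos
  have key := sin_identity (γ-β) (β-α)
  rw [show γ-β+(β-α) = γ-α by ring] at key
  rw [key]
  have s1 : Real.sin ((γ-β)/2) < 0 :=
    Real.sin_neg_of_neg_of_neg_pi_lt (by linarith) (by linarith)
  have s2 : 0 < Real.sin ((β-α)/2) :=
    Real.sin_pos_of_pos_of_lt_pi (by linarith) (by linarith)
  have s3 : 0 < Real.sin ((γ-α)/2) :=
    Real.sin_pos_of_pos_of_lt_pi (by linarith) (by linarith)
  nlinarith [mul_pos s2 s3]

lemma gval_pos {α β : ℝ} (h0 : 0 < α) (h1 : α < β) (h3 : β < 2*Real.pi) :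
    0 < Real.sin (0-β) + Real.sin (β-α) - Real.sin (0-α) := by
  have hpi := Real.pi_pos
  have key := sin_identity (0-β) (β-α)
  rw [show 0-β+(β-α) = 0-α by ring] at key
  rw [key]
  have s1 : Real.sin ((0-β)/2) < 0 :=
    Real.sin_neg_of_neg_of_neg_pi_lt (by linarith) (by linarith)
  have s3 : Real.sin ((0-α)/2) < 0 :=
    Real.sin_neg_of_neg_of_neg_pi_lt (by linarith) (by linarith)
  have s2 : 0 < Real.sin ((β-α)/2) :=
    Real.sin_pos_of_pos_of_lt_pi (by linarith) (by linarith)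
  nlinarith [mul_pos_of_neg_of_neg s1 s3]

theorem ear {S : Set ℂ} (hSf : S.Finite) (hSs : ∀ s ∈ S, ‖s‖ = 1) {x : ℂ} (hx : ‖x‖ = 1)
    (hxS : x ∉ S) (hS2 : ∃ p ∈ S, ∃ q ∈ S, p ≠ q) :
    ∃ a ∈ S, ∃ b ∈ S, a ≠ b ∧
      convexHull ℝ (insert x S) = convexHull ℝ S ∪ convexHull ℝ {a, x, b} ∧
      interior (convexHull ℝ S) ∩ interior (convexHull ℝ {a, x, b}) = ∅ := by
  obtain ⟨p, hp, q, hq, hpq⟩ := hS2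
  have hSne : S.Nonempty := ⟨p, hp⟩
  have hspec : ∀ s ∈ S, 0 < targ x s ∧ targ x s < 2*Real.pi ∧
      s = x * Complex.exp (targ x s * I) :=
    fun s hs => targ_spec hx (hSs s hs) (fun h => hxS (h ▸ hs))
  have hinj : ∀ s ∈ S, ∀ s' ∈ S, targ x s = targ x s' → s = s' := by
    intro s hs s' hs' hss
    rw [(hspec s hs).2.2, (hspec s' hs').2.2, hss]
  obtain ⟨a, ha, hamin⟩ := Set.exists_min_image S (targ x) hSf hSne
  obtain ⟨b, hb, hbmax⟩ := Set.exists_max_image S (targ x) hSf hSne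
  have ha1 : ‖a‖ = 1 := hSs a ha
  have hb1 : ‖b‖ = 1 := hSs b hb
  set α := targ x a with hαdef
  set β := targ x b with hβdef
  have hαβ : α < β := by
    rcases lt_or_eq_of_le (le_trans (hamin p hp) (hbmax p hp)) with hlt | heq
    · exact hlt
    · exfalso
      apply hpq
      apply hinj p hp q hq
      have e1 := hamin p hp; have e2 := hbmax p hp
      have e3 := hamin q hq; have e4 := hbmax q hq
      rw [← hαdef, ← hβdef] at *
      linarith
  have hab : a ≠ b := by
    intro hh
    rw [hαdef, hβdef, hh] at hαβ
    exact lt_irrefl _ hαβ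
  have eq_a : a = x * Complex.exp (α * I) := (hspec a ha).2.2
  have eq_b : b = x * Complex.exp (β * I) := (hspec b hb).2.2
  set f : ℂ → ℝ := fun z => ((z - a) * (starRingEnd ℂ) (b - a)).im with hf
  -- values of f
  have hα0 : 0 < α := (hspec a ha).1
  have hβ2π : β < 2*Real.pi := (hspec b hb).2.1
  have hfval : ∀ s ∈ S, f s = Real.sin (targ x s - β) + Real.sin (β - α)
      - Real.sin (targ x s - α) := by
    intro s hs
    have hseq := (hspec s hs).2.2
    rw [hf]
    dsimp only
    conv_lhs => rw [hseq, eq_a, eq_b]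
    exact fval x hx α β (targ x s)
  have hfx : f x = Real.sin (0 - β) + Real.sin (β - α) - Real.sin (0 - α) := by
    have hh := fval x hx α β 0
    simp only [Complex.ofReal_zero, zero_mul, Complex.exp_zero, mul_one] at hh
    rw [hf]; dsimp only
    conv_lhs => rw [eq_a, eq_b]
    exact hh
  have hfa : f a = 0 := by simp [hf]
  have hfb : f b = 0 := by
    rw [hf]; dsimp only
    rw [Complex.mul_conj]
    simp
  have hfxpos : 0 < f x := by
    rw [hfx]; exact gval_pos hα0 hαβ hβ2π
  have hfneg : ∀ s ∈ S, s ≠ a → s ≠ b → f s < 0 := by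
    intro s hs hsa hsb
    rw [hfval s hs]
    have h1 : α < targ x s :=
      lt_of_le_of_ne (hamin s hs) (fun hh => hsa (hinj s hs a ha hh.symm))
    have h2 : targ x s < β :=
      lt_of_le_of_ne (hbmax s hs) (fun hh => hsb (hinj s hs b hb hh))
    exact gval_neg hα0 h1 h2 hβ2π
  -- affine structure of f
  have hftrans : ∀ (z v : ℂ) (c : ℝ), f (z + c • v) = f z + c * ((v * (starRingEnd ℂ) (b - a)).im) := by
    intro z v c
    rw [hf]; dsimp only
    have hh : (z + c • v - a) * (starRingEnd ℂ) (b - a)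
        = (z - a) * (starRingEnd ℂ) (b - a) + (c:ℂ) * (v * (starRingEnd ℂ) (b - a)) := by
      rw [Complex.real_smul]; ring
    rw [hh, Complex.add_im, Complex.im_ofReal_mul]
  have hfaff : ∀ (u v : ℂ) (r s : ℝ), r + s = 1 → f (r • u + s • v) = r * f u + s * f v := by
    intro u v r s hrs
    rw [hf]; dsimp only
    have hc : (r:ℂ) + (s:ℂ) = 1 := by exact_mod_cast hrs
    have hh : (r • u + s • v - a) * (starRingEnd ℂ) (b - a)
        = (r:ℂ) * ((u - a) * (starRingEnd ℂ) (b - a)) + (s:ℂ) * ((v - a) * (starRingEnd ℂ) (b - a)) := by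
      rw [Complex.real_smul, Complex.real_smul]
      linear_combination (a * (starRingEnd ℂ) (b - a)) * hc
    rw [hh, Complex.add_im, Complex.im_ofReal_mul, Complex.im_ofReal_mul]
  -- halfspaces
  have hHmconv : Convex ℝ {z : ℂ | f z ≤ 0} := by
    intro u hu v hv r s hr hs hrs
    simp only [Set.mem_setOf_eq] at *
    rw [hfaff u v r s hrs]
    nlinarith [mul_nonneg hr (neg_nonneg.2 hu), mul_nonneg hs (neg_nonneg.2 hv)]
  have hHpconv : Convex ℝ {z : ℂ | 0 ≤ f z} := by
    intro u hu v hv r s hr hs hrs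
    simp only [Set.mem_setOf_eq] at *
    rw [hfaff u v r s hrs]
    nlinarith [mul_nonneg hr hu, mul_nonneg hs hv]
  have hSHm : convexHull ℝ S ⊆ {z : ℂ | f z ≤ 0} := by
    apply convexHull_min ?_ hHmconv
    intro s hs
    simp only [Set.mem_setOf_eq]
    by_cases hsa : s = a
    · rw [hsa, hfa]
    by_cases hsb : s = b
    · rw [hsb, hfb]
    exact le_of_lt (hfneg s hs hsa hsb)
  have hTHp : convexHull ℝ {a, x, b} ⊆ {z : ℂ | 0 ≤ f z} := by
    apply convexHull_min ?_ hHpconv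
    rintro z (rfl | rfl | rfl)
    · simp only [Set.mem_setOf_eq, hfa, le_refl]
    · exact le_of_lt hfxpos
    · simp only [Set.mem_setOf_eq, hfb, le_refl]
  -- ball bounds
  have hSball : convexHull ℝ S ⊆ Metric.closedBall (0:ℂ) 1 := by
    apply convexHull_min ?_ (convex_closedBall 0 1)
    intro s hs
    rw [Metric.mem_closedBall, dist_zero_right, hSs s hs]
  have hxball : ∀ z ∈ ({a, x, b} : Set ℂ), z ∈ Metric.closedBall (0:ℂ) 1 := by
    rintro z (rfl | rfl | rfl) <;>
      rw [Metric.mem_closedBall, dist_zero_right] <;>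
      first
        | rw [ha1]
        | rw [hx]
        | rw [hb1]
  have hTball : convexHull ℝ {a, x, b} ⊆ Metric.closedBall (0:ℂ) 1 :=
    convexHull_min hxball (convex_closedBall 0 1)
  -- chord
  have hchord : ∀ z : ℂ, ‖z‖ ≤ 1 → f z = 0 → z ∈ segment ℝ a b := by
    intro z h1 h2
    rw [hf] at h2
    exact mem_segment_of_line a b z ha1 hb1 hab h1 h2
  have hsegS : segment ℝ a b ⊆ convexHull ℝ S :=
    (convex_convexHull ℝ S).segment_subset (subset_convexHull ℝ S ha) (subset_convexHull ℝ S hb)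
  have hsegT : segment ℝ a b ⊆ convexHull ℝ {a, x, b} :=
    (convex_convexHull ℝ _).segment_subset
      (subset_convexHull ℝ _ (by simp)) (subset_convexHull ℝ _ (by simp))
  -- key: mixed segments
  have key : ∀ u ∈ convexHull ℝ S, ∀ v ∈ convexHull ℝ {a, x, b},
      segment ℝ u v ⊆ convexHull ℝ S ∪ convexHull ℝ {a, x, b} := by
    intro u hu v hv
    have hu0 : f u ≤ 0 := hSHm hu
    have hv0 : 0 ≤ f v := hTHp hv
    have hunorm : ‖u‖ ≤ 1 := by
      have := hSball hu; rwa [Metric.mem_closedBall, dist_zero_right] at this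
    have hvnorm : ‖v‖ ≤ 1 := by
      have := hTball hv; rwa [Metric.mem_closedBall, dist_zero_right] at this
    rcases eq_or_lt_of_le hu0 with hu0' | hu0'
    · have hu' : u ∈ convexHull ℝ {a, x, b} := hsegT (hchord u hunorm hu0')
      exact ((convex_convexHull ℝ _).segment_subset hu' hv).trans subset_union_right
    rcases eq_or_lt_of_le hv0 with hv0' | hv0'
    · have hv' : v ∈ convexHull ℝ S := hsegS (hchord v hvnorm hv0'.symm)
      exact ((convex_convexHull ℝ _).segment_subset hu hv').trans subset_union_left
    set d1 : ℝ := -f u with hd1def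
    set d2 : ℝ := f v with hd2def
    have hd1 : 0 < d1 := by rw [hd1def]; linarith
    have hd2 : 0 < d2 := hv0'
    have hdsum : 0 < d1 + d2 := by linarith
    set s' : ℝ := d2 / (d1 + d2) with hs'def
    have hs'0 : 0 < s' := div_pos hd2 hdsum
    have hs'1 : s' < 1 := by
      rw [hs'def, div_lt_one hdsum]; linarith
    set wpt : ℂ := s' • u + (1 - s') • v with hwdef
    have hne : d1 + d2 ≠ 0 := ne_of_gt hdsum
    have hfw : f wpt = 0 := by
      rw [hwdef, hfaff u v s' (1 - s') (by ring),
        show f u = -d1 from (neg_neg (f u)).symm, ← hd2def, hs'def]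
      field_simp
      ring
    have hwball : wpt ∈ Metric.closedBall (0:ℂ) 1 :=
      (convex_closedBall (0:ℂ) 1) (hSball hu) (hTball hv) (le_of_lt hs'0) (by linarith) (by ring)
    have hwnorm : ‖wpt‖ ≤ 1 := by
      have := hwball; rwa [Metric.mem_closedBall, dist_zero_right] at this
    have hwab : wpt ∈ segment ℝ a b := hchord wpt hwnorm hfw
    rintro y ⟨r1, r2, hr1, hr2, hr12, rfl⟩
    have h1s : (1:ℝ) - s' ≠ 0 := by linarith
    have hs'ne : s' ≠ 0 := ne_of_gt hs'0
    rcases le_or_gt s' r1 with hcase | hcase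
    · left
      have c1 : (r1 - s')/(1 - s') + (r2/(1 - s')) * s' = r1 := by
        rw [div_mul_eq_mul_div, ← add_div,
          show r1 - s' + r2*s' = r1*(1-s') from by linear_combination s' * hr12,
          mul_div_cancel_right₀ _ h1s]
      have c2 : (r2/(1 - s')) * (1 - s') = r2 := div_mul_cancel₀ _ h1s
      have hid : ((r1 - s')/(1 - s')) • u + (r2/(1 - s')) • wpt = r1 • u + r2 • v := by
        rw [hwdef, smul_add, smul_smul, smul_smul, ← add_assoc, ← add_smul, c1, c2]
      rw [← hid]
      apply (convex_convexHull ℝ S) hu (hsegS hwab)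
      · apply div_nonneg (by linarith) (by linarith)
      · apply div_nonneg (by linarith) (by linarith)
      · field_simp
        linear_combination hr12
    · right
      have c1' : (r1/s') * s' = r1 := div_mul_cancel₀ _ hs'ne
      have c2' : (r1/s') * (1 - s') + (1 - r1/s') = r2 := by
        have e : (r1/s') * (1 - s') = r1/s' - r1 := by rw [mul_sub, mul_one, c1']
        rw [e]; linarith [hr12]
      have hid : (r1/s') • wpt + (1 - r1/s') • v = r1 • u + r2 • v := by
        rw [hwdef, smul_add, smul_smul, smul_smul, c1', add_assoc, ← add_smul, c2']
      rw [← hid]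
      apply (convex_convexHull ℝ _) (hsegT hwab) hv
      · apply div_nonneg (by linarith) (by linarith)
      · have : r1/s' ≤ 1 := by
          rw [div_le_one hs'0]; linarith
        linarith
      · ring
  have hU : Convex ℝ (convexHull ℝ S ∪ convexHull ℝ {a, x, b}) := by
    rw [convex_iff_segment_subset]
    rintro u (hu | hu) v (hv | hv)
    · exact ((convex_convexHull ℝ _).segment_subset hu hv).trans subset_union_left
    · exact key u hu v hv
    · rw [segment_symm]; exact key v hv u hu
    · exact ((convex_convexHull ℝ _).segment_subset hu hv).trans subset_union_right
  refine ⟨a, ha, b, hb, hab, ?_, ?_⟩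
  · apply Subset.antisymm
    · apply convexHull_min ?_ hU
      rintro z (rfl | hz)
      · exact Or.inr (subset_convexHull ℝ _ (by simp))
      · exact Or.inl (subset_convexHull ℝ _ hz)
    · apply union_subset
      · exact convexHull_mono (subset_insert x S)
      · apply convexHull_mono
        rintro z (rfl | rfl | rfl)
        · exact Or.inr ha
        · exact Or.inl rfl
        · exact Or.inr hb
  · -- interiors disjoint
    have hLx : ((x - a) * (starRingEnd ℂ) (b - a)).im = f x := by rw [hf]
    have hxa : x ≠ a := fun hh => hxS (hh ▸ ha)
    have hxanorm : 0 < ‖x - a‖ := by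
      rw [norm_pos_iff]; exact sub_ne_zero.2 hxa
    have push : ∀ z : ℂ, ∀ ε : ℝ, 0 < ε →
        z + (ε / (2 * ‖x - a‖)) • (x - a) ∈ Metric.ball z ε ∧
        f (z + (ε / (2 * ‖x - a‖)) • (x - a)) = f z + (ε / (2 * ‖x - a‖)) * f x := by
      intro z ε hε
      constructor
      · rw [Metric.mem_ball, dist_eq_norm]
        have : z + (ε / (2 * ‖x - a‖)) • (x - a) - z = (ε / (2 * ‖x - a‖)) • (x - a) := by ring_nf
        rw [this, norm_smul, Real.norm_eq_abs, abs_of_pos (by positivity)]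
        have hxane : ‖x - a‖ ≠ 0 := ne_of_gt hxanorm
        have e2 : ε/(2*‖x - a‖) * ‖x - a‖ = ε/2 := by
          have hxane' : ‖x - a‖ ≠ 0 := by
            exact hxane
          field_simp
        rw [e2]
        linarith
      · rw [hftrans z (x - a) _, hLx]
    rw [Set.eq_empty_iff_forall_notMem]
    rintro z ⟨hz1, hz2⟩
    have hz1' : f z ≤ 0 := hSHm (interior_subset hz1)
    have hz2' : 0 ≤ f z := hTHp (interior_subset hz2)
    have hz0 : f z = 0 := le_antisymm hz1' hz2'
    obtain ⟨ε, hε, hball⟩ := Metric.isOpen_iff.1 isOpen_interior z hz1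
    obtain ⟨hmem, hval⟩ := push z ε hε
    have : f (z + (ε / (2 * ‖x - a‖)) • (x - a)) ≤ 0 :=
      hSHm (interior_subset (hball hmem))
    rw [hval, hz0, zero_add] at this
    nlinarith [mul_pos (show (0:ℝ) < ε / (2 * ‖x - a‖) by positivity) hfxpos]


def Good (S : Set ℂ) (x : ℂ) (ab : ℂ × ℂ) : Prop :=
  ab.1 ∈ S ∧ ab.2 ∈ S ∧ ab.1 ≠ ab.2 ∧
  convexHull ℝ (insert x S) = convexHull ℝ S ∪ convexHull ℝ {ab.1, x, ab.2} ∧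
  interior (convexHull ℝ S) ∩ interior (convexHull ℝ {ab.1, x, ab.2}) = ∅

lemma ear' {S : Set ℂ} (hSf : S.Finite) (hSs : ∀ s ∈ S, ‖s‖ = 1) {x : ℂ} (hx : ‖x‖ = 1)
    (hxS : x ∉ S) (hS2 : ∃ p ∈ S, ∃ q ∈ S, p ≠ q) : ∃ ab, Good S x ab := by
  obtain ⟨a, ha, b, hb, hab, h1, h2⟩ := ear hSf hSs hx hxS hS2
  exact ⟨(a, b), ha, hb, hab, h1, h2⟩

open Classical in
noncomputable def pick (S : Set ℂ) (x : ℂ) : ℂ × ℂ :=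
  if h : ∃ ab, Good S x ab then h.choose else (0, 0)

open Classical in
lemma pick_good {S : Set ℂ} {x : ℂ} (h : ∃ ab, Good S x ab) : Good S x (pick S x) := by
  rw [pick, dif_pos h]
  exact h.choose_spec

open Classical in
noncomputable def tri (u : ℕ → ℂ) : ℕ → Set (Set ℂ)
  | 0 => {convexHull ℝ {u 0, u 1, u 2}}
  | n+1 =>
      if u (n+3) ∈ u '' {k | k ≤ n+2} then tri u n
      else tri u n ∪ {convexHull ℝ {(pick (u '' {k | k ≤ n+2}) (u (n+3))).1, u (n+3),
        (pick (u '' {k | k ≤ n+2}) (u (n+3))).2}}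

lemma image_le_succ (u : ℕ → ℂ) (m : ℕ) :
    u '' {k | k ≤ m+1} = insert (u (m+1)) (u '' {k | k ≤ m}) := by
  ext z
  simp only [Set.mem_image, Set.mem_insert_iff, Set.mem_setOf_eq]
  constructor
  · rintro ⟨k, hk, rfl⟩
    rcases Nat.lt_or_ge k (m+1) with hlt | hge
    · exact Or.inr ⟨k, by omega, rfl⟩
    · have : k = m+1 := by omega
      exact Or.inl (by rw [this])
  · rintro (rfl | ⟨k, hk, rfl⟩)
    · exact ⟨m+1, le_refl _, rfl⟩
    · exact ⟨k, by omega, rfl⟩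

lemma tri_spec (u : ℕ → ℂ) (hu : ∀ n, ‖u n‖ = 1) (h01 : u 0 ≠ u 1) (h02 : u 0 ≠ u 2)
    (h12 : u 1 ≠ u 2) : ∀ n,
    (∀ t ∈ tri u n, ∃ a ∈ range u, ∃ b ∈ range u, ∃ c ∈ range u,
        a ≠ b ∧ a ≠ c ∧ b ≠ c ∧ t = convexHull ℝ {a, b, c}) ∧
    (tri u n).Pairwise (fun t₁ t₂ => interior t₁ ∩ interior t₂ = ∅) ∧
    ⋃₀ tri u n = convexHull ℝ (u '' {k | k ≤ n + 2}) := by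
  have hsymm : Symmetric (fun t₁ t₂ : Set ℂ => interior t₁ ∩ interior t₂ = ∅) := by
    intro s t hst
    rw [Set.inter_comm]
    exact hst
  intro n
  induction n with
  | zero =>
      refine ⟨?_, ?_, ?_⟩
      · rintro t rfl
        exact ⟨u 0, ⟨0, rfl⟩, u 1, ⟨1, rfl⟩, u 2, ⟨2, rfl⟩, h01, h02, h12, rfl⟩
      · exact Set.pairwise_singleton _ _
      · rw [show tri u 0 = {convexHull ℝ {u 0, u 1, u 2}} from rfl, Set.sUnion_singleton]
        congr 1
        ext z
        simp only [Set.mem_insert_iff, Set.mem_singleton_iff, Set.mem_image, Set.mem_setOf_eq]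
        constructor
        · rintro (rfl | rfl | rfl)
          exacts [⟨0, by omega, rfl⟩, ⟨1, by omega, rfl⟩, ⟨2, by omega, rfl⟩]
        · rintro ⟨k, hk, rfl⟩
          interval_cases k
          exacts [Or.inl rfl, Or.inr (Or.inl rfl), Or.inr (Or.inr rfl)]
  | succ n ih =>
      obtain ⟨ih1, ih2, ih3⟩ := ih
      rw [show n + 1 + 2 = (n + 2) + 1 by ring, image_le_succ u (n+2)]
      by_cases hmem : u (n+3) ∈ u '' {k | k ≤ n+2}
      · simp only [tri, if_pos hmem]
        rw [Set.insert_eq_self.2 hmem]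
        exact ⟨ih1, ih2, ih3⟩
      · simp only [tri, if_neg hmem]
        set S := u '' {k | k ≤ n+2} with hSdef
        set x := u (n+3) with hxdef
        have hgood : ∃ ab, Good S x ab := by
          apply ear'
          · exact (Set.finite_Iic (n+2)).image u
          · rintro s ⟨k, _, rfl⟩
            exact hu k
          · exact hu (n+3)
          · exact hmem
          · exact ⟨u 0, ⟨0, by simp, rfl⟩, u 1, ⟨1, by simp, rfl⟩, h01⟩
        obtain ⟨ha, hb, hab, hhull, hint⟩ := pick_good hgood
        set A := (pick S x).1
        set B := (pick S x).2
        set tnew := convexHull ℝ {A, x, B} with htnew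
        have hxA : A ≠ x := fun hh => hmem (hh ▸ ha)
        have hxB : B ≠ x := fun hh => hmem (hh ▸ hb)
        have hsub_range : S ⊆ range u := by
          rintro s ⟨k, _, rfl⟩
          exact ⟨k, rfl⟩
        refine ⟨?_, ?_, ?_⟩
        · rintro t (ht | rfl)
          · exact ih1 t ht
          · exact ⟨A, hsub_range ha, x, ⟨n+3, rfl⟩, B, hsub_range hb,
              hxA, hab, (fun hh => hxB hh.symm), rfl⟩
        · rw [Set.union_singleton]
          haveI : Std.Symm (fun t₁ t₂ : Set ℂ => interior t₁ ∩ interior t₂ = ∅) :=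
            ⟨fun s t hst => hsymm hst⟩
          rw [Set.pairwise_insert_of_symm]
          refine ⟨ih2, ?_⟩
          intro t ht _
          have htsub : t ⊆ convexHull ℝ S := by
            rw [← ih3]
            exact Set.subset_sUnion_of_mem ht
          have : interior t ⊆ interior (convexHull ℝ S) := interior_mono htsub
          rw [Set.inter_comm]
          apply Set.eq_empty_of_subset_empty
          calc interior t ∩ interior tnew
              ⊆ interior (convexHull ℝ S) ∩ interior tnew := Set.inter_subset_inter_left _ this
            _ = ∅ := hint
        · rw [Set.sUnion_union, Set.sUnion_singleton, ih3, ← hhull]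
  

lemma tri_mono (u : ℕ → ℂ) : Monotone (tri u) := by
  apply monotone_nat_of_le_succ
  intro n
  by_cases hmem : u (n+3) ∈ u '' {k | k ≤ n+2}
  · simp only [tri, if_pos hmem]
    exact fun _ ht => ht
  · simp only [tri, if_neg hmem]
    exact Set.subset_union_left


lemma triangle_interior {a b c : ℂ} (ha : ‖a‖ = 1) (hb : ‖b‖ = 1) (hc : ‖c‖ = 1)
    (hab : a ≠ b) (hac : a ≠ c) (hbc : b ≠ c) :
    (interior (convexHull ℝ ({a, b, c} : Set ℂ))).Nonempty := by
  have hba : b - a ≠ 0 := sub_ne_zero.2 (Ne.symm hab)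
  have hnsq : 0 < Complex.normSq (b - a) :=
    lt_of_le_of_ne (Complex.normSq_nonneg _) (Ne.symm (by simpa using hba))
  have hnc : ∀ t : ℝ, c = a + t • (b - a) → False := by
    intro t hct
    have h1 : Complex.normSq c = 1 + t*(t-1)*Complex.normSq (b-a) := by
      rw [hct]; exact normSq_chord a b ha hb t
    have h2 : Complex.normSq c = 1 := normSq_one_of_norm_one hc
    have ht : t*(t-1) = 0 := by nlinarith
    rcases mul_eq_zero.1 ht with h0 | h0
    · rw [h0] at hct
      simp at hct
      exact hac hct.symm
    · have h1' : t = 1 := by linarith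
      rw [h1'] at hct
      apply hbc
      rw [hct]
      rw [one_smul]
      ring
  have hLI : LinearIndependent ℝ ![b - a, c - a] := by
    rw [LinearIndependent.pair_iff]
    intro s t hst
    by_cases hts : t = 0
    · subst hts
      rw [zero_smul, add_zero, smul_eq_zero] at hst
      rcases hst with h0 | h0
      · exact ⟨h0, rfl⟩
      · exact absurd h0 hba
    · exfalso
      apply hnc (-s/t)
      have hst' : (s:ℂ) * (b - a) + (t:ℂ) * (c - a) = 0 := by
        rw [← Complex.real_smul, ← Complex.real_smul]; exact hst
      rw [Complex.real_smul]
      have htne : (t:ℂ) ≠ 0 := by exact_mod_cast hts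
      push_cast
      field_simp
      first
        | linear_combination 2 * hst'
        | linear_combination hst'
        | linear_combination (-1 : ℂ) * hst'
        | linear_combination (-2 : ℂ) * hst'
        | linear_combination Complex.I * hst'
  have htop : affineSpan ℝ ({a, b, c} : Set ℂ) = ⊤ := by
    rw [AffineSubspace.affineSpan_eq_top_iff_vectorSpan_eq_top_of_nonempty ℝ ℂ ℂ ⟨a, by simp⟩]
    have hsub1 : Submodule.span ℝ (Set.range ![b - a, c - a]) ≤ vectorSpan ℝ ({a,b,c} : Set ℂ) := by
      rw [Submodule.span_le]
      rintro v hv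
      simp only [Matrix.range_cons, Matrix.range_empty, Set.union_empty,
        Set.union_singleton, Set.mem_insert_iff, Set.mem_singleton_iff] at hv
      rcases hv with rfl | rfl
      · exact vsub_mem_vectorSpan ℝ (show c ∈ ({a,b,c}:Set ℂ) by simp) (show a ∈ ({a,b,c}:Set ℂ) by simp)
      · exact vsub_mem_vectorSpan ℝ (show b ∈ ({a,b,c}:Set ℂ) by simp) (show a ∈ ({a,b,c}:Set ℂ) by simp)
    have hrank : Module.finrank ℝ (Submodule.span ℝ (Set.range ![b - a, c - a])) = 2 := by
      rw [finrank_span_eq_card hLI]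
      simp
    apply Submodule.eq_top_of_finrank_eq
    have hle1 : 2 ≤ Module.finrank ℝ (vectorSpan ℝ ({a,b,c} : Set ℂ)) := by
      rw [← hrank]
      exact Submodule.finrank_mono hsub1
    have hle2 : Module.finrank ℝ (vectorSpan ℝ ({a,b,c} : Set ℂ)) ≤ 2 := by
      rw [← Complex.finrank_real_complex]
      exact Submodule.finrank_le _
    rw [Complex.finrank_real_complex]
    omega
  rw [(convex_convexHull ℝ ({a,b,c} : Set ℂ)).interior_nonempty_iff_affineSpan_eq_top,
    affineSpan_convexHull]
  exact htop

lemma covering (h : Set ℂ) (hcl : IsClosed h) (hsub : ∀ z ∈ h, ‖z‖ = 1)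
    {a b c : ℂ} (ha : a ∈ h) (hb : b ∈ h) (hc : c ∈ h) (hab : a ≠ b) (hac : a ≠ c)
    (hbc : b ≠ c) :
    ∃ D : Set ℂ, D ⊆ h ∧ D.Countable ∧ a ∈ D ∧ b ∈ D ∧ c ∈ D ∧
      convexHull ℝ h ∩ Metric.ball (0:ℂ) 1 ⊆ convexHull ℝ D := by
  classical
  obtain ⟨Q, hQh, hQc, hQd⟩ :=
    (TopologicalSpace.IsSeparable.of_separableSpace h).exists_countable_dense_subset
  set A : Set ℝ := {θ | Complex.exp (θ * I) ∈ h} with hA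
  set EL : Set ℝ := ⋃ r : ℚ, {θ | θ ∈ A ∧ (r:ℝ) < θ ∧ Ioo (r:ℝ) θ ∩ A = ∅} with hEL
  set ER : Set ℝ := ⋃ r : ℚ, {θ | θ ∈ A ∧ θ < (r:ℝ) ∧ Ioo θ (r:ℝ) ∩ A = ∅} with hER
  have hELc : EL.Countable := by
    apply Set.countable_iUnion
    intro r
    apply Set.Subsingleton.countable
    intro θ1 h1 θ2 h2
    by_contra hne
    rcases lt_or_gt_of_ne hne with hlt | hlt
    · have hmem : θ1 ∈ Ioo (r:ℝ) θ2 ∩ A := ⟨⟨h1.2.1, hlt⟩, h1.1⟩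
      rw [h2.2.2] at hmem
      exact absurd hmem (Set.notMem_empty _)
    · have hmem : θ2 ∈ Ioo (r:ℝ) θ1 ∩ A := ⟨⟨h2.2.1, hlt⟩, h2.1⟩
      rw [h1.2.2] at hmem
      exact absurd hmem (Set.notMem_empty _)
  have hERc : ER.Countable := by
    apply Set.countable_iUnion
    intro r
    apply Set.Subsingleton.countable
    intro θ1 h1 θ2 h2
    by_contra hne
    rcases lt_or_gt_of_ne hne with hlt | hlt
    · have hmem : θ2 ∈ Ioo θ1 (r:ℝ) ∩ A := ⟨⟨hlt, h2.2.1⟩, h2.1⟩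
      rw [h1.2.2] at hmem
      exact absurd hmem (Set.notMem_empty _)
    · have hmem : θ1 ∈ Ioo θ2 (r:ℝ) ∩ A := ⟨⟨hlt, h1.2.1⟩, h1.1⟩
      rw [h2.2.2] at hmem
      exact absurd hmem (Set.notMem_empty _)
  set E : Set ℂ := (fun θ : ℝ => Complex.exp (θ*I)) '' (EL ∪ ER) with hE
  set D : Set ℂ := (Q ∪ E) ∪ {a, b, c} with hD
  have hEh : E ⊆ h := by
    rintro z ⟨θ, hθ, rfl⟩
    have hθA : θ ∈ A := by
      rcases hθ with hθ | hθ <;>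
      · rw [Set.mem_iUnion] at hθ
        obtain ⟨r, hr⟩ := hθ
        exact hr.1
    exact hθA
  have hDh : D ⊆ h := by
    rintro z ((hz | hz) | hz)
    · exact hQh hz
    · exact hEh hz
    · rcases hz with rfl | rfl | rfl
      exacts [ha, hb, hc]
  have hDc : D.Countable := by
    apply Set.Countable.union
    · exact hQc.union ((hELc.union hERc).image _)
    · exact (Set.toFinite ({a,b,c} : Set ℂ)).countable
  have habcD : ({a, b, c} : Set ℂ) ⊆ D := fun y hy => Or.inr hy
  have habch : ({a, b, c} : Set ℂ) ⊆ h := by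
    rintro y (rfl | rfl | rfl)
    exacts [ha, hb, hc]
  refine ⟨D, hDh, hDc, habcD (by simp), habcD (by simp), habcD (by simp), ?_⟩
  rintro z ⟨hzconv, hzball⟩
  have hzn : ‖z‖ < 1 := mem_ball_zero_iff.1 hzball
  obtain ⟨w₀, hw₀⟩ := triangle_interior (hsub a ha) (hsub b hb) (hsub c hc) hab hac hbc
  have hw₀D : w₀ ∈ interior (convexHull ℝ D) := interior_mono (convexHull_mono habcD) hw₀
  have hw₀h : w₀ ∈ interior (convexHull ℝ h) := interior_mono (convexHull_mono habch) hw₀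
  by_cases hzint : z ∈ interior (convexHull ℝ h)
  · -- interior case
    have hhD : convexHull ℝ h ⊆ closure (convexHull ℝ D) := by
      apply convexHull_min ?_ ((convex_convexHull ℝ D).closure)
      intro y hy
      apply closure_mono (show Q ⊆ convexHull ℝ D from
        fun q hq => subset_convexHull ℝ D (Or.inl (Or.inl hq)))
      exact hQd hy
    have hzin : z ∈ interior (closure (convexHull ℝ D)) := interior_mono hhD hzint
    by_cases hzw : z = w₀
    · rw [hzw]; exact interior_subset hw₀D
    · obtain ⟨ε, hε, hball⟩ := Metric.isOpen_iff.1 isOpen_interior z hzin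
      have hzwnorm : 0 < ‖z - w₀‖ := norm_pos_iff.2 (sub_ne_zero.2 hzw)
      set δ : ℝ := ε / (2 * ‖z - w₀‖) with hδdef
      have hδ : 0 < δ := by positivity
      set z' : ℂ := z + δ • (z - w₀) with hz'def
      have hz'mem : z' ∈ Metric.ball z ε := by
        rw [Metric.mem_ball, dist_eq_norm, hz'def]
        have e1 : z + δ • (z - w₀) - z = δ • (z - w₀) := by ring_nf
        have hne2 : ‖z - w₀‖ ≠ 0 := by
          exact ne_of_gt hzwnorm
        have e2 : ε/(2*‖z - w₀‖) * ‖z - w₀‖ = ε/2 := by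
          field_simp
        rw [e1, norm_smul, Real.norm_eq_abs, abs_of_pos hδ, hδdef, e2]
        linarith
      have hz' : z' ∈ closure (convexHull ℝ D) := interior_subset (hball hz'mem)
      have hzseg : z ∈ openSegment ℝ w₀ z' := by
        refine ⟨δ/(1+δ), 1/(1+δ), by positivity, by positivity, by field_simp; ring, ?_⟩
        rw [hz'def, Complex.real_smul, Complex.real_smul, Complex.real_smul]
        push_cast
        have hne : (1:ℂ) + (δ:ℂ) ≠ 0 := by
          intro hcon
          have : (1 + δ : ℝ) = 0 := by exact_mod_cast hcon
          linarith
        field_simp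
        ring
      exact interior_subset
        ((convex_convexHull ℝ D).openSegment_interior_closure_subset_interior hw₀D hz' hzseg)
  · -- boundary case
    obtain ⟨f, hf⟩ := geometric_hahn_banach_open_point
      ((convex_convexHull ℝ h).interior) isOpen_interior hzint
    have hfw₀ : f w₀ < f z := hf w₀ hw₀h
    set c₀ : ℝ := f z with hc₀
    have hbound : ∀ s ∈ convexHull ℝ h, f s ≤ c₀ := by
      intro s hs
      by_contra hcon
      push_neg at hcon
      have hseg : openSegment ℝ w₀ s ⊆ interior (convexHull ℝ h) :=
        (convex_convexHull ℝ h).openSegment_interior_closure_subset_interior hw₀h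
          (subset_closure hs)
      set t : ℝ := ((c₀ - f w₀)/(f s - f w₀) + 1)/2 with htdef
      have hsw : 0 < f s - f w₀ := by linarith
      have h1 : (c₀ - f w₀)/(f s - f w₀) < 1 := (div_lt_one hsw).2 (by linarith)
      have h0 : 0 < (c₀ - f w₀)/(f s - f w₀) := div_pos (by linarith) hsw
      have ht0 : 0 < t := by rw [htdef]; linarith
      have ht1 : t < 1 := by rw [htdef]; linarith
      have hmem : (1-t) • w₀ + t • s ∈ openSegment ℝ w₀ s :=
        ⟨1-t, t, by linarith, ht0, by ring, rfl⟩
      have hlt := hf _ (hseg hmem)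
      rw [map_add, map_smul, map_smul] at hlt
      simp only [smul_eq_mul] at hlt
      have hts : c₀ - f w₀ < t * (f s - f w₀) := by
        have htgt : (c₀ - f w₀)/(f s - f w₀) < t := by rw [htdef]; linarith
        calc c₀ - f w₀ = ((c₀ - f w₀)/(f s - f w₀)) * (f s - f w₀) := by field_simp
        _ < t * (f s - f w₀) := mul_lt_mul_of_pos_right htgt hsw
      nlinarith
    set wc : ℂ := ⟨f 1, f Complex.I⟩ with hwc
    have hfy : ∀ y : ℂ, f y = wc.re * y.re + wc.im * y.im := by
      intro y
      have hy : y = y.re • (1:ℂ) + y.im • Complex.I := by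
        apply Complex.ext <;> simp
      calc f y = f (y.re • (1:ℂ) + y.im • Complex.I) := by rw [← hy]
      _ = y.re * f 1 + y.im * f Complex.I := by
          rw [map_add, map_smul, map_smul]; simp [smul_eq_mul]
      _ = wc.re * y.re + wc.im * y.im := by rw [hwc]; ring
    have hwc0 : wc ≠ 0 := by
      intro h0
      have h1 : wc.re = 0 := by rw [h0]; simp
      have h2 : wc.im = 0 := by rw [h0]; simp
      have e1 : f w₀ = 0 := by rw [hfy w₀, h1, h2]; ring
      have e2 : f z = 0 := by rw [hfy z, h1, h2]; ring
      rw [e1, hc₀, e2] at hfw₀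
      exact lt_irrefl _ hfw₀
    set R : ℝ := ‖wc‖ with hR
    have hRpos : 0 < R := by
      rw [hR]
      exact norm_pos_iff.2 hwc0
    set φ : ℝ := Complex.arg wc with hφ
    have hwcR : (R:ℂ) * Complex.exp (φ * I) = wc := Complex.norm_mul_exp_arg_mul_I wc
    have hre : R * Real.cos φ = wc.re := by
      have := congrArg Complex.re hwcR
      rwa [Complex.re_ofReal_mul, Complex.exp_ofReal_mul_I_re] at this
    have him : R * Real.sin φ = wc.im := by
      have := congrArg Complex.im hwcR
      rwa [Complex.im_ofReal_mul, Complex.exp_ofReal_mul_I_im] at this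
    have hftrig : ∀ θ : ℝ, f (Complex.exp (θ * I)) = R * Real.cos (θ - φ) := by
      intro θ
      rw [hfy, Complex.exp_ofReal_mul_I_re, Complex.exp_ofReal_mul_I_im, Real.cos_sub,
        ← hre, ← him]
      ring
    have hCS : ∀ y : ℂ, |f y| ≤ R * ‖y‖ := by
      intro y
      have e1 : f y = ((starRingEnd ℂ) wc * y).re := by
        rw [hfy, Complex.mul_re, Complex.conj_re, Complex.conj_im]; ring
      rw [e1]
      calc |((starRingEnd ℂ) wc * y).re| ≤ ‖(starRingEnd ℂ) wc * y‖ :=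
        Complex.abs_re_le_norm _
      _ = R * ‖y‖ := by rw [norm_mul, Complex.norm_conj, ← hR]
    have hzCS := abs_le.1 (hCS z)
    have hcR : c₀ < R := by
      have : R * ‖z‖ < R * 1 := by
        apply mul_lt_mul_of_pos_left hzn hRpos
      rw [mul_one] at this
      calc c₀ = f z := rfl
      _ ≤ |f z| := le_abs_self _
      _ ≤ R * ‖z‖ := hCS z
      _ < R := this
    have hcmR : -R < c₀ := by
      have h1 : R * ‖z‖ < R := by
        have := mul_lt_mul_of_pos_left hzn hRpos
        rwa [mul_one] at this
      have h2 : -(R * ‖z‖) ≤ f z := hzCS.1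
      have : -R < -(R * ‖z‖) := by linarith
      calc -R < -(R * ‖z‖) := this
      _ ≤ f z := h2
    set α : ℝ := Real.arccos (c₀ / R) with hαdef
    have hd1 : -1 ≤ c₀ / R := by
      rw [le_div_iff₀ hRpos]; linarith
    have hd2 : c₀ / R ≤ 1 := by
      rw [div_le_one hRpos]; linarith
    have hcα : Real.cos α = c₀ / R := Real.cos_arccos hd1 hd2
    have hα0 : 0 < α := Real.arccos_pos.2 (by rw [div_lt_one hRpos]; linarith)
    have hαπ : α < Real.pi := by
      rcases lt_or_eq_of_le (Real.arccos_le_pi (c₀/R)) with hlt | heq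
      · exact hlt
      · exfalso
        have := Real.arccos_eq_pi.1 heq
        have : c₀ ≤ -R := by
          rw [div_le_iff₀ hRpos] at this
          linarith
        linarith
    set P : ℂ := Complex.exp (((φ+α : ℝ)) * I) with hP
    set Qpt : ℂ := Complex.exp (((φ-α : ℝ)) * I) with hQpt
    have hPnorm : ‖P‖ = 1 := Complex.norm_exp_ofReal_mul_I _
    have hQnorm : ‖Qpt‖ = 1 := Complex.norm_exp_ofReal_mul_I _
    have hfP : f P = c₀ := by
      rw [hP, hftrig, show φ + α - φ = α by ring, hcα]
      field_simp
    have hfQ : f Qpt = c₀ := by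
      rw [hQpt, hftrig, show φ - α - φ = -α by ring, Real.cos_neg, hcα]
      field_simp
    have hline : ∀ y : ℂ, ‖y‖ = 1 → f y = c₀ → y = P ∨ y = Qpt := by
      intro y hy1 hyc
      have hyexp : Complex.exp ((Complex.arg y : ℝ) * I) = y := by
        have := Complex.norm_mul_exp_arg_mul_I y
        rwa [hy1,
          Complex.ofReal_one, one_mul] at this
      have hcosv : R * Real.cos (Complex.arg y - φ) = c₀ := by
        rw [← hftrig, hyexp, hyc]
      have hcos : Real.cos (Complex.arg y - φ) = Real.cos α := by
        rw [hcα, eq_div_iff (ne_of_gt hRpos)]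
        linarith
      rw [Real.cos_eq_cos_iff] at hcos
      obtain ⟨k, hk | hk⟩ := hcos
      · left
        rw [← hyexp, hP, Complex.exp_eq_exp_iff_exists_int]
        refine ⟨-k, ?_⟩
        have hθ : (Complex.arg y : ℝ) = (φ + α) + ((-k : ℤ) : ℝ) * (2*Real.pi) := by
          push_cast
          linarith
        rw [hθ]
        push_cast
        ring
      · right
        rw [← hyexp, hQpt, Complex.exp_eq_exp_iff_exists_int]
        refine ⟨k, ?_⟩
        have hθ : (Complex.arg y : ℝ) = (φ - α) + ((k : ℤ) : ℝ) * (2*Real.pi) := by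
          push_cast
          linarith
        rw [hθ]
        push_cast
        ring
    have hface : z ∈ convexHull ℝ (h ∩ {y | f y = c₀}) := by
      rw [convexHull_eq] at hzconv
      obtain ⟨ι, t, wt, zt, hw0, hw1, hzh, hcm⟩ := hzconv
      have hfz : ∑ i ∈ t, wt i * f (zt i) = c₀ := by
        have e1 : f (t.centerMass wt zt) = c₀ := by rw [hcm]
        rw [Finset.centerMass_eq_of_sum_1 _ _ hw1, map_sum] at e1
        rw [← e1]
        apply Finset.sum_congr rfl
        intro i _
        rw [map_smul]
        simp [smul_eq_mul]
      have hkey : ∀ i ∈ t, wt i ≠ 0 → f (zt i) = c₀ := by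
        by_contra hcon
        push_neg at hcon
        obtain ⟨i₀, hi₀t, hi₀w, hi₀f⟩ := hcon
        have hlt : f (zt i₀) < c₀ :=
          lt_of_le_of_ne (hbound _ (subset_convexHull ℝ h (hzh i₀ hi₀t))) hi₀f
        have hstrict : ∑ i ∈ t, wt i * f (zt i) < ∑ i ∈ t, wt i * c₀ := by
          apply Finset.sum_lt_sum
          · intro i hi
            exact mul_le_mul_of_nonneg_left
              (hbound _ (subset_convexHull ℝ h (hzh i hi))) (hw0 i hi)
          · exact ⟨i₀, hi₀t,
              mul_lt_mul_of_pos_left hlt (lt_of_le_of_ne (hw0 _ hi₀t) (Ne.symm hi₀w))⟩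
        rw [hfz, ← Finset.sum_mul, hw1, one_mul] at hstrict
        exact lt_irrefl _ hstrict
      have hcm' : (t.filter fun i => wt i ≠ 0).centerMass wt zt = z := by
        rw [Finset.centerMass_filter_ne_zero]; exact hcm
      rw [← hcm']
      apply Finset.centerMass_mem_convexHull
      · intro i hi; exact hw0 i (Finset.mem_filter.1 hi).1
      · rw [Finset.sum_filter_ne_zero, hw1]
        norm_num
      · intro i hi
        obtain ⟨hit, hwi⟩ := Finset.mem_filter.1 hi
        exact ⟨hzh i hit, hkey i hit hwi⟩
    have hsubPQ : h ∩ {y | f y = c₀} ⊆ {P, Qpt} := by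
      rintro y ⟨hyh, hyf⟩
      rcases hline y (hsub y hyh) hyf with rfl | rfl
      · exact Or.inl rfl
      · exact Or.inr rfl
    have hPh : P ∈ h := by
      by_contra hPh'
      have hsubQ : h ∩ {y | f y = c₀} ⊆ {Qpt} := by
        rintro y hy
        rcases hsubPQ hy with rfl | hy2
        · exact absurd hy.1 hPh'
        · exact hy2
      have : z ∈ convexHull ℝ ({Qpt} : Set ℂ) := convexHull_mono hsubQ hface
      rw [convexHull_singleton, Set.mem_singleton_iff] at this
      rw [this, hQnorm] at hzn
      exact lt_irrefl _ hzn
    have hQh' : Qpt ∈ h := by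
      by_contra hQh''
      have hsubP : h ∩ {y | f y = c₀} ⊆ {P} := by
        rintro y hy
        rcases hsubPQ hy with rfl | rfl
        · rfl
        · exact absurd hy.1 hQh''
      have : z ∈ convexHull ℝ ({P} : Set ℂ) := convexHull_mono hsubP hface
      rw [convexHull_singleton, Set.mem_singleton_iff] at this
      rw [this, hPnorm] at hzn
      exact lt_irrefl _ hzn
    have harc : ∀ θ ∈ Ioo (φ-α) (φ+α), θ ∉ A := by
      intro θ hθ hθA
      have h1 : f (Complex.exp ((θ:ℝ)*I)) ≤ c₀ := hbound _ (subset_convexHull ℝ h hθA)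
      rw [hftrig] at h1
      have h2 : Real.cos α < Real.cos (θ-φ) := by
        rw [← Real.cos_abs (θ-φ)]
        apply Real.cos_lt_cos_of_nonneg_of_le_pi (abs_nonneg _) (le_of_lt hαπ)
        rw [abs_lt]
        exact ⟨by linarith [hθ.1], by linarith [hθ.2]⟩
      rw [hcα] at h2
      have h3 := mul_lt_mul_of_pos_left h2 hRpos
      rw [mul_div_cancel₀ _ (ne_of_gt hRpos)] at h3
      linarith
    have hPD : P ∈ D := by
      obtain ⟨r, hr1, hr2⟩ := exists_rat_btwn (show φ-α < φ+α by linarith)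
      have hPA : (φ+α) ∈ A := hPh
      have hmemEL : (φ+α) ∈ EL := by
        rw [hEL, Set.mem_iUnion]
        refine ⟨r, hPA, hr2, ?_⟩
        rw [Set.eq_empty_iff_forall_notMem]
        rintro θ ⟨hθI, hθA⟩
        exact harc θ ⟨lt_trans hr1 hθI.1, hθI.2⟩ hθA
      exact Or.inl (Or.inr ⟨φ+α, Or.inl hmemEL, rfl⟩)
    have hQD : Qpt ∈ D := by
      obtain ⟨r, hr1, hr2⟩ := exists_rat_btwn (show φ-α < φ+α by linarith)
      have hQA : (φ-α) ∈ A := hQh'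
      have hmemER : (φ-α) ∈ ER := by
        rw [hER, Set.mem_iUnion]
        refine ⟨r, hQA, hr1, ?_⟩
        rw [Set.eq_empty_iff_forall_notMem]
        rintro θ ⟨hθI, hθA⟩
        exact harc θ ⟨hθI.1, lt_trans hθI.2 hr2⟩ hθA
      exact Or.inl (Or.inr ⟨φ-α, Or.inr hmemER, rfl⟩)
    have hzPQ : z ∈ convexHull ℝ ({P, Qpt} : Set ℂ) := convexHull_mono hsubPQ hface
    apply convexHull_mono ?_ hzPQ
    rintro y (rfl | rfl)
    · exact hPD
    · exact hQD

theorem main_complex (h : Set ℂ) (hcl : IsClosed h) (hsub : ∀ z ∈ h, ‖z‖ = 1)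
    (hcard : ∃ a ∈ h, ∃ b ∈ h, ∃ c ∈ h, a ≠ b ∧ a ≠ c ∧ b ≠ c) :
    ∃ 𝒯 : Set (Set ℂ),
      (∀ t ∈ 𝒯, ∃ a ∈ h, ∃ b ∈ h, ∃ c ∈ h, a ≠ b ∧ a ≠ c ∧ b ≠ c ∧
        t = convexHull ℝ {a, b, c}) ∧
      (𝒯.Pairwise fun t₁ t₂ => interior t₁ ∩ interior t₂ = ∅) ∧
      (⋃₀ 𝒯) ∩ Metric.ball (0:ℂ) 1 = convexHull ℝ h ∩ Metric.ball 0 1 := by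
  obtain ⟨a, ha, b, hb, c, hc, hab, hac, hbc⟩ := hcard
  obtain ⟨D, hDh, hDc, haD, hbD, hcD, hDcover⟩ :=
    covering h hcl hsub ha hb hc hab hac hbc
  obtain ⟨u', hu'⟩ := hDc.exists_eq_range ⟨a, haD⟩
  set u : ℕ → ℂ := fun n => match n with
    | 0 => a
    | 1 => b
    | 2 => c
    | (m+3) => u' m
    with hudef
  have hrange_h : range u ⊆ h := by
    rintro z ⟨k, rfl⟩
    match k with
    | 0 => exact ha
    | 1 => exact hb
    | 2 => exact hc
    | (m+3) =>
        apply hDh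
        rw [hu']
        exact ⟨m, rfl⟩
  have hDrange : D ⊆ range u := by
    intro z hz
    rw [hu'] at hz
    obtain ⟨m, rfl⟩ := hz
    exact ⟨m + 3, rfl⟩
  have hu : ∀ n, ‖u n‖ = 1 := fun n => hsub _ (hrange_h ⟨n, rfl⟩)
  have h01 : u 0 ≠ u 1 := hab
  have h02 : u 0 ≠ u 2 := hac
  have h12 : u 1 ≠ u 2 := hbc
  have hspec := tri_spec u hu h01 h02 h12
  refine ⟨⋃ n, tri u n, ?_, ?_, ?_⟩
  · rintro t ht
    obtain ⟨n, hn⟩ := Set.mem_iUnion.1 ht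
    obtain ⟨a', ha', b', hb', c', hc', h1, h2, h3, h4⟩ := (hspec n).1 t hn
    exact ⟨a', hrange_h ha', b', hrange_h hb', c', hrange_h hc', h1, h2, h3, h4⟩
  · intro t1 h1 t2 h2 hne
    obtain ⟨m, hm⟩ := Set.mem_iUnion.1 h1
    obtain ⟨n, hn⟩ := Set.mem_iUnion.1 h2
    rcases le_total m n with hmn | hmn
    · exact (hspec n).2.1 (tri_mono u hmn hm) hn hne
    · exact (hspec m).2.1 hm (tri_mono u hmn hn) hne
  · have hUeq : ⋃₀ (⋃ n, tri u n) = ⋃ n, convexHull ℝ (u '' {k | k ≤ n + 2}) := by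
      rw [Set.sUnion_iUnion]
      exact Set.iUnion_congr (fun n => (hspec n).2.2)
    have hUrange : (⋃ n, convexHull ℝ (u '' {k | k ≤ n + 2})) = convexHull ℝ (range u) := by
      apply Subset.antisymm
      · apply Set.iUnion_subset
        intro n
        apply convexHull_mono
        rintro z ⟨k, _, rfl⟩
        exact ⟨k, rfl⟩
      · intro z hz
        rw [convexHull_eq_union_convexHull_finite_subsets] at hz
        simp only [Set.mem_iUnion] at hz
        obtain ⟨t, htsub, hzt⟩ := hz
        have hch : ∀ y ∈ t, ∃ k, u k = y := fun y hy => htsub hy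
        choose g hg using hch
        classical
        set N := t.sup fun y => if hy : y ∈ t then g y hy else 0 with hN
        apply Set.mem_iUnion.2 ⟨N, ?_⟩
        apply convexHull_mono ?_ hzt
        intro y hy
        have hy' : y ∈ t := hy
        refine ⟨g y hy', ?_, hg y hy'⟩
        have hle : (fun y => if hy2 : y ∈ t then g y hy2 else 0) y ≤ N :=
          Finset.le_sup (f := fun y => if hy2 : y ∈ t then g y hy2 else 0) hy'
        simp only at hle
        rw [dif_pos hy'] at hle
        simp only [Set.mem_setOf_eq]
        omega
    rw [hUeq, hUrange]
    apply Subset.antisymm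
    · apply Set.inter_subset_inter_left
      exact convexHull_mono hrange_h
    · intro z hz
      exact ⟨convexHull_mono hDrange (hDcover hz), hz.2⟩


end IdealTri

end

/-- Ideal triangulation: if `h` is a closed subset of the unit circle with at
least three points, then its convex hull `g = conv(h)` admits an ideal
triangulation: a family of triangles with vertices in `h`, with pairwise
disjoint interiors, whose union meets the open unit disk in exactly
`g ∩ int(B²)`. -/
theorem stmt_13 (h : Set Plane) (hcl : IsClosed h) (hsub : h ⊆ Metric.sphere 0 1)
    (hcard : ∃ a ∈ h, ∃ b ∈ h, ∃ c ∈ h, a ≠ b ∧ a ≠ c ∧ b ≠ c) :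
    ∃ 𝒯 : Set (Set Plane),
      (∀ t ∈ 𝒯, ∃ a ∈ h, ∃ b ∈ h, ∃ c ∈ h, a ≠ b ∧ a ≠ c ∧ b ≠ c ∧
        t = convexHull ℝ {a, b, c}) ∧
      (𝒯.Pairwise fun t₁ t₂ => interior t₁ ∩ interior t₂ = ∅) ∧
      (⋃₀ 𝒯) ∩ Metric.ball (0 : Plane) 1 = convexHull ℝ h ∩ Metric.ball 0 1 := by
  classical
  set e : ℂ ≃ₗᵢ[ℝ] Plane :=
    Complex.isometryOfOrthonormal (EuclideanSpace.basisFun (Fin 2) ℝ) with he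
  set h' : Set ℂ := ⇑e ⁻¹' h with hh'
  have himg : ⇑e '' h' = h := Set.image_preimage_eq h e.surjective
  have hcl' : IsClosed h' := hcl.preimage e.continuous
  have hsub' : ∀ z ∈ h', ‖z‖ = 1 := by
    intro z hz
    have h1 : e z ∈ Metric.sphere (0 : Plane) 1 := hsub hz
    rw [mem_sphere_zero_iff_norm] at h1
    rw [← e.norm_map z]
    exact h1
  have hcard' : ∃ a ∈ h', ∃ b ∈ h', ∃ c ∈ h', a ≠ b ∧ a ≠ c ∧ b ≠ c := by
    obtain ⟨a, ha, b, hb, c, hc, h1, h2, h3⟩ := hcard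
    have hmem : ∀ y ∈ h, e.symm y ∈ h' := by
      intro y hy
      show e (e.symm y) ∈ h
      rw [e.apply_symm_apply]
      exact hy
    exact ⟨e.symm a, hmem a ha, e.symm b, hmem b hb, e.symm c, hmem c hc,
      fun hh => h1 (e.symm.injective hh), fun hh => h2 (e.symm.injective hh),
      fun hh => h3 (e.symm.injective hh)⟩
  obtain ⟨T', hT1, hT2, hT3⟩ := IdealTri.main_complex h' hcl' hsub' hcard'
  have hconv : ∀ s : Set ℂ, ⇑e '' (convexHull ℝ s) = convexHull ℝ (⇑e '' s) := by
    intro s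
    have := e.toLinearEquiv.toLinearMap.image_convexHull s
    simpa using this
  have hint : ∀ s : Set ℂ, ⇑e '' interior s = interior (⇑e '' s) := by
    intro s
    have := e.toHomeomorph.image_interior s
    simpa using this
  refine ⟨(Set.image ⇑e) '' T', ?_, ?_, ?_⟩
  · rintro t ⟨t', ht', rfl⟩
    obtain ⟨a, ha, b, hb, c, hc, h1, h2, h3, rfl⟩ := hT1 t' ht'
    refine ⟨e a, (by rw [← himg]; exact ⟨a, ha, rfl⟩), e b, (by rw [← himg]; exact ⟨b, hb, rfl⟩),
      e c, (by rw [← himg]; exact ⟨c, hc, rfl⟩), e.injective.ne h1, e.injective.ne h2,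
      e.injective.ne h3, ?_⟩
    rw [hconv]
    congr 1
    rw [Set.image_insert_eq, Set.image_insert_eq, Set.image_singleton]
  · rintro t1 ⟨t1', h1', rfl⟩ t2 ⟨t2', h2', rfl⟩ hne
    have hne' : t1' ≠ t2' := fun hh => hne (by rw [hh])
    have hdisj := hT2 h1' h2' hne'
    rw [← hint, ← hint, ← Set.image_inter e.injective, hdisj, Set.image_empty]
  · have hball : ⇑e '' Metric.ball (0:ℂ) 1 = Metric.ball (0:Plane) 1 := by
      ext y
      constructor
      · rintro ⟨zz, hzz, rfl⟩
        rw [mem_ball_zero_iff] at hzz ⊢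
        rw [e.norm_map]
        exact hzz
      · intro hy
        refine ⟨e.symm y, ?_, e.apply_symm_apply y⟩
        rw [mem_ball_zero_iff] at hy ⊢
        rw [e.symm.norm_map]
        exact hy
    have hsU : ⋃₀ ((Set.image ⇑e) '' T') = ⇑e '' ⋃₀ T' := (Set.image_sUnion ..).symm
    rw [hsU, ← hball, ← Set.image_inter e.injective, hT3, ← himg, ← hconv,
      ← Set.image_inter e.injective]
end

section
/- Every point x of the convex hull conv(h) of a closed subset h of the unit circle that lies in the open unit disk has a neighborhood in conv(h) contained in the convex hull of finitely many points of h. Consequently, every compact subset of conv(h) ∩ int(B²) lies in the convex hull of a finite subset of h. -/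
/-!
Fix `r < 1` and a small scale `ρ`. Let `F` consist of a finite `ρ`-net of `h` together with
the points `p ∈ h` near which `h` lies on one side of the line `ℝ ∙ p`: two such points with
the same side are `ρ`-apart, so there are finitely many. If some `y ∈ conv h` with `‖y‖ < r`
were outside `conv F`, a unit vector `w` would separate `y` from `F`. The maximiser `p` of
`⟪w, ·⟫` on `h` either lies within `ρ` of `w`, and then a net point near `p` already has
`⟪w, ·⟫ ≥ r > ⟪w, y⟫`, or lies far from `w`, and then maximality keeps `h` near `p` off the
side of `w`, so `p ∈ F`. Compact subsets of the open disk lie in a smaller disk, which gives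
the second statement.
-/

open Set Function Topology

open Metric RealInnerProductSpace

section InnerProductSpace

variable {E : Type*} [NormedAddCommGroup E] [InnerProductSpace ℝ E]

lemma inner_eq_one_sub_dist_sq {a b : E} (ha : ‖a‖ = 1) (hb : ‖b‖ = 1) :
    ⟪a, b⟫ = 1 - dist a b ^ 2 / 2 := by
  rw [dist_eq_norm, norm_sub_sq_real, ha, hb]; ring

lemma exists_norm_eq_one_forall_inner_lt [CompleteSpace E] {s : Set E} (hs : Convex ℝ s)
    (hsc : IsClosed s) (hne : s.Nonempty) {y : E} (hy : y ∉ s) :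
    ∃ w : E, ‖w‖ = 1 ∧ ∀ q ∈ s, ⟪w, q⟫ < ⟪w, y⟫ := by
  obtain ⟨f, u, hfs, hfy⟩ := geometric_hahn_banach_closed_point hs hsc hy
  set v := (InnerProductSpace.toDual ℝ E).symm f
  have hv : ∀ a, ⟪v, a⟫ = f a := fun a => InnerProductSpace.toDual_symm_apply
  have hlt : ∀ q ∈ s, ⟪v, q⟫ < ⟪v, y⟫ := fun q hq => by
    rw [hv, hv]; exact (hfs q hq).trans hfy
  have hv0 : v ≠ 0 := by
    rintro hv0
    obtain ⟨q, hq⟩ := hne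
    simpa [hv0] using hlt q hq
  refine ⟨‖v‖⁻¹ • v, norm_smul_inv_norm hv0, fun q hq => ?_⟩
  simp only [real_inner_smul_left]
  exact mul_lt_mul_of_pos_left (hlt q hq) (inv_pos.2 (norm_pos_iff.2 hv0))

end InnerProductSpace

lemma finite_of_subset_isCompact_of_pairwise_le_dist {X : Type*} [PseudoMetricSpace X]
    {A K : Set X} (hK : IsCompact K) (hAK : A ⊆ K) {ρ : ℝ} (hρ : 0 < ρ)
    (hA : A.Pairwise fun p q => ρ ≤ dist p q) : A.Finite := by
  obtain ⟨t, -, htf, hcov⟩ := hK.finite_cover_balls (half_pos hρ)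
  refine (htf.biUnion (t := fun c => A ∩ ball c (ρ / 2)) fun c _ => ?_).subset fun a ha => ?_
  · refine Set.Subsingleton.finite fun p ⟨hp, hpc⟩ q ⟨hq, hqc⟩ => ?_
    by_contra hpq
    have := dist_triangle_right p q c
    linarith [hA hp hq hpq, mem_ball.1 hpc, mem_ball.1 hqc]
  · obtain ⟨c, hc, hac⟩ := mem_iUnion₂.1 (hcov (hAK ha))
    exact mem_biUnion hc ⟨ha, hac⟩

/-- `(a, b)` and `(c, e)` are `w` and `z` of `inner_lt_inner_of_cross_mul_cross_nonneg` in the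
frame where `p = (1, 0)`. -/
lemma lt_mul_add_mul_of_sq_add_sq_eq_one {a b c e : ℝ} (h1 : a ^ 2 + b ^ 2 = 1)
    (h2 : c ^ 2 + e ^ 2 = 1) (hbe : 0 ≤ b * e) (he : e ≠ 0) (hac : a < c) :
    a < a * c + b * e := by
  have hc1 : c < 1 := by
    have : 0 < e ^ 2 := by positivity
    nlinarith
  rcases le_or_gt a 0 with ha | ha
  · nlinarith
  · have hpos : 0 < 1 + c - 2 * a ^ 2 := by nlinarith
    have hsq : (a * (1 - c)) ^ 2 < (b * e) ^ 2 := by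
      have : (b * e) ^ 2 - (a * (1 - c)) ^ 2 = (1 - c) * (1 + c - 2 * a ^ 2) := by
        linear_combination e ^ 2 * h1 + (1 - a ^ 2) * h2
      nlinarith [mul_pos (sub_pos.2 hc1) hpos]
    nlinarith [mul_pos ha (sub_pos.2 hc1)]

/-- Its sign tells on which side of the line `ℝ ∙ p` the point `q` lies. -/
def cross (p q : Plane) : ℝ := p 0 * q 1 - p 1 * q 0

lemma inner_plane (p q : Plane) : ⟪p, q⟫ = p 0 * q 0 + p 1 * q 1 := by
  simp [PiLp.inner_apply, Fin.sum_univ_two]; ring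

lemma cross_swap (p q : Plane) : cross q p = -cross p q := by
  simp only [cross]; ring

lemma inner_mul_norm_sq_eq (p w z : Plane) :
    ⟪w, z⟫ * ‖p‖ ^ 2 = ⟪p, w⟫ * ⟪p, z⟫ + cross p w * cross p z := by
  simp only [← real_inner_self_eq_norm_sq, inner_plane, cross]; ring

lemma dist_eq_zero_or_two_of_cross_eq_zero {p q : Plane} (hp : ‖p‖ = 1) (hq : ‖q‖ = 1)
    (hpq : cross p q = 0) : dist p q = 0 ∨ dist p q = 2 := by
  have hsq : ⟪p, q⟫ ^ 2 = 1 := by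
    have := inner_mul_norm_sq_eq p q q
    rw [real_inner_self_eq_norm_sq, hp, hq, hpq] at this
    linarith
  have hd := inner_eq_one_sub_dist_sq hp hq
  rcases sq_eq_one_iff.1 hsq with h1 | h1
  · left; nlinarith [dist_nonneg (x := p) (y := q)]
  · right; nlinarith [dist_nonneg (x := p) (y := q)]

/-- For unit vectors: if `z` is nearer to `p` than `w` is and lies strictly on the side of
`ℝ ∙ p` where `w` lies, then `z` is nearer to `w` than `p` is. -/
lemma inner_lt_inner_of_cross_mul_cross_nonneg {p w z : Plane} (hp : ‖p‖ = 1) (hw : ‖w‖ = 1)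
    (hz : ‖z‖ = 1) (hside : 0 ≤ cross p w * cross p z) (hz0 : cross p z ≠ 0)
    (hpz : ⟪p, w⟫ < ⟪p, z⟫) : ⟪w, p⟫ < ⟪w, z⟫ := by
  have hw' := inner_mul_norm_sq_eq p w w
  have hz' := inner_mul_norm_sq_eq p z z
  have hwz := inner_mul_norm_sq_eq p w z
  simp only [real_inner_self_eq_norm_sq, hp, hw, hz, one_pow, mul_one] at hw' hz' hwz
  rw [real_inner_comm, hwz]
  exact lt_mul_add_mul_of_sq_add_sq_eq_one (by linear_combination -hw')
    (by linear_combination -hz') hside hz0 hpz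

/-- The points `p ∈ h` near which (within `ρ`) all of `h` lies weakly on the side of `ℝ ∙ p`
given by the sign of `ε`. -/
def oneSidedPoints (h : Set Plane) (ρ ε : ℝ) : Set Plane :=
  {p ∈ h | ∀ z ∈ h, dist z p < ρ → 0 ≤ ε * cross p z}

lemma finite_oneSidedPoints {h : Set Plane} (hsub : h ⊆ sphere 0 1) {ρ ε : ℝ} (hρ : 0 < ρ)
    (hρ2 : ρ ≤ 2) (hε : ε ≠ 0) : (oneSidedPoints h ρ ε).Finite := by
  refine finite_of_subset_isCompact_of_pairwise_le_dist (isCompact_sphere 0 1)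
    (fun p hp => hsub hp.1) hρ fun p hp q hq hpq => ?_
  by_contra! hlt
  have hpq' := hp.2 q hq.1 (by rwa [dist_comm])
  have hqp := hq.2 p hp.1 hlt
  rw [cross_swap] at hqp
  have hcross : cross p q = 0 :=
    (mul_eq_zero.1 (le_antisymm (by linarith) hpq')).resolve_left hε
  have hunit : ∀ x ∈ h, ‖x‖ = 1 := fun x hx => mem_sphere_zero_iff_norm.1 (hsub hx)
  rcases dist_eq_zero_or_two_of_cross_eq_zero (hunit p hp.1) (hunit q hq.1) hcross with hd | hd
  · exact hpq (dist_eq_zero.1 hd)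
  · linarith

lemma mem_oneSidedPoints_of_isMaxOn {h : Set Plane} (hsub : h ⊆ sphere 0 1) {ρ : ℝ}
    {p w : Plane} (hp : p ∈ h) (hw : ‖w‖ = 1) (hmax : IsMaxOn (fun z => ⟪w, z⟫) h p)
    (hρ : ρ ≤ dist w p) :
    p ∈ oneSidedPoints h ρ 1 ∪ oneSidedPoints h ρ (-1) := by
  have hunit : ∀ x ∈ h, ‖x‖ = 1 := fun x hx => mem_sphere_zero_iff_norm.1 (hsub hx)
  have hopp : ∀ z ∈ h, dist z p < ρ → cross p z ≠ 0 → cross p w * cross p z < 0 := by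
    intro z hz hzp hz0
    by_contra! hside
    have hcloser : ⟪p, w⟫ < ⟪p, z⟫ := by
      rw [inner_eq_one_sub_dist_sq (hunit p hp) hw,
        inner_eq_one_sub_dist_sq (hunit p hp) (hunit z hz), dist_comm p, dist_comm p]
      have := dist_nonneg (x := z) (y := p)
      nlinarith
    exact (inner_lt_inner_of_cross_mul_cross_nonneg (hunit p hp) hw (hunit z hz) hside hz0
      hcloser).not_ge (hmax hz)
  rcases le_or_gt 0 (cross p w) with hpw | hpw
  · refine Or.inr ⟨hp, fun z hz hzp => ?_⟩
    by_contra! hpos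
    nlinarith [hopp z hz hzp (by linarith)]
  · refine Or.inl ⟨hp, fun z hz hzp => ?_⟩
    by_contra! hneg
    nlinarith [hopp z hz hzp (by linarith)]

lemma convexHull_inter_ball_subset_of_net {h N F : Set Plane} (hcomp : IsCompact h)
    (hsub : h ⊆ sphere 0 1) {r ρ : ℝ} (hρ1 : ρ ≤ 1) (hρr : ρ ≤ (1 - r) / 2)
    (hNh : N ⊆ h) (hNcov : h ⊆ ⋃ x ∈ N, ball x ρ)
    (hF : N ∪ (oneSidedPoints h ρ 1 ∪ oneSidedPoints h ρ (-1)) ⊆ F) (hFf : F.Finite) :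
    convexHull ℝ h ∩ ball 0 r ⊆ convexHull ℝ F := by
  have hunit : ∀ x ∈ h, ‖x‖ = 1 := fun x hx => mem_sphere_zero_iff_norm.1 (hsub hx)
  rintro y ⟨hyh, hyr⟩
  by_contra hyF
  obtain ⟨q₀, hq₀⟩ : h.Nonempty := convexHull_nonempty_iff.1 ⟨y, hyh⟩
  obtain ⟨c, hcN, -⟩ := mem_iUnion₂.1 (hNcov hq₀)
  obtain ⟨w, hw, hsep⟩ := exists_norm_eq_one_forall_inner_lt (convex_convexHull ℝ F)
    (hFf.isCompact_convexHull (𝕜 := ℝ)).isClosed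
    ⟨c, subset_convexHull ℝ F (hF (Or.inl hcN))⟩ hyF
  obtain ⟨p, hp, hmax⟩ := hcomp.exists_isMaxOn ⟨q₀, hq₀⟩
    (continuous_const.inner continuous_id : Continuous fun z : Plane => ⟪w, z⟫).continuousOn
  have hyp : ⟪w, y⟫ ≤ ⟪w, p⟫ := by
    obtain ⟨z, hz, hyz⟩ := ((innerₛₗ ℝ w).convexOn convex_univ).exists_ge_of_mem_convexHull
      (subset_univ h) hyh
    exact hyz.trans (hmax hz)
  rcases lt_or_ge (dist w p) ρ with hwp | hwp
  · obtain ⟨q, hqN, hpq⟩ := mem_iUnion₂.1 (hNcov hp)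
    have hwq : dist w q < 2 * ρ := by linarith [dist_triangle w p q, mem_ball.1 hpq]
    have hqw : r ≤ ⟪w, q⟫ := by
      rw [inner_eq_one_sub_dist_sq hw (hunit q (hNh hqN))]
      have hρ0 : 0 ≤ ρ := dist_nonneg.trans hwp.le
      nlinarith [dist_nonneg (x := w) (y := q), mul_le_mul_of_nonneg_left hρ1 hρ0]
    have hyw : ⟪w, y⟫ < r := by
      have := real_inner_le_norm w y
      rw [hw, one_mul] at this
      linarith [mem_ball_zero_iff.1 hyr]
    linarith [hsep q (subset_convexHull ℝ F (hF (Or.inl hqN)))]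
  · have hpF : p ∈ F := hF (Or.inr (mem_oneSidedPoints_of_isMaxOn hsub hp hw hmax hwp))
    linarith [hsep p (subset_convexHull ℝ F hpF)]

theorem exists_finite_convexHull_inter_ball_subset {h : Set Plane} (hcl : IsClosed h)
    (hsub : h ⊆ sphere 0 1) {r : ℝ} (hr : r < 1) :
    ∃ F ⊆ h, F.Finite ∧ convexHull ℝ h ∩ ball 0 r ⊆ convexHull ℝ F := by
  have hcomp : IsCompact h := (isCompact_sphere 0 1).of_isClosed_subset hcl hsub
  obtain ⟨ρ, hρ, hρ1, hρr⟩ : ∃ ρ : ℝ, 0 < ρ ∧ ρ ≤ 1 ∧ ρ ≤ (1 - r) / 2 :=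
    ⟨min 1 ((1 - r) / 2), lt_min one_pos (by linarith), min_le_left _ _, min_le_right _ _⟩
  obtain ⟨N, hNh, hNf, hNcov⟩ := hcomp.finite_cover_balls hρ
  have hρ2 : ρ ≤ 2 := by linarith
  have hFf : (N ∪ (oneSidedPoints h ρ 1 ∪ oneSidedPoints h ρ (-1))).Finite :=
    hNf.union ((finite_oneSidedPoints hsub hρ hρ2 one_ne_zero).union
      (finite_oneSidedPoints hsub hρ hρ2 (by norm_num)))
  exact ⟨_, union_subset hNh (union_subset (fun p hp => hp.1) fun p hp => hp.1), hFf,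
    convexHull_inter_ball_subset_of_net hcomp hsub hρ1 hρr hNh hNcov subset_rfl hFf⟩

/-- Every point of the convex hull of a closed subset `h` of the unit circle
lying in the open unit disk has a neighborhood within `conv(h)` contained in
the convex hull of finitely many points of `h`; consequently every compact
subset of `conv(h) ∩ int(B²)` lies in the hull of a finite subset of `h`. -/
theorem stmt_14 (h : Set Plane) (hcl : IsClosed h)
    (hsub : h ⊆ Metric.sphere 0 1) :
    (∀ x ∈ convexHull ℝ h ∩ Metric.ball (0 : Plane) 1,
      ∃ F : Set Plane, F ⊆ h ∧ F.Finite ∧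
        ∃ U ∈ nhdsWithin x (convexHull ℝ h), U ⊆ convexHull ℝ F) ∧
    (∀ K : Set Plane, K ⊆ convexHull ℝ h ∩ Metric.ball (0 : Plane) 1 →
      IsCompact K → ∃ F : Set Plane, F ⊆ h ∧ F.Finite ∧ K ⊆ convexHull ℝ F) := by
  refine ⟨fun x ⟨_, hx⟩ => ?_, fun K hK hKc => ?_⟩
  · obtain ⟨r, hxr, hr⟩ := exists_between (mem_ball_zero_iff.1 hx)
    obtain ⟨F, hFh, hFf, hF⟩ := exists_finite_convexHull_inter_ball_subset hcl hsub hr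
    exact ⟨F, hFh, hFf, convexHull ℝ h ∩ ball 0 r,
      inter_mem_nhdsWithin _ (isOpen_ball.mem_nhds (mem_ball_zero_iff.2 hxr)), hF⟩
  · obtain ⟨r, hr, hKr⟩ := exists_lt_subset_ball hKc.isClosed (hK.trans inter_subset_right)
    obtain ⟨F, hFh, hFf, hF⟩ := exists_finite_convexHull_inter_ball_subset hcl hsub hr
    exact ⟨F, hFh, hFf, fun y hy => hF ⟨(hK hy).1, hKr hy⟩⟩
end

section
/- Let H be an upper semicontinuous decomposition of the circle S¹ = ∂B² into compact sets that is noncrossing: for distinct h₁, h₂ ∈ H, no element h₁ separates h₂ within S¹ (equivalently, the convex hulls of h₁ and h₂ in B² are disjoint). Let G be the decomposition of B² whose elements are the convex hulls conv(h) for h ∈ H together with singletons not covered by these hulls. Then the induced decomposition of ℝ² (extending G trivially) is upper semicontinuous, and each of its elements is cellular (a point or a compact convex set). -/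
/-!
Convex hulls of compact sets in finite dimension are compact by Carathéodory's theorem, which gives
cellularity. For upper semicontinuity, let `xₙ, yₙ ∈ conv hₙ` converge to `x₀, y₀`. Along a
subsequence some points `rₙ ∈ hₙ` converge to a point `R` of the circle, lying in some `h₀ ∈ H`;
upper semicontinuity of `H` together with disjointness then puts every subsequential limit of
points of the `hₙ` into `h₀`. If `x₀ ∉ conv h₀`, a linear functional `f` separates them; but the
maximum of `f` over `conv hₙ` is attained on `hₙ`, and these maximisers accumulate in `h₀`, a
contradiction. Elements that are singletons only matter when they occur eventually, and then they
force `x₀ = y₀`.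
-/

open Set Function Topology Filter

/-- A family of subsets is upper semicontinuous (in the sequential sense):
whenever `x n` and `y n` lie in a common element `g n` of the family and
`x n → x₀`, `y n → y₀`, the limits `x₀`, `y₀` lie in a common element. -/
def IsUSCFamily {α : Type*} [TopologicalSpace α] (G : Set (Set α)) : Prop :=
  ∀ (g : ℕ → Set α) (x y : ℕ → α) (x₀ y₀ : α),
    (∀ n, g n ∈ G) → (∀ n, x n ∈ g n) → (∀ n, y n ∈ g n) →
    Tendsto x atTop (nhds x₀) → Tendsto y atTop (nhds y₀) →
    ∃ g₀ ∈ G, x₀ ∈ g₀ ∧ y₀ ∈ g₀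

/-- The decomposition of the plane induced by a decomposition `H` of the unit
circle: convex hulls of the elements of `H`, plus singletons not covered by
these hulls. -/
def hullDecomposition (H : Set (Set Plane)) : Set (Set Plane) :=
  {g | ∃ h ∈ H, g = convexHull ℝ h} ∪
    {g | ∃ x ∉ ⋃ h ∈ H, convexHull ℝ h, g = ({x} : Set Plane)}

open Module

section Caratheodory

variable {𝕜 E : Type*} [Field 𝕜] [LinearOrder 𝕜] [IsStrictOrderedRing 𝕜] [AddCommGroup E]
  [Module 𝕜 E] [FiniteDimensional 𝕜 E]

/-- Carathéodory's theorem with a fixed number of points: unused slots get weight zero. -/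
theorem exists_fin_finrank_succ_of_mem_convexHull {s : Set E} {x : E}
    (hx : x ∈ convexHull 𝕜 s) :
    ∃ w ∈ stdSimplex 𝕜 (Fin (finrank 𝕜 E + 1)), ∃ z : Fin (finrank 𝕜 E + 1) → E,
      (∀ i, z i ∈ s) ∧ ∑ i, w i • z i = x := by
  obtain ⟨ι, _, z, w, hzs, hind, hw0, hw1, hwz⟩ := eq_pos_convex_span_of_mem_convexHull hx
  obtain ⟨e⟩ : Nonempty (ι ↪ Fin (finrank 𝕜 E + 1)) := by
    refine Function.Embedding.nonempty_of_card_le ?_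
    simpa using hind.card_le_finrank_succ.trans (Nat.succ_le_succ (Submodule.finrank_le _))
  obtain ⟨i₀⟩ : Nonempty ι := by
    by_contra h
    simp [not_nonempty_iff.mp h] at hw1
  set w' := extend e w 0
  have hw'_out : ∀ j ∉ range e, w' j = 0 := fun j hj => extend_apply' _ _ _ (by simpa using hj)
  have hw'_e : ∀ i, w i = w' (e i) := fun i => (e.injective.extend_apply _ _ _).symm
  refine ⟨w', ⟨fun j => ?_, ?_⟩, extend e z fun _ => z i₀, fun j => ?_, ?_⟩
  · by_cases hj : j ∈ range e
    · obtain ⟨i, rfl⟩ := hj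
      exact hw'_e i ▸ (hw0 i).le
    · exact (hw'_out j hj).ge
  · rw [← hw1]
    exact (Fintype.sum_of_injective e e.injective w w' hw'_out hw'_e).symm
  · by_cases hj : j ∈ range e
    · obtain ⟨i, rfl⟩ := hj
      exact e.injective.extend_apply z _ i ▸ hzs (mem_range_self i)
    · exact extend_apply' z _ j (by simpa using hj) ▸ hzs (mem_range_self i₀)
  · rw [← hwz]
    refine (Fintype.sum_of_injective e e.injective _ _ (fun j hj => ?_) fun i => ?_).symm
    · rw [hw'_out j hj, zero_smul]
    · rw [← hw'_e, e.injective.extend_apply]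

end Caratheodory

theorem IsCompact.convexHull {E : Type*} [AddCommGroup E] [Module ℝ E] [TopologicalSpace E]
    [ContinuousAdd E] [ContinuousSMul ℝ E] [FiniteDimensional ℝ E] {s : Set E}
    (hs : IsCompact s) : IsCompact (convexHull ℝ s) := by
  set d := finrank ℝ E + 1
  have himage : _root_.convexHull ℝ s = (fun q : (Fin d → ℝ) × (Fin d → E) => ∑ i, q.1 i • q.2 i) ''
      (stdSimplex ℝ (Fin d) ×ˢ univ.pi fun _ => s) := by
    refine Subset.antisymm (fun x hx => ?_) ?_
    · obtain ⟨w, hw, z, hzs, rfl⟩ := exists_fin_finrank_succ_of_mem_convexHull hx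
      exact ⟨(w, z), ⟨hw, fun i _ => hzs i⟩, rfl⟩
    · rintro x ⟨⟨w, z⟩, ⟨⟨hw0, hw1⟩, hzs⟩, rfl⟩
      exact mem_convexHull_of_exists_fintype w z hw0 hw1 (fun i => hzs i (mem_univ i)) rfl
  rw [himage]
  refine ((isCompact_stdSimplex ℝ (Fin d)).prod (isCompact_univ_pi fun _ => hs)).image ?_
  fun_prop

namespace IsUSCFamily

section Topological

variable {α : Type*} [TopologicalSpace α] {G : Set (Set α)}

theorem mem_of_tendsto (hG : IsUSCFamily G) (hdisj : G.PairwiseDisjoint id) {g : ℕ → Set α}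
    (hg : ∀ n, g n ∈ G) {r : ℕ → α} {R : α} (hr : ∀ n, r n ∈ g n)
    (hR : Tendsto r atTop (𝓝 R)) {g₀ : Set α} (hg₀ : g₀ ∈ G) (hRg₀ : R ∈ g₀) {s : ℕ → α}
    {S : α} (hs : ∀ n, s n ∈ g n) (hS : Tendsto s atTop (𝓝 S)) : S ∈ g₀ := by
  obtain ⟨e, he, hRe, hSe⟩ := hG g r s R S hg hr hs hR hS
  obtain rfl : e = g₀ := hdisj.elim he hg₀ (not_disjoint_iff.mpr ⟨R, hRe, hRg₀⟩)
  exact hSe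

theorem union_singletons [T2Space α] (hG : IsUSCFamily G) :
    IsUSCFamily (G ∪ {g | ∃ x ∉ ⋃₀ G, g = {x}}) := by
  intro g x y x₀ y₀ hg hx hy hx₀ hy₀
  by_cases hfreq : ∃ᶠ n in atTop, g n ∈ G
  · obtain ⟨φ, hφ, hφG⟩ := extraction_of_frequently_atTop hfreq
    obtain ⟨g₀, hg₀, hxg₀, hyg₀⟩ := hG (g ∘ φ) (x ∘ φ) (y ∘ φ) x₀ y₀ hφG (fun n => hx _)
      (fun n => hy _) (hx₀.comp hφ.tendsto_atTop) (hy₀.comp hφ.tendsto_atTop)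
    exact ⟨g₀, Or.inl hg₀, hxg₀, hyg₀⟩
  have hxy : x =ᶠ[atTop] y := (not_frequently.mp hfreq).mono fun n hn => by
    obtain hn' | ⟨z, -, hz⟩ := hg n
    · exact absurd hn' hn
    · have hxn := hx n
      have hyn := hy n
      rw [hz, mem_singleton_iff] at hxn hyn
      rw [hxn, hyn]
  obtain rfl : x₀ = y₀ := tendsto_nhds_unique (hx₀.congr' hxy) hy₀
  by_cases hcov : x₀ ∈ ⋃₀ G
  · obtain ⟨g₀, hg₀, hxg₀⟩ := hcov
    exact ⟨g₀, Or.inl hg₀, hxg₀, hxg₀⟩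
  · exact ⟨{x₀}, Or.inr ⟨x₀, hcov, rfl⟩, rfl, rfl⟩

end Topological

section Normed

variable {E : Type*} [NormedAddCommGroup E] [NormedSpace ℝ E]

theorem mem_of_tendsto_of_mem_convexHull {K C : Set E} {h : ℕ → Set E} (hK : IsCompact K)
    (hhK : ∀ n, h n ⊆ K) (hh : ∀ n, IsCompact (h n)) (hC : Convex ℝ C) (hCc : IsClosed C)
    (hlim : ∀ φ : ℕ → ℕ, StrictMono φ → ∀ (s : ℕ → E) (S : E),
      (∀ n, s n ∈ h (φ n)) → Tendsto s atTop (𝓝 S) → S ∈ C)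
    {w : ℕ → E} {w₀ : E} (hw : ∀ n, w n ∈ convexHull ℝ (h n))
    (hw₀ : Tendsto w atTop (𝓝 w₀)) : w₀ ∈ C := by
  by_contra hout
  obtain ⟨f, u, hfC, hfw₀⟩ := geometric_hahn_banach_closed_point hC hCc hout
  have hmax : ∀ n, ∃ p ∈ h n, f (w n) ≤ f p := fun n => by
    obtain ⟨p, hp, hpmax⟩ := (hh n).exists_isMaxOn (convexHull_nonempty_iff.mp ⟨_, hw n⟩)
      f.continuous.continuousOn
    exact ⟨p, hp, convexHull_min (fun q hq => hpmax hq)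
      (convex_halfSpace_le f.toLinearMap.isLinear _) (hw n)⟩
  choose p hp hwp using hmax
  obtain ⟨P, -, φ, hφ, hpφ⟩ := hK.tendsto_subseq fun n => hhK n (hp n)
  have hfP : f w₀ ≤ f P := le_of_tendsto_of_tendsto'
    ((f.continuous.tendsto _).comp (hw₀.comp hφ.tendsto_atTop))
    ((f.continuous.tendsto _).comp hpφ) fun n => hwp (φ n)
  linarith [hfC P (hlim φ hφ (p ∘ φ) P (fun n => hp _) hpφ)]

theorem image_convexHull [FiniteDimensional ℝ E] {H : Set (Set E)} {K : Set E}
    (hH : IsUSCFamily H) (hdisj : H.PairwiseDisjoint id) (hcpt : ∀ h ∈ H, IsCompact h)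
    (hK : IsCompact K) (hHK : ⋃₀ H ⊆ K) : IsUSCFamily (convexHull ℝ '' H) := by
  intro g x y x₀ y₀ hg hx hy hx₀ hy₀
  choose h hhH hhg using hg
  obtain rfl : g = fun n => convexHull ℝ (h n) := funext fun n => (hhg n).symm
  have hhK : ∀ n, h n ⊆ K := fun n => (subset_sUnion_of_mem (hhH n)).trans hHK
  choose r hr using fun n => convexHull_nonempty_iff.mp ⟨x n, hx n⟩
  obtain ⟨R, -, ψ, hψ, hrψ⟩ := hK.tendsto_subseq fun n => hhK n (hr n)
  obtain ⟨h₀, hh₀, hRh₀, -⟩ := hH (h ∘ ψ) (r ∘ ψ) (r ∘ ψ) R R (fun n => hhH _) (fun n => hr _)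
    (fun n => hr _) hrψ hrψ
  have hlim : ∀ φ : ℕ → ℕ, StrictMono φ → ∀ (s : ℕ → E) (S : E),
      (∀ n, s n ∈ h (ψ (φ n))) → Tendsto s atTop (𝓝 S) → S ∈ convexHull ℝ h₀ :=
    fun φ hφ s S hs hS => subset_convexHull ℝ h₀ <| hH.mem_of_tendsto hdisj (fun n => hhH _)
      (fun n => hr _) (hrψ.comp hφ.tendsto_atTop) hh₀ hRh₀ hs hS
  have hmem := fun {z : ℕ → E} {z₀ : E} (hz : ∀ n, z n ∈ convexHull ℝ (h n))
      (hz₀ : Tendsto z atTop (𝓝 z₀)) =>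
    mem_of_tendsto_of_mem_convexHull hK (fun n => hhK (ψ n)) (fun n => hcpt _ (hhH (ψ n)))
      (convex_convexHull ℝ h₀) (hcpt h₀ hh₀).convexHull.isClosed hlim (fun n => hz (ψ n))
      (hz₀.comp hψ.tendsto_atTop)
  exact ⟨convexHull ℝ h₀, mem_image_of_mem _ hh₀, hmem hx hx₀, hmem hy hy₀⟩

end Normed

end IsUSCFamily

theorem stmt_15_general (H : Set (Set Plane))
    (hcover : ⋃₀ H = Metric.sphere (0 : Plane) 1)
    (hcpt : ∀ h ∈ H, IsCompact h)
    (hdisj : H.Pairwise fun h₁ h₂ => Disjoint h₁ h₂)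
    (husc : IsUSCFamily H) :
    IsUSCFamily (hullDecomposition H) ∧
      ∀ g ∈ hullDecomposition H,
        g.Subsingleton ∨ (IsCompact g ∧ Convex ℝ g) := by
  have hdecomp : hullDecomposition H =
      convexHull ℝ '' H ∪ {g | ∃ x ∉ ⋃₀ (convexHull ℝ '' H), g = {x}} := by
    rw [hullDecomposition, sUnion_image]
    congr 1
    ext g
    simp [eq_comm]
  refine ⟨hdecomp ▸ (husc.image_convexHull hdisj hcpt (isCompact_sphere 0 1)
    hcover.subset).union_singletons, ?_⟩
  rintro g (⟨h, hh, rfl⟩ | ⟨x, -, rfl⟩)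
  · exact Or.inr ⟨(hcpt h hh).convexHull, convex_convexHull ℝ h⟩
  · exact Or.inl subsingleton_singleton

/-- If `H` is an upper semicontinuous decomposition of the circle `S¹` into
compact sets which is noncrossing (the convex hulls of distinct elements are
disjoint), then the induced decomposition of the plane by convex hulls (extended
trivially by singletons) is upper semicontinuous, and each of its elements is
cellular: a point or a compact convex set. -/
theorem stmt_15 (H : Set (Set Plane))
    (hcover : ⋃₀ H = Metric.sphere (0 : Plane) 1)
    (hne : ∀ h ∈ H, h.Nonempty) (hcpt : ∀ h ∈ H, IsCompact h)
    (hdisj : H.Pairwise fun h₁ h₂ => Disjoint h₁ h₂)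
    (husc : IsUSCFamily H)
    (hnoncross : H.Pairwise fun h₁ h₂ =>
      convexHull ℝ h₁ ∩ convexHull ℝ h₂ = ∅) :
    IsUSCFamily (hullDecomposition H) ∧
      ∀ g ∈ hullDecomposition H,
        g.Subsingleton ∨ (IsCompact g ∧ Convex ℝ g) :=
  stmt_15_general H hcover hcpt hdisj husc
end

section
/- Let f' : S¹ → M' be a continuous map into a metric space M' that extends to a continuous map F' : B² → M'. Define H to be the collection of sets of the form C ∩ S¹ where C ranges over the connected components of point-preimages F'⁻¹(x), x ∈ M', that meet S¹. Then H is an upper semicontinuous decomposition of S¹ into compact sets, f' is constant on each element of H, and H is noncrossing: if h₁ = C₁ ∩ S¹ and h₂ = C₂ ∩ S¹ are distinct elements, then h₁ does not separate h₂ on S¹. -/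
open Set Function Topology Filter

/-- The decomposition `H` of the circle induced by a map `F'` on the closed
disk: the traces on `S¹` of the connected components of point preimages of `F'`
in `B²` that meet `S¹`. -/
def traceDecomp {M' : Type*} (F' : Plane → M') : Set (Set Plane) :=
  {s | ∃ p ∈ Metric.closedBall (0 : Plane) 1,
    s = connectedComponentIn (Metric.closedBall 0 1 ∩ F' ⁻¹' {F' p}) p ∩
        Metric.sphere 0 1 ∧
    s.Nonempty}

noncomputable section AuxiliaryLemmas

lemma exp_real_mul_I (x : ℝ) :
    Complex.exp ((x:ℂ) * Complex.I) = ((Real.cos x : ℝ):ℂ) + ((Real.sin x : ℝ):ℂ) * Complex.I := by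
  rw [Complex.exp_mul_I, Complex.ofReal_cos, Complex.ofReal_sin]

/-- key identity: e^{iα} - e^{iθ} = 2 sin((θ-α)/2) e^{i((α+θ)/2 - π/2)} -/
lemma exp_sub_exp (a t : ℝ) :
    Complex.exp ((a:ℂ)*Complex.I) - Complex.exp ((t:ℂ)*Complex.I)
      = ((2*Real.sin ((t-a)/2) : ℝ):ℂ) * Complex.exp ((((a+t)/2 - Real.pi/2 : ℝ):ℂ) * Complex.I) := by
  rw [exp_real_mul_I, exp_real_mul_I, exp_real_mul_I]
  have hc : Real.cos ((a+t)/2 - Real.pi/2) = Real.sin ((a+t)/2) := by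
    rw [Real.cos_sub]; simp
  have hs : Real.sin ((a+t)/2 - Real.pi/2) = -Real.cos ((a+t)/2) := by
    rw [Real.sin_sub]; simp
  rw [hc, hs]
  have h1 : Real.cos a - Real.cos t = 2 * Real.sin ((t-a)/2) * Real.sin ((a+t)/2) := by
    rw [Real.cos_sub_cos, show (a - t)/2 = -((t-a)/2) by ring, Real.sin_neg]; ring
  have h2 : Real.sin a - Real.sin t = -(2 * Real.sin ((t-a)/2) * Real.cos ((a+t)/2)) := by
    rw [Real.sin_sub_sin, show (a - t)/2 = -((t-a)/2) by ring, Real.sin_neg]; ring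
  apply Complex.ext <;>
    simp only [Complex.add_re, Complex.add_im, Complex.mul_re, Complex.mul_im,
      Complex.sub_re, Complex.sub_im, Complex.ofReal_re, Complex.ofReal_im,
      Complex.I_re, Complex.I_im] <;>
    ring_nf <;> ring_nf at h1 h2 <;> linarith

/-- corner congruence -/
lemma corner_congr {w : ℂ} {R φ : ℝ} (hR : 0 < R)
    (hw : Complex.exp w = (R:ℂ) * Complex.exp ((φ:ℂ)*Complex.I)) :
    ∃ n : ℤ, w.im = φ + 2*Real.pi*n := by
  have h2 : Complex.exp w = Complex.exp ((Real.log R : ℂ) + (φ:ℂ)*Complex.I) := by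
    rw [Complex.exp_add, hw, ← Complex.ofReal_exp, Real.exp_log hR]
  obtain ⟨n, hn⟩ := Complex.exp_eq_exp_iff_exists_int.1 h2
  refine ⟨n, ?_⟩
  have h3 := congrArg Complex.im hn
  simp [Complex.add_im, Complex.mul_im] at h3
  rw [h3]; ring

/-- If a continuous real function avoids the lattice c + 2πℤ on ℝ, then no lattice
point lies between its values at 0 and 1. -/
lemma no_lattice_between {u : ℝ → ℝ} (hu : Continuous u) {c : ℝ}
    (havoid : ∀ s : ℝ, ∀ n : ℤ, u s ≠ c + 2*Real.pi*n) (n : ℤ) :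
    c + 2*Real.pi*n ∉ uIcc (u 0) (u 1) := by
  intro hmem
  have h := intermediate_value_uIcc (f := u) (a := (0:ℝ)) (b := 1) hu.continuousOn
  obtain ⟨s, _, hs⟩ := h hmem
  exact havoid s n hs

/-- Integer bookkeeping: two values congruent to `c + oᵢ` mod `2π` with offsets in
`(-2π, 0)`, no lattice point `c + 2πℤ` between them, must have equal integers. -/
lemma key_int {c o₁ o₂ y₁ y₂ : ℝ} {k₁ k₂ : ℤ}
    (h₁ : y₁ = c + o₁ + 2*Real.pi*k₁) (ho₁ : -(2*Real.pi) < o₁) (ho₁' : o₁ < 0)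
    (h₂ : y₂ = c + o₂ + 2*Real.pi*k₂) (ho₂ : -(2*Real.pi) < o₂) (ho₂' : o₂ < 0)
    (hno : ∀ n : ℤ, c + 2*Real.pi*n ∉ uIcc y₁ y₂) : k₁ = k₂ := by
  have hπ := Real.pi_pos
  by_contra hne
  rcases lt_or_gt_of_ne hne with h | h
  · have hk : (k₁:ℝ) + 1 ≤ (k₂:ℝ) := by exact_mod_cast Int.add_one_le_iff.2 h
    exact hno k₁ (Set.mem_uIcc.2 (Or.inl ⟨by nlinarith, by nlinarith⟩))
  · have hk : (k₂:ℝ) + 1 ≤ (k₁:ℝ) := by exact_mod_cast Int.add_one_le_iff.2 h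
    exact hno k₂ (Set.mem_uIcc.2 (Or.inr ⟨by nlinarith, by nlinarith⟩))

lemma mem_slit_of_ratio {num den : ℂ} {m : ℝ} (hm : 0 < m)
    (hden : m ≤ norm den) (hnum : m ≤ norm num)
    (hclose : norm (num - den) < m) :
    num / den ∈ Complex.slitPlane ∧ num / den ≠ 0 := by
  have hden0 : den ≠ 0 := by
    intro h; rw [h] at hden; simp at hden; linarith
  have hnum0 : num ≠ 0 := by
    intro h; rw [h] at hnum; simp at hnum; linarith
  have habs : norm (num / den - 1) < 1 := by
    have : num / den - 1 = (num - den) / den := by field_simp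
    rw [this, norm_div]
    rw [div_lt_one (norm_pos_iff.2 hden0)]
    exact lt_of_lt_of_le hclose hden
  have hre : 0 < (num / den).re := by
    have h1 := Complex.abs_re_le_norm (num / den - 1)
    have h2 : (num / den - 1).re = (num / den).re - 1 := by simp
    rw [h2] at h1
    have := abs_le.1 h1
    linarith [this.1]
  exact ⟨Or.inl hre, div_ne_zero hnum0 hden0⟩

/-- 1-dimensional continuous logarithm for nonvanishing maps clamped to `[0,1]`. -/
lemma exists_log_line {f : ℝ → ℂ} (hf : Continuous f) {m : ℝ} (hm : 0 < m)
    (hbd : ∀ s, m ≤ norm (f s)) {η : ℝ} (hη : 0 < η)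
    (hosc : ∀ s s' : ℝ, |s - s'| ≤ η → norm (f s - f s') < m)
    (hclamp : ∀ s, f s = f (max 0 (min 1 s))) :
    ∃ g : ℝ → ℂ, Continuous g ∧ ∀ s, Complex.exp (g s) = f s := by
  have hne : ∀ s, f s ≠ 0 := fun s h => by
    have := hbd s; rw [h] at this; simp at this; linarith
  have main : ∀ j : ℕ, ∃ g : ℝ → ℂ, Continuous g ∧
      ∀ s ≤ (j:ℝ)*η, Complex.exp (g s) = f s := by
    intro j
    induction j with
    | zero =>
      refine ⟨fun _ => Complex.log (f 0), continuous_const, fun s hs => ?_⟩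
      have h1 : max 0 (min 1 s) = 0 := by
        simp at hs
        rw [min_eq_right (hs.trans zero_le_one), max_eq_left hs]
      rw [Complex.exp_log (hne 0), hclamp s, h1]
    | succ j ih =>
      obtain ⟨g, hg, hexp⟩ := ih
      set c : ℝ := (j:ℝ)*η with hc
      set c' : ℝ := c + η with hc'
      set q : ℝ → ℂ := fun s => f (min (max s c) c') / f c with hq
      have harg : ∀ s : ℝ, |min (max s c) c' - c| ≤ η := by
        intro s
        rw [abs_le]
        constructor
        · have : c ≤ min (max s c) c' := le_min (le_max_right _ _) (by simp [hc']; linarith)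
          linarith
        · have : min (max s c) c' ≤ c' := min_le_right _ _
          simp only [hc'] at this ⊢; linarith
      have hslit : ∀ s : ℝ, q s ∈ Complex.slitPlane ∧ q s ≠ 0 := fun s =>
        mem_slit_of_ratio hm (hbd c) (hbd _) (hosc _ _ (harg s))
      have hqcont : Continuous q := by
        apply Continuous.div_const
        exact hf.comp (((continuous_id.max continuous_const).min continuous_const))
      have hlogq : Continuous fun s => Complex.log (q s) :=
        continuous_iff_continuousAt.2 fun s =>
          (continuousAt_clog (hslit s).1).comp hqcont.continuousAt
      have hq_at_c : q c = 1 := by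
        have : min (max c c) c' = c := by
          rw [max_self, min_eq_left (by simp [hc']; linarith)]
        simp only [hq, this]
        exact div_self (hne c)
      refine ⟨fun s => if s ≤ c then g s else g c + Complex.log (q s), ?_, ?_⟩
      · apply Continuous.if_le hg (continuous_const.add hlogq) continuous_id continuous_const
        intro s hs
        subst hs
        simp only [Pi.add_apply, hq_at_c, Complex.log_one, add_zero]
      · intro s hs
        push_cast at hs
        dsimp only
        by_cases hsc : s ≤ c
        · rw [if_pos hsc]; exact hexp s hsc
        · rw [if_neg hsc]
          push_neg at hsc
          have hs' : s ≤ c' := by simp only [hc']; linarith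
          have hmin : min (max s c) c' = s := by
            rw [max_eq_left hsc.le, min_eq_left hs']
          rw [Complex.exp_add, Complex.exp_log (hslit s).2, hexp c (le_refl c)]
          simp only [hq, hmin]
          rw [mul_div_cancel₀ _ (hne c)]
  obtain ⟨j, hj⟩ := exists_nat_ge (1/η)
  obtain ⟨g, hg, hexp⟩ := main j
  have hj1 : (1:ℝ) ≤ (j:ℝ)*η := by
    rw [div_le_iff₀ hη] at hj; linarith
  refine ⟨fun s => g (max 0 (min 1 s)), hg.comp ((continuous_const.max (continuous_const.min continuous_id))), fun s => ?_⟩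
  rw [hexp _ ?_, ← hclamp s]
  calc max 0 (min 1 s) ≤ 1 := by
        apply max_le zero_le_one (min_le_left _ _)
    _ ≤ (j:ℝ)*η := hj1

/-- 2-dimensional continuous logarithm on a strip-by-strip induction. -/
lemma exists_log_square {G : ℝ × ℝ → ℂ} (hG : Continuous G) {m : ℝ} (hm : 0 < m)
    (hbd : ∀ z, m ≤ norm (G z)) {η : ℝ} (hη : 0 < η)
    (hosc : ∀ s t t' : ℝ, |t - t'| ≤ η → norm (G (s,t) - G (s,t')) < m)
    (hclamp : ∀ s t : ℝ, G (s,t) = G (s, max 0 (min 1 t)))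
    {L₀ : ℝ → ℂ} (hL₀ : Continuous L₀) (hexp₀ : ∀ s, Complex.exp (L₀ s) = G (s, 0)) :
    ∃ g : ℝ × ℝ → ℂ, Continuous g ∧ ∀ z, Complex.exp (g z) = G z := by
  have hne : ∀ z, G z ≠ 0 := fun z h => by
    have := hbd z; rw [h] at this; simp at this; linarith
  have main : ∀ j : ℕ, ∃ g : ℝ × ℝ → ℂ, Continuous g ∧
      ∀ s t : ℝ, t ≤ (j:ℝ)*η → Complex.exp (g (s,t)) = G (s,t) := by
    intro j
    induction j with
    | zero =>
      refine ⟨fun z => L₀ z.1, hL₀.comp continuous_fst, fun s t ht => ?_⟩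
      have h1 : max 0 (min 1 t) = 0 := by
        simp at ht
        rw [min_eq_right (ht.trans zero_le_one), max_eq_left ht]
      rw [hexp₀ s, hclamp s t, h1]
    | succ j ih =>
      obtain ⟨g, hg, hexp⟩ := ih
      set c : ℝ := (j:ℝ)*η with hc
      set c' : ℝ := c + η with hc'
      set q : ℝ × ℝ → ℂ := fun z => G (z.1, min (max z.2 c) c') / G (z.1, c) with hq
      have harg : ∀ t : ℝ, |min (max t c) c' - c| ≤ η := by
        intro t
        rw [abs_le]
        constructor
        · have : c ≤ min (max t c) c' := le_min (le_max_right _ _) (by simp [hc']; linarith)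
          linarith
        · have : min (max t c) c' ≤ c' := min_le_right _ _
          simp only [hc'] at this ⊢; linarith
      have hslit : ∀ z : ℝ × ℝ, q z ∈ Complex.slitPlane ∧ q z ≠ 0 := fun z =>
        mem_slit_of_ratio hm (hbd _) (hbd _) (hosc _ _ _ (harg z.2))
      have hqcont : Continuous q := by
        apply Continuous.div
        · exact hG.comp (continuous_fst.prodMk
            ((continuous_snd.max continuous_const).min continuous_const))
        · exact hG.comp (continuous_fst.prodMk continuous_const)
        · exact fun z => hne _
      have hlogq : Continuous fun z => Complex.log (q z) :=
        continuous_iff_continuousAt.2 fun z =>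
          (continuousAt_clog (hslit z).1).comp hqcont.continuousAt
      have hq_at_c : ∀ s : ℝ, q (s, c) = 1 := by
        intro s
        have h1 : min (max c c) c' = c := by
          rw [max_self, min_eq_left (by simp [hc']; linarith)]
        simp only [hq, h1]
        exact div_self (hne _)
      refine ⟨fun z => if z.2 ≤ c then g z else g (z.1, c) + Complex.log (q z), ?_, ?_⟩
      · apply Continuous.if_le hg
          ((hg.comp (continuous_fst.prodMk continuous_const)).add hlogq)
          continuous_snd continuous_const
        intro z hz
        have hz2 : z = (z.1, c) := by rw [← hz]
        rw [hz2]; simp only [Pi.add_apply, Function.comp_apply, hq_at_c, Complex.log_one, add_zero]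
      · intro s t ht
        push_cast at ht
        dsimp only
        by_cases hsc : t ≤ c
        · rw [if_pos hsc]; exact hexp s t hsc
        · rw [if_neg hsc]
          push_neg at hsc
          have hs' : t ≤ c' := by simp only [hc']; linarith
          have hmin : min (max t c) c' = t := by
            rw [max_eq_left hsc.le, min_eq_left hs']
          rw [Complex.exp_add, Complex.exp_log (hslit (s,t)).2, hexp s c (le_refl c)]
          simp only [hq, hmin]
          rw [mul_div_cancel₀ _ (hne _)]
  obtain ⟨j, hj⟩ := exists_nat_ge (1/η)
  obtain ⟨g, hg, hexp⟩ := main j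
  have hj1 : (1:ℝ) ≤ (j:ℝ)*η := by
    rw [div_le_iff₀ hη] at hj; linarith
  refine ⟨fun z => g (z.1, max 0 (min 1 z.2)),
    hg.comp (continuous_fst.prodMk
      (continuous_const.max (continuous_const.min continuous_snd))), fun z => ?_⟩
  rw [hexp _ _ ?_, ← hclamp z.1 z.2]
  calc max 0 (min 1 z.2) ≤ 1 := max_le zero_le_one (min_le_left _ _)
    _ ≤ (j:ℝ)*η := hj1

lemma exists_pos_dist {X : Type*} [MetricSpace X] {K L : Set X}
    (hK : IsCompact K) (hKne : K.Nonempty) (hLne : L.Nonempty) (hLclosed : IsClosed L)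
    (hdisj : ∀ x ∈ K, x ∉ L) :
    ∃ d > 0, ∀ x ∈ K, ∀ y ∈ L, d ≤ dist x y := by
  obtain ⟨x₀, hx₀, hmin'⟩ := hK.exists_isMinOn hKne (Metric.continuous_infDist_pt L).continuousOn
  have hmin : ∀ x ∈ K, Metric.infDist x₀ L ≤ Metric.infDist x L := fun x hx => hmin' hx
  refine ⟨Metric.infDist x₀ L, ?_, fun x hx y hy =>
    le_trans (hmin x hx) (Metric.infDist_le_dist_of_mem hy)⟩
  rcases (Metric.infDist_nonneg (s := L) (x := x₀)).lt_or_eq with h | h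
  · exact h
  · exfalso
    apply hdisj x₀ hx₀
    rw [← hLclosed.closure_eq]
    exact (Metric.mem_closure_iff_infDist_zero hLne).2 h.symm

lemma isPathConnected_thickening {E : Type*} [NormedAddCommGroup E] [NormedSpace ℝ E]
    {L : Set E} (hL : IsPreconnected L) (hne : L.Nonempty) {r : ℝ} (hr : 0 < r) :
    IsPathConnected (Metric.thickening r L) := by
  obtain ⟨y₀, hy₀⟩ := hne
  have hsub : L ⊆ Metric.thickening r L := Metric.self_subset_thickening hr L
  have hpre : IsPreconnected (Metric.thickening r L) := by
    have heq : Metric.thickening r L = ⋃₀ {A | ∃ y ∈ L, A = L ∪ Metric.ball y r} := by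
      ext x
      constructor
      · intro hx
        obtain ⟨y, hy, hd⟩ := Metric.mem_thickening_iff.1 hx
        exact ⟨L ∪ Metric.ball y r, ⟨y, hy, rfl⟩, Or.inr (Metric.mem_ball.2 hd)⟩
      · rintro ⟨A, ⟨y, hy, rfl⟩, hx | hx⟩
        · exact hsub hx
        · exact Metric.mem_thickening_iff.2 ⟨y, hy, Metric.mem_ball.1 hx⟩
    rw [heq]
    apply isPreconnected_sUnion y₀
    · rintro A ⟨y, hy, rfl⟩; exact Or.inl hy₀
    · rintro A ⟨y, hy, rfl⟩
      exact IsPreconnected.union y hy (Metric.mem_ball_self hr) hL (convex_ball y r).isPreconnected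
  exact (Metric.isOpen_thickening.isConnected_iff_isPathConnected).1
    ⟨⟨y₀, hsub hy₀⟩, hpre⟩

lemma im_lattice_exp {w : ℂ} {c : ℝ} {n : ℤ} (h : w.im = c + 2*Real.pi*n) :
    Complex.exp w = ((Real.exp w.re : ℝ):ℂ) * Complex.exp ((c:ℂ)*Complex.I) := by
  calc Complex.exp w = Complex.exp (↑w.re + ↑w.im * Complex.I) := by rw [Complex.re_add_im]
    _ = Complex.exp ↑w.re * Complex.exp (↑w.im * Complex.I) := Complex.exp_add _ _
    _ = ((Real.exp w.re : ℝ):ℂ) * Complex.exp ((c:ℂ)*Complex.I) := by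
        rw [← Complex.ofReal_exp, h]
        congr 1
        push_cast
        rw [add_mul, Complex.exp_add,
          show (2*(Real.pi:ℂ)*(n:ℂ))*Complex.I = (n:ℂ)*(2*(Real.pi:ℂ)*Complex.I) by ring,
          Complex.exp_int_mul_two_pi_mul_I, mul_one]

lemma exp_add_pi {c : ℝ} :
    Complex.exp (((c+Real.pi : ℝ):ℂ)*Complex.I) = -Complex.exp ((c:ℂ)*Complex.I) := by
  push_cast
  rw [add_mul, Complex.exp_add, Complex.exp_pi_mul_I]
  ring

lemma edge1 {c m r E : ℝ} {X : ℂ} (hE : 0 < E)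
    (hfact : X - Complex.exp ((c:ℂ)*Complex.I) = (E:ℂ) * Complex.exp ((c:ℂ)*Complex.I))
    (hX : norm X < 1 + r)
    (hm : m ≤ norm (X - Complex.exp ((c:ℂ)*Complex.I))) (hrm : r < m) : False := by
  have hXeq : X = ((1+E:ℝ):ℂ) * Complex.exp ((c:ℂ)*Complex.I) := by
    have := sub_eq_iff_eq_add.1 hfact
    rw [this]; push_cast; ring
  have habsX : norm X = 1 + E := by
    rw [hXeq, norm_mul, Complex.norm_real, Real.norm_eq_abs, Complex.norm_exp_ofReal_mul_I, mul_one,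
      abs_of_pos (by linarith)]
  have hEm : m ≤ E := by
    rw [hfact, norm_mul, Complex.norm_real, Real.norm_eq_abs, Complex.norm_exp_ofReal_mul_I, mul_one,
      abs_of_pos hE] at hm
    exact hm
  linarith

lemma edge2 {c m r E : ℝ} {Y : ℂ} (hE : 0 < E)
    (hfact : Complex.exp ((c:ℂ)*Complex.I) - Y
      = (E:ℂ) * Complex.exp (((c+Real.pi : ℝ):ℂ)*Complex.I))
    (hY : norm Y < 1 + r)
    (hm : m ≤ norm (Complex.exp ((c:ℂ)*Complex.I) - Y)) (hrm : r < m) : False := by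
  rw [exp_add_pi] at hfact
  have hYeq : Y = ((1+E:ℝ):ℂ) * Complex.exp ((c:ℂ)*Complex.I) := by
    have : Y = Complex.exp ((c:ℂ)*Complex.I) - (E:ℂ) * (-Complex.exp ((c:ℂ)*Complex.I)) := by
      rw [← hfact]; ring
    rw [this]; push_cast; ring
  have habsY : norm Y = 1 + E := by
    rw [hYeq, norm_mul, Complex.norm_real, Real.norm_eq_abs, Complex.norm_exp_ofReal_mul_I, mul_one,
      abs_of_pos (by linarith)]
  have hEm : m ≤ E := by
    rw [hfact] at hm
    have : norm ((E:ℂ) * -Complex.exp ((c:ℂ)*Complex.I)) = E := by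
      rw [norm_mul, Complex.norm_real, Real.norm_eq_abs, norm_neg, Complex.norm_exp_ofReal_mul_I, mul_one,
        abs_of_pos hE]
    rw [this] at hm
    exact hm
  linarith

/-- Two disjoint compact connected subsets of the closed unit disk cannot have
interleaved traces on the unit circle. -/
lemma no_interleave {K L : Set ℂ} (hKc : IsCompact K) (hLc : IsCompact L)
    (hKp : IsPreconnected K) (hLp : IsPreconnected L)
    (hdisj : ∀ z ∈ K, z ∉ L)
    (hKb : K ⊆ Metric.closedBall 0 1) (hLb : L ⊆ Metric.closedBall 0 1)
    {α θp β θq : ℝ} (h1 : α < θp) (h2 : θp < β) (h3 : β < θq) (h4 : θq < α + 2*Real.pi)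
    (ha : Complex.exp ((α:ℂ)*Complex.I) ∈ L) (hp : Complex.exp ((θp:ℂ)*Complex.I) ∈ K)
    (hb : Complex.exp ((β:ℂ)*Complex.I) ∈ L) (hq : Complex.exp ((θq:ℂ)*Complex.I) ∈ K) :
    False := by
  have hπ := Real.pi_pos
  set a := Complex.exp ((α:ℂ)*Complex.I) with ha_def
  set b := Complex.exp ((β:ℂ)*Complex.I) with hb_def
  set p := Complex.exp ((θp:ℂ)*Complex.I) with hp_def
  set q := Complex.exp ((θq:ℂ)*Complex.I) with hq_def
  obtain ⟨d, hd, hsep⟩ := exists_pos_dist hKc ⟨p, hp⟩ ⟨a, ha⟩ hLc.isClosed hdisj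
  set r := d/4 with hr_def
  set m := d/2 with hm_def
  have hr : 0 < r := by rw [hr_def]; linarith
  have hm : 0 < m := by rw [hm_def]; linarith
  have hrm : r < m := by rw [hr_def, hm_def]; linarith
  set UK := Metric.thickening r K with hUK_def
  set UL := Metric.thickening r L with hUL_def
  -- norm bound on thickening of subsets of the disk
  have hULb : ∀ x ∈ UL, norm x < 1 + r := by
    intro x hx
    obtain ⟨y, hy, hxy⟩ := Metric.mem_thickening_iff.1 hx
    have h1 : dist y (0:ℂ) ≤ 1 := Metric.mem_closedBall.1 (hLb hy)
    calc norm x = dist x 0 := by rw [Complex.dist_eq, sub_zero]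
      _ ≤ dist x y + dist y 0 := dist_triangle _ _ _
      _ < r + 1 := by linarith
      _ = 1 + r := by ring
  have hUKb : ∀ x ∈ UK, norm x < 1 + r := by
    intro x hx
    obtain ⟨y, hy, hxy⟩ := Metric.mem_thickening_iff.1 hx
    have h1 : dist y (0:ℂ) ≤ 1 := Metric.mem_closedBall.1 (hKb hy)
    calc norm x = dist x 0 := by rw [Complex.dist_eq, sub_zero]
      _ ≤ dist x y + dist y 0 := dist_triangle _ _ _
      _ < r + 1 := by linarith
      _ = 1 + r := by ring
  -- separation of thickenings
  have hsep2 : ∀ x ∈ UL, ∀ y ∈ UK, m ≤ dist x y := by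
    intro x hx y hy
    obtain ⟨yL, hyL, hxyL⟩ := Metric.mem_thickening_iff.1 hx
    obtain ⟨xK, hxK, hyxK⟩ := Metric.mem_thickening_iff.1 hy
    have hKL : d ≤ dist xK yL := hsep xK hxK yL hyL
    have : dist xK yL ≤ dist xK y + dist y x + dist x yL := dist_triangle4 _ _ _ _
    have h5 : dist xK y = dist y xK := dist_comm _ _
    have h6 : dist x y = dist y x := dist_comm _ _
    rw [hm_def]
    rw [hr_def] at hxyL hyxK
    linarith [dist_comm x y ▸ le_refl (dist x y)]
  -- paths
  have haUL : a ∈ UL := Metric.self_subset_thickening hr L ha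
  have hbUL : b ∈ UL := Metric.self_subset_thickening hr L hb
  have hpUK : p ∈ UK := Metric.self_subset_thickening hr K hp
  have hqUK : q ∈ UK := Metric.self_subset_thickening hr K hq
  have hULpc : IsPathConnected UL := isPathConnected_thickening hLp ⟨a, ha⟩ hr
  have hUKpc : IsPathConnected UK := isPathConnected_thickening hKp ⟨p, hp⟩ hr
  obtain ⟨γj⟩ : Nonempty (JoinedIn UL a b) := ⟨hULpc.joinedIn a haUL b hbUL⟩
  obtain ⟨δj⟩ : Nonempty (JoinedIn UK p q) := ⟨hUKpc.joinedIn p hpUK q hqUK⟩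
  set γ := γj.somePath with hγ_def
  set δ := δj.somePath with hδ_def
  set γe := γ.extend with hγe_def
  set δe := δ.extend with hδe_def
  have hγe_mem : ∀ s : ℝ, γe s ∈ UL := fun s => γj.somePath_mem _
  have hδe_mem : ∀ s : ℝ, δe s ∈ UK := fun s => δj.somePath_mem _
  have hγe_cont : Continuous γe := γ.continuous_extend
  have hδe_cont : Continuous δe := δ.continuous_extend
  -- clamping
  have hproj : ∀ s : ℝ, Set.projIcc (0:ℝ) 1 zero_le_one (max 0 (min 1 s))
      = Set.projIcc 0 1 zero_le_one s := by
    intro s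
    apply Subtype.ext
    simp only [Set.projIcc]
    have h01 : (0:ℝ) ≤ max 0 (min 1 s) := le_max_left _ _
    have h11 : max 0 (min 1 s) ≤ 1 := max_le zero_le_one (min_le_left _ _)
    rw [min_eq_right h11, max_eq_right h01]
  have hγe_clamp : ∀ s : ℝ, γe s = γe (max 0 (min 1 s)) := by
    intro s
    show γ.extend s = γ.extend (max 0 (min 1 s))
    show γ (projIcc 0 1 zero_le_one s) = γ (projIcc 0 1 zero_le_one (max 0 (min 1 s)))
    rw [hproj s]
  have hδe_clamp : ∀ s : ℝ, δe s = δe (max 0 (min 1 s)) := by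
    intro s
    show δ.extend s = δ.extend (max 0 (min 1 s))
    show δ (projIcc 0 1 zero_le_one s) = δ (projIcc 0 1 zero_le_one (max 0 (min 1 s)))
    rw [hproj s]
  have hγe0 : γe 0 = a := γ.extend_zero
  have hγe1 : γe 1 = b := γ.extend_one
  have hδe0 : δe 0 = p := δ.extend_zero
  have hδe1 : δe 1 = q := δ.extend_one
  -- the map G
  set G : ℝ × ℝ → ℂ := fun z => γe z.1 - δe z.2 with hG_def
  have hGcont : Continuous G := (hγe_cont.comp continuous_fst).sub (hδe_cont.comp continuous_snd)
  have hGbd : ∀ z, m ≤ norm (G z) := by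
    intro z
    have := hsep2 (γe z.1) (hγe_mem z.1) (δe z.2) (hδe_mem z.2)
    rwa [Complex.dist_eq] at this
  -- uniform continuity and η's
  have hγu : UniformContinuous γe :=
    (CompactSpace.uniformContinuous_of_continuous γ.continuous).comp
      (LipschitzWith.projIcc zero_le_one).uniformContinuous
  have hδu : UniformContinuous δe :=
    (CompactSpace.uniformContinuous_of_continuous δ.continuous).comp
      (LipschitzWith.projIcc zero_le_one).uniformContinuous
  obtain ⟨η₁, hη₁, hη₁'⟩ := Metric.uniformContinuous_iff.1 hγu m hm
  obtain ⟨η₂, hη₂, hη₂'⟩ := Metric.uniformContinuous_iff.1 hδu m hm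
  -- the 1-dim log along the bottom
  obtain ⟨L₀, hL₀, hL₀exp⟩ : ∃ g : ℝ → ℂ, Continuous g ∧
      ∀ s, Complex.exp (g s) = G (s, 0) := by
    apply exists_log_line (f := fun s => G (s, 0))
      (hGcont.comp (continuous_id.prodMk continuous_const)) hm
      (fun s => hGbd (s, 0)) (half_pos hη₁)
    · intro s s' hss
      have : dist (γe s) (γe s') < m := hη₁' (by
        rw [Real.dist_eq]; exact lt_of_le_of_lt hss (by linarith))
      show norm ((γe s - δe 0) - (γe s' - δe 0)) < m
      rw [show (γe s - δe 0) - (γe s' - δe 0) = γe s - γe s' by ring, ← Complex.dist_eq]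
      exact this
    · intro s
      show γe s - δe 0 = γe (max 0 (min 1 s)) - δe 0
      rw [← hγe_clamp s]
  -- the 2-dim log
  obtain ⟨g, hgcont, hgexp⟩ : ∃ g : ℝ × ℝ → ℂ, Continuous g ∧
      ∀ z, Complex.exp (g z) = G z := by
    apply exists_log_square hGcont hm hGbd (half_pos hη₂) ?_ ?_ hL₀ hL₀exp
    · intro s t t' htt
      have : dist (δe t) (δe t') < m := hη₂' (by
        rw [Real.dist_eq]; exact lt_of_le_of_lt htt (by linarith))
      show norm ((γe s - δe t) - (γe s - δe t')) < m
      rw [show (γe s - δe t) - (γe s - δe t') = -(δe t - δe t') by ring, norm_neg,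
        ← Complex.dist_eq]
      exact this
    · intro s t
      show γe s - δe t = γe s - δe (max 0 (min 1 t))
      rw [← hδe_clamp t]
  -- edge avoidance
  have Ebot : ∀ s : ℝ, ∀ n : ℤ, (g (s,0)).im ≠ θp + 2*Real.pi*n := by
    intro s n h
    have hfact : γe s - p = ((Real.exp ((g (s,0)).re) : ℝ):ℂ)
        * Complex.exp ((θp:ℂ)*Complex.I) := by
      rw [← hδe0]
      show G (s, 0) = _
      rw [← hgexp (s,0), im_lattice_exp h]
    refine edge1 (c := θp) (E := Real.exp ((g (s,0)).re)) (m := m) (r := r)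
      (Real.exp_pos _) hfact (hULb _ (hγe_mem s)) ?_ hrm
    have := hGbd (s, 0)
    show m ≤ norm (γe s - p)
    rw [← hδe0]; exact this
  have Etop : ∀ s : ℝ, ∀ n : ℤ, (g (s,1)).im ≠ θq + 2*Real.pi*n := by
    intro s n h
    have hfact : γe s - q = ((Real.exp ((g (s,1)).re) : ℝ):ℂ)
        * Complex.exp ((θq:ℂ)*Complex.I) := by
      rw [← hδe1]
      show G (s, 1) = _
      rw [← hgexp (s,1), im_lattice_exp h]
    refine edge1 (c := θq) (E := Real.exp ((g (s,1)).re)) (m := m) (r := r)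
      (Real.exp_pos _) hfact (hULb _ (hγe_mem s)) ?_ hrm
    have := hGbd (s, 1)
    show m ≤ norm (γe s - q)
    rw [← hδe1]; exact this
  have Eleft : ∀ t : ℝ, ∀ n : ℤ, (g (0,t)).im ≠ (α + Real.pi) + 2*Real.pi*n := by
    intro t n h
    have hfact : a - δe t = ((Real.exp ((g (0,t)).re) : ℝ):ℂ)
        * Complex.exp (((α + Real.pi : ℝ):ℂ)*Complex.I) := by
      rw [← hγe0]
      show G (0, t) = _
      rw [← hgexp (0,t), im_lattice_exp h]
    refine edge2 (c := α) (E := Real.exp ((g (0,t)).re)) (m := m) (r := r)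
      (Real.exp_pos _) hfact (hUKb _ (hδe_mem t)) ?_ hrm
    have := hGbd (0, t)
    show m ≤ norm (a - δe t)
    rw [← hγe0]; exact this
  have Eright : ∀ t : ℝ, ∀ n : ℤ, (g (1,t)).im ≠ (β + Real.pi) + 2*Real.pi*n := by
    intro t n h
    have hfact : b - δe t = ((Real.exp ((g (1,t)).re) : ℝ):ℂ)
        * Complex.exp (((β + Real.pi : ℝ):ℂ)*Complex.I) := by
      rw [← hγe1]
      show G (1, t) = _
      rw [← hgexp (1,t), im_lattice_exp h]
    refine edge2 (c := β) (E := Real.exp ((g (1,t)).re)) (m := m) (r := r)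
      (Real.exp_pos _) hfact (hUKb _ (hδe_mem t)) ?_ hrm
    have := hGbd (1, t)
    show m ≤ norm (b - δe t)
    rw [← hγe1]; exact this
  -- corner congruences
  have hcorner : ∀ (s t : ℝ) (x y : ℝ), γe s = Complex.exp ((x:ℂ)*Complex.I) →
      δe t = Complex.exp ((y:ℂ)*Complex.I) → 0 < y - x → y - x < 2*Real.pi →
      ∃ n : ℤ, (g (s,t)).im = ((x+y)/2 - Real.pi/2) + 2*Real.pi*n := by
    intro s t x y hx hy hd1 hd2
    have hR : 0 < 2*Real.sin ((y-x)/2) := by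
      have := Real.sin_pos_of_pos_of_lt_pi (x := (y-x)/2) (by linarith) (by linarith)
      linarith
    apply corner_congr hR
    rw [hgexp (s,t)]
    show γe s - δe t = _
    rw [hx, hy, exp_sub_exp x y]
  obtain ⟨n₁, hn₁⟩ := hcorner 0 0 α θp (by rw [hγe0]) (by rw [hδe0]) (by linarith) (by linarith)
  have hcorner2 : ∀ (s t : ℝ) (x y : ℝ), γe s = Complex.exp ((x:ℂ)*Complex.I) →
      δe t = Complex.exp ((y:ℂ)*Complex.I) → 0 < x - y → x - y < 2*Real.pi →
      ∃ n : ℤ, (g (s,t)).im = ((x+y)/2 + Real.pi/2) + 2*Real.pi*n := by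
    intro s t x y hx hy hd1 hd2
    have hR : 0 < 2*Real.sin ((x-y)/2) := by
      have := Real.sin_pos_of_pos_of_lt_pi (x := (x-y)/2) (by linarith) (by linarith)
      linarith
    have hkey : Complex.exp ((x:ℂ)*Complex.I) - Complex.exp ((y:ℂ)*Complex.I)
        = ((2*Real.sin ((x-y)/2) : ℝ):ℂ)
          * Complex.exp ((((x+y)/2 + Real.pi/2 : ℝ):ℂ) * Complex.I) := by
      have hneg : Complex.exp ((x:ℂ)*Complex.I) - Complex.exp ((y:ℂ)*Complex.I)
          = -(Complex.exp ((y:ℂ)*Complex.I) - Complex.exp ((x:ℂ)*Complex.I)) := by ring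
      rw [hneg, exp_sub_exp y x,
        show ((x+y)/2 + Real.pi/2 : ℝ) = ((y+x)/2 - Real.pi/2) + Real.pi by ring,
        exp_add_pi]
      ring
    apply corner_congr hR
    rw [hgexp (s,t)]
    show γe s - δe t = _
    rw [hx, hy, hkey]
  obtain ⟨n₂, hn₂⟩ := hcorner2 1 0 β θp (by rw [hγe1]) (by rw [hδe0]) (by linarith) (by linarith)
  obtain ⟨n₃, hn₃⟩ := hcorner 1 1 β θq (by rw [hγe1]) (by rw [hδe1]) (by linarith) (by linarith)
  obtain ⟨n₄, hn₄⟩ := hcorner 0 1 α θq (by rw [hγe0]) (by rw [hδe1]) (by linarith) (by linarith)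
  -- the four edge walks
  have hubot : Continuous fun s : ℝ => (g (s, 0)).im :=
    Complex.continuous_im.comp (hgcont.comp (continuous_id.prodMk continuous_const))
  have hutop : Continuous fun s : ℝ => (g (s, 1)).im :=
    Complex.continuous_im.comp (hgcont.comp (continuous_id.prodMk continuous_const))
  have huleft : Continuous fun t : ℝ => (g (0, t)).im :=
    Complex.continuous_im.comp (hgcont.comp (continuous_const.prodMk continuous_id))
  have huright : Continuous fun t : ℝ => (g (1, t)).im :=
    Complex.continuous_im.comp (hgcont.comp (continuous_const.prodMk continuous_id))
  have hw1 : n₁ = n₂ + 1 := by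
    refine key_int (c := θp) (o₁ := (α-θp)/2 - Real.pi/2) (o₂ := (β-θp)/2 + Real.pi/2 - 2*Real.pi)
      (by rw [hn₁]; ring) (by linarith) (by linarith)
      (by rw [hn₂]; push_cast; ring) (by linarith) (by linarith)
      (fun n => no_lattice_between hubot (fun s n => Ebot s n) n)
  have hw2 : n₂ = n₃ := by
    refine key_int (c := β + Real.pi) (o₁ := (θp-β)/2 - Real.pi/2) (o₂ := (θq-β)/2 - 3*Real.pi/2)
      (by rw [hn₂]; ring) (by linarith) (by linarith)
      (by rw [hn₃]; ring) (by linarith) (by linarith)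
      (fun n => no_lattice_between huright (fun t n => Eright t n) n)
  have hw3 : n₄ = n₃ := by
    refine key_int (c := θq) (o₁ := (α-θq)/2 - Real.pi/2) (o₂ := (β-θq)/2 - Real.pi/2)
      (by rw [hn₄]; ring) (by linarith) (by linarith)
      (by rw [hn₃]; ring) (by linarith) (by linarith)
      (fun n => no_lattice_between hutop (fun s n => Etop s n) n)
  have hw4 : n₁ = n₄ := by
    refine key_int (c := α + Real.pi) (o₁ := (θp-α)/2 - 3*Real.pi/2) (o₂ := (θq-α)/2 - 3*Real.pi/2)
      (by rw [hn₁]; ring) (by linarith) (by linarith)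
      (by rw [hn₄]; ring) (by linarith) (by linarith)
      (fun n => no_lattice_between huleft (fun t n => Eleft t n) n)
  omega

/-- The Kuratowski upper limit of a sequence of connected subsets of a compact
metric space, containing points of a convergent sequence, is preconnected. -/
lemma limsup_preconnected {X : Type*} [MetricSpace X] {B : Set X} (hB : IsCompact B)
    {C : ℕ → Set X} (hsub : ∀ n, C n ⊆ B) (hconn : ∀ n, IsPreconnected (C n))
    {x : ℕ → X} (hx : ∀ n, x n ∈ C n) {x₀ : X} (hx₀ : Tendsto x atTop (nhds x₀)) :
    IsPreconnected {w | ∀ N : ℕ, w ∈ closure (⋃ n ∈ Ici N, C n)} := by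
  set K := {w | ∀ N : ℕ, w ∈ closure (⋃ n ∈ Ici N, C n)} with hK_def
  have hKclosed : IsClosed K := by
    have hKeq : K = ⋂ N : ℕ, closure (⋃ n ∈ Ici N, C n) := by
      ext w; simp [hK_def]
    rw [hKeq]; exact isClosed_iInter fun N => isClosed_closure
  have hKB : K ⊆ B := by
    intro w hw
    have h0 := hw 0
    have hsub0 : (⋃ n ∈ Ici (0:ℕ), C n) ⊆ B := by
      simp only [Set.iUnion_subset_iff]; intro n _; exact hsub n
    have := closure_mono hsub0 h0
    rwa [hB.isClosed.closure_eq] at this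
  have hx₀K : x₀ ∈ K := by
    intro N
    apply mem_closure_of_tendsto hx₀
    filter_upwards [eventually_ge_atTop N] with n hn
    exact Set.mem_biUnion hn (hx n)
  rintro u v hu hv hKuv ⟨zu, hzuK, hzuu⟩ ⟨zv, hzvK, hzvv⟩
  by_contra hne
  rw [Set.not_nonempty_iff_eq_empty] at hne
  set A := K \ v with hA_def
  set A' := K \ u with hA'_def
  have hAclosed : IsClosed A := hKclosed.inter hv.isClosed_compl
  have hA'closed : IsClosed A' := hKclosed.inter hu.isClosed_compl
  have hAcomp : IsCompact A := hB.of_isClosed_subset hAclosed (fun w hw => hKB hw.1)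
  have hAne : A.Nonempty := ⟨zu, hzuK, fun hzv => by
    have : zu ∈ K ∩ (u ∩ v) := ⟨hzuK, hzuu, hzv⟩
    rw [hne] at this; exact this⟩
  have hA'ne : A'.Nonempty := ⟨zv, hzvK, fun hzu => by
    have : zv ∈ K ∩ (u ∩ v) := ⟨hzvK, hzu, hzvv⟩
    rw [hne] at this; exact this⟩
  have hAA' : ∀ w ∈ A, w ∉ A' := fun w hw hw' =>
    (hKuv hw.1).elim (fun h => hw'.2 h) (fun h => hw.2 h)
  obtain ⟨d, hd, hsep⟩ := exists_pos_dist hAcomp hAne hA'ne hA'closed hAA'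
  set U' := Metric.thickening (d/3) A with hU'_def
  set V' := Metric.thickening (d/3) A' with hV'_def
  have hU'open : IsOpen U' := Metric.isOpen_thickening
  have hV'open : IsOpen V' := Metric.isOpen_thickening
  have hdisjUV : ∀ w, w ∈ U' → w ∉ V' := by
    intro w hw hw'
    obtain ⟨yA, hyA, hd1⟩ := Metric.mem_thickening_iff.1 hw
    obtain ⟨yA', hyA', hd2⟩ := Metric.mem_thickening_iff.1 hw'
    have h1 := hsep yA hyA yA' hyA'
    have h2 := dist_triangle yA w yA'
    rw [dist_comm yA w] at h2
    linarith
  have hAU' : A ⊆ U' := Metric.self_subset_thickening (by linarith) A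
  have hA'V' : A' ⊆ V' := Metric.self_subset_thickening (by linarith) A'
  have hKAA' : K ⊆ A ∪ A' := by
    intro w hw
    by_cases hwv : w ∈ v
    · right
      exact ⟨hw, fun hwu => by
        have : w ∈ K ∩ (u ∩ v) := ⟨hw, hwu, hwv⟩
        rw [hne] at this; exact this⟩
    · left; exact ⟨hw, hwv⟩
  have hcover : ∀ᶠ n in atTop, C n ⊆ U' ∪ V' := by
    by_contra hcov
    rw [Filter.not_eventually] at hcov
    have hfreq : ∀ N : ℕ, ∃ n ≥ N, ∃ w, w ∈ C n ∧ w ∉ U' ∪ V' := by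
      intro N
      obtain ⟨n, hn, hnot⟩ := Filter.frequently_atTop.1 hcov N
      rw [Set.not_subset] at hnot
      obtain ⟨w, hw1, hw2⟩ := hnot
      exact ⟨n, hn, w, hw1, hw2⟩
    choose nn hnn w hw1 hw2 using hfreq
    have hwB : ∀ N, w N ∈ B := fun N => hsub _ (hw1 N)
    obtain ⟨w₀, hw₀B, φ, hφ, hφt⟩ := hB.tendsto_subseq hwB
    have hw₀K : w₀ ∈ K := by
      intro N
      apply mem_closure_of_tendsto hφt
      filter_upwards [eventually_ge_atTop N] with j hj
      have hjN : nn (φ j) ∈ Ici N := le_trans (le_trans hj (le_trans (hφ.id_le j) (hnn (φ j)))) (le_refl _)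
      exact Set.mem_biUnion hjN (hw1 (φ j))
    have hnotin : w₀ ∉ U' ∪ V' := by
      have hcl : IsClosed ((U' ∪ V')ᶜ) := (hU'open.union hV'open).isClosed_compl
      exact hcl.mem_of_tendsto hφt (Filter.Eventually.of_forall fun j => hw2 (φ j))
    exact hnotin (Set.union_subset_union hAU' hA'V' (hKAA' hw₀K))
  have main : ∀ (W W' : Set X), IsOpen W → IsOpen W' →
      (∀ᶠ n in atTop, C n ⊆ W ∪ W') → (∀ᶠ n in atTop, x n ∈ W) →
      (∀ z, z ∈ W → z ∉ W') → ∀ w₁ ∈ K, w₁ ∈ W' → False := by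
    intro W W' hW hW' hcov hxW hWW' w₁ hw₁K hw₁W'
    obtain ⟨N₁, hN₁⟩ := Filter.eventually_atTop.1 hcov
    obtain ⟨N₂, hN₂⟩ := Filter.eventually_atTop.1 hxW
    have hcl := hw₁K (max N₁ N₂)
    rw [mem_closure_iff] at hcl
    obtain ⟨y', hy'W', hy'mem⟩ := hcl W' hW' hw₁W'
    obtain ⟨n, hn, hy'Cn⟩ := by
      simpa using hy'mem
    have hnN₁ : N₁ ≤ n := hn.1
    have hnN₂ : N₂ ≤ n := hn.2
    obtain ⟨z, hz⟩ := (hconn n) W W' hW hW' (hN₁ n hnN₁)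
      ⟨x n, hx n, hN₂ n hnN₂⟩ ⟨y', hy'Cn, hy'W'⟩
    exact hWW' z hz.2.1 hz.2.2
  rcases hKAA' hx₀K with hx₀A | hx₀A'
  · have hxev : ∀ᶠ n in atTop, x n ∈ U' :=
      hx₀.eventually (hU'open.eventually_mem (hAU' hx₀A))
    obtain ⟨w₁, hw₁⟩ := hA'ne
    exact main U' V' hU'open hV'open hcover hxev hdisjUV w₁ hw₁.1 (hA'V' hw₁)
  · have hxev : ∀ᶠ n in atTop, x n ∈ V' :=
      hx₀.eventually (hV'open.eventually_mem (hA'V' hx₀A'))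
    obtain ⟨w₁, hw₁⟩ := hAne
    refine main V' U' hV'open hU'open ?_ hxev (fun z hz hz' => hdisjUV z hz' hz) w₁ hw₁.1 (hAU' hw₁)
    filter_upwards [hcover] with n hn
    rw [Set.union_comm]; exact hn

end AuxiliaryLemmas

lemma isClosed_connCompIn {X : Type*} [TopologicalSpace X] {s : Set X} (hs : IsClosed s)
    (x : X) : IsClosed (connectedComponentIn s x) := by
  by_cases hx : x ∈ s
  · rw [connectedComponentIn_eq_image hx]
    exact (hs.isClosedEmbedding_subtypeVal.isClosedMap _ isClosed_connectedComponent)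
  · rw [connectedComponentIn_eq_empty hx]
    exact isClosed_empty

/-- If `f' : S¹ → M'` extends to a continuous `F' : B² → M'`, then the traces
on `S¹` of the components of point preimages of `F'` form an upper
semicontinuous decomposition of `S¹` into compact sets, `f'` is constant on
each element, and the decomposition is noncrossing: no element separates
another element on `S¹`. -/
theorem stmt_16 {M' : Type*} [MetricSpace M'] (F' : Plane → M')
    (hF : ContinuousOn F' (Metric.closedBall 0 1)) :
    (⋃₀ traceDecomp F' = Metric.sphere (0 : Plane) 1) ∧
    (∀ s ∈ traceDecomp F', IsCompact s) ∧
    ((traceDecomp F').Pairwise fun s₁ s₂ => Disjoint s₁ s₂) ∧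
    (∀ s ∈ traceDecomp F', ∀ a ∈ s, ∀ b ∈ s, F' a = F' b) ∧
    IsUSCFamily (traceDecomp F') ∧
    (∀ s₁ ∈ traceDecomp F', ∀ s₂ ∈ traceDecomp F', s₁ ≠ s₂ →
      ∀ a ∈ s₂, ∀ b ∈ s₂,
        connectedComponentIn (Metric.sphere (0 : Plane) 1 \ s₁) a =
          connectedComponentIn (Metric.sphere (0 : Plane) 1 \ s₁) b) := by
  set B : Set Plane := Metric.closedBall 0 1 with hB_def
  set S : Set Plane := Metric.sphere 0 1 with hS_def
  have hSB : S ⊆ B := Metric.sphere_subset_closedBall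
  have hBcomp : IsCompact B := isCompact_closedBall 0 1
  have hBclosed : IsClosed B := Metric.isClosed_closedBall
  have hSclosed : IsClosed S := Metric.isClosed_sphere
  set T : Plane → Set Plane := fun p => B ∩ F' ⁻¹' {F' p} with hT_def
  have hpT : ∀ p ∈ B, p ∈ T p := fun p hp => ⟨hp, rfl⟩
  have hTclosed : ∀ p, IsClosed (T p) :=
    fun p => hF.preimage_isClosed_of_isClosed hBclosed isClosed_singleton
  have hTcomp : ∀ p, IsCompact (T p) :=
    fun p => hBcomp.of_isClosed_subset (hTclosed p) Set.inter_subset_left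
  have hCsub : ∀ p, connectedComponentIn (T p) p ⊆ T p :=
    fun p => connectedComponentIn_subset _ _
  have hCcomp : ∀ p, IsCompact (connectedComponentIn (T p) p) :=
    fun p => (hTcomp p).of_isClosed_subset (isClosed_connCompIn (hTclosed p) p) (hCsub p)
  have hCF : ∀ p, ∀ z ∈ connectedComponentIn (T p) p, F' z = F' p :=
    fun p z hz => (hCsub p hz).2
  -- the key rigidity: components through a common point agree
  have key : ∀ p₁ ∈ B, ∀ p₂ ∈ B, ∀ q,
      q ∈ connectedComponentIn (T p₁) p₁ → q ∈ connectedComponentIn (T p₂) p₂ →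
      connectedComponentIn (T p₁) p₁ = connectedComponentIn (T p₂) p₂ := by
    intro p₁ _ p₂ _ q hq₁ hq₂
    have hT12 : T p₁ = T p₂ := by
      have h1 : F' q = F' p₁ := hCF p₁ q hq₁
      have h2 : F' q = F' p₂ := hCF p₂ q hq₂
      show B ∩ F' ⁻¹' {F' p₁} = B ∩ F' ⁻¹' {F' p₂}
      rw [← h1, h2]
    calc connectedComponentIn (T p₁) p₁
        = connectedComponentIn (T p₁) q := connectedComponentIn_eq hq₁
      _ = connectedComponentIn (T p₂) q := by rw [hT12]
      _ = connectedComponentIn (T p₂) p₂ := (connectedComponentIn_eq hq₂).symm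
  -- part 1
  have part1 : ⋃₀ traceDecomp F' = S := by
    apply Set.Subset.antisymm
    · rintro z ⟨s, ⟨p, hpB, rfl, -⟩, hzs⟩
      exact hzs.2
    · intro z hz
      refine ⟨connectedComponentIn (T z) z ∩ S, ⟨z, hSB hz, rfl, ?_⟩, ?_⟩
      · exact ⟨z, mem_connectedComponentIn (hpT z (hSB hz)), hz⟩
      · exact ⟨mem_connectedComponentIn (hpT z (hSB hz)), hz⟩
  -- part 2
  have part2 : ∀ s ∈ traceDecomp F', IsCompact s := by
    rintro s ⟨p, hpB, rfl, -⟩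
    exact ((hCcomp p).inter_right hSclosed)
  -- part 3
  have part3 : (traceDecomp F').Pairwise fun s₁ s₂ => Disjoint s₁ s₂ := by
    rintro s₁ hs₁ s₂ hs₂ hne
    obtain ⟨p₁, hp₁B, rfl, -⟩ := hs₁
    obtain ⟨p₂, hp₂B, rfl, -⟩ := hs₂
    rw [Set.disjoint_left]
    intro q hq₁ hq₂
    exact hne (by rw [key p₁ hp₁B p₂ hp₂B q hq₁.1 hq₂.1])
  -- part 4
  have part4 : ∀ s ∈ traceDecomp F', ∀ a ∈ s, ∀ b ∈ s, F' a = F' b := by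
    rintro s ⟨p, hpB, rfl, -⟩ a ha b hb
    rw [hCF p a ha.1, hCF p b hb.1]
  -- continuity along sequences in B
  have seqF : ∀ (u : ℕ → Plane) (u₀ : Plane), (∀ n, u n ∈ B) → u₀ ∈ B →
      Tendsto u atTop (nhds u₀) → Tendsto (fun n => F' (u n)) atTop (nhds (F' u₀)) := by
    intro u u₀ hu hu₀ hut
    have hcw : ContinuousWithinAt F' B u₀ := hF u₀ hu₀
    exact hcw.tendsto.comp
      (tendsto_nhdsWithin_of_tendsto_nhds_of_eventually_within u hut
        (Filter.Eventually.of_forall hu))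
  -- part 5
  have part5 : IsUSCFamily (traceDecomp F') := by
    intro gs x y x₀ y₀ hg hxg hyg hx hy
    have hgc := fun n => (hg n)
    choose pp hppB hprop using hgc
    have hgeq : ∀ n, gs n = connectedComponentIn (T (pp n)) (pp n) ∩ S :=
      fun n => (hprop n).1
    set C : ℕ → Set Plane := fun n => connectedComponentIn (T (pp n)) (pp n) with hC_def
    have hxC : ∀ n, x n ∈ C n := fun n => ((hgeq n) ▸ hxg n).1
    have hyC : ∀ n, y n ∈ C n := fun n => ((hgeq n) ▸ hyg n).1
    have hxS : ∀ n, x n ∈ S := fun n => ((hgeq n) ▸ hxg n).2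
    have hyS : ∀ n, y n ∈ S := fun n => ((hgeq n) ▸ hyg n).2
    have hCB : ∀ n, C n ⊆ B := fun n => (hCsub (pp n)).trans Set.inter_subset_left
    have hx₀S : x₀ ∈ S := hSclosed.mem_of_tendsto hx (Filter.Eventually.of_forall hxS)
    have hy₀S : y₀ ∈ S := hSclosed.mem_of_tendsto hy (Filter.Eventually.of_forall hyS)
    have hx₀B : x₀ ∈ B := hSB hx₀S
    have hy₀B : y₀ ∈ B := hSB hy₀S
    have hFx : Tendsto (fun n => F' (x n)) atTop (nhds (F' x₀)) :=
      seqF x x₀ (fun n => hSB (hxS n)) hx₀B hx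
    have hFy : Tendsto (fun n => F' (y n)) atTop (nhds (F' y₀)) :=
      seqF y y₀ (fun n => hSB (hyS n)) hy₀B hy
    have hFxy : ∀ n, F' (x n) = F' (y n) := by
      intro n
      rw [hCF (pp n) (x n) (hxC n), hCF (pp n) (y n) (hyC n)]
    have hFyx₀ : F' y₀ = F' x₀ := by
      apply tendsto_nhds_unique hFy
      have : (fun n => F' (y n)) = fun n => F' (x n) := by
        funext n; rw [hFxy n]
      rw [this]
      exact hFx
    set K : Set Plane := {w | ∀ N : ℕ, w ∈ closure (⋃ n ∈ Ici N, C n)} with hK_def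
    have hKconn : IsPreconnected K :=
      limsup_preconnected hBcomp hCB
        (fun n => isPreconnected_connectedComponentIn) hxC hx
    have hx₀K : x₀ ∈ K := by
      intro N
      apply mem_closure_of_tendsto hx
      filter_upwards [eventually_ge_atTop N] with n hn
      exact Set.mem_biUnion hn (hxC n)
    have hy₀K : y₀ ∈ K := by
      intro N
      apply mem_closure_of_tendsto hy
      filter_upwards [eventually_ge_atTop N] with n hn
      exact Set.mem_biUnion hn (hyC n)
    -- K lies in the fiber of x₀
    have hKT : K ⊆ T x₀ := by
      intro w hw
      have hch : ∀ N : ℕ, ∃ n ≥ N, ∃ uu ∈ C n, dist w uu < 1/(N+1) := by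
        intro N
        have := Metric.mem_closure_iff.1 (hw N) (1/(N+1)) (by positivity)
        obtain ⟨uu, huu, hduu⟩ := this
        rw [Set.mem_iUnion₂] at huu
        obtain ⟨n, hn, hun⟩ := huu
        exact ⟨n, hn, uu, hun, hduu⟩
      choose nn hnn uu huu hduu using hch
      have huut : Tendsto uu atTop (nhds w) := by
        rw [tendsto_iff_dist_tendsto_zero]
        exact squeeze_zero (g := fun N : ℕ => 1/((N:ℝ)+1)) (fun N => dist_nonneg)
          (fun N => by rw [dist_comm]; exact (hduu N).le)
          tendsto_one_div_add_atTop_nhds_zero_nat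
      have hwB : w ∈ B := by
        have : IsClosed B := hBclosed
        exact this.mem_of_tendsto huut (Filter.Eventually.of_forall fun N => hCB _ (huu N))
      refine ⟨hwB, ?_⟩
      have hFuu : Tendsto (fun N => F' (uu N)) atTop (nhds (F' w)) :=
        seqF uu w (fun N => hCB _ (huu N)) hwB huut
      have hFuu' : ∀ N, F' (uu N) = F' (x (nn N)) := by
        intro N
        rw [hCF (pp (nn N)) (uu N) (huu N), hCF (pp (nn N)) (x (nn N)) (hxC (nn N))]
      have hnt : Tendsto nn atTop atTop := tendsto_atTop_mono hnn tendsto_id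
      have hFxnn : Tendsto (fun N => F' (x (nn N))) atTop (nhds (F' x₀)) := hFx.comp hnt
      have : Tendsto (fun N => F' (uu N)) atTop (nhds (F' x₀)) := by
        have heq : (fun N => F' (uu N)) = fun N => F' (x (nn N)) := by
          funext N; exact hFuu' N
        rw [heq]; exact hFxnn
      have := tendsto_nhds_unique hFuu this
      simpa using this
    have hx₀T : x₀ ∈ T x₀ := hpT x₀ hx₀B
    refine ⟨connectedComponentIn (T x₀) x₀ ∩ S, ⟨x₀, hx₀B, rfl, ?_⟩, ⟨?_, hx₀S⟩, ⟨?_, hy₀S⟩⟩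
    · exact ⟨x₀, mem_connectedComponentIn hx₀T, hx₀S⟩
    · exact mem_connectedComponentIn hx₀T
    · exact hKconn.subset_connectedComponentIn hx₀K hKT hy₀K
  refine ⟨part1, part2, part3, part4, part5, ?_⟩
  -- part 6 : noncrossing
  rintro s₁ hs₁ s₂ hs₂ hne a ha b hb
  obtain ⟨p₁, hp₁B, hs₁eq, -⟩ := hs₁
  obtain ⟨p₂, hp₂B, hs₂eq, -⟩ := hs₂
  by_cases hab : a = b
  · rw [hab]
  have hπ := Real.pi_pos
  set C₁ := connectedComponentIn (T p₁) p₁ with hC₁_def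
  set C₂ := connectedComponentIn (T p₂) p₂ with hC₂_def
  have hs₁eq' : s₁ = C₁ ∩ S := hs₁eq
  have hs₂eq' : s₂ = C₂ ∩ S := hs₂eq
  have hdisjC : ∀ z ∈ C₁, z ∉ C₂ := by
    intro z hz1 hz2
    exact hne (by rw [hs₁eq', hs₂eq', show C₁ = C₂ from key p₁ hp₁B p₂ hp₂B z hz1 hz2])
  have ha' : a ∈ C₂ := (hs₂eq' ▸ ha).1
  have haS : a ∈ S := (hs₂eq' ▸ ha).2
  have hb' : b ∈ C₂ := (hs₂eq' ▸ hb).1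
  have hbS : b ∈ S := (hs₂eq' ▸ hb).2
  have hanots₁ : a ∉ s₁ := fun h => hdisjC a ((hs₁eq' ▸ h).1) ha'
  have hbnots₁ : b ∉ s₁ := fun h => hdisjC b ((hs₁eq' ▸ h).1) hb'
  have hs₁S : s₁ ⊆ S := by rw [hs₁eq']; exact Set.inter_subset_right
  have hs₁C₁ : s₁ ⊆ C₁ := by rw [hs₁eq']; exact Set.inter_subset_left
  -- move to ℂ
  set φ := Complex.orthonormalBasisOneI.repr.symm with hφ_def
  have hφnorm : ∀ z : Plane, norm (φ z) = ‖z‖ := fun z => by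
    exact φ.norm_map z
  have hφsnorm : ∀ w : ℂ, ‖φ.symm w‖ = norm w := fun w => by
    exact φ.symm.norm_map w
  set K' := φ '' C₁ with hK'_def
  set L' := φ '' C₂ with hL'_def
  have hK'c : IsCompact K' := (hCcomp p₁).image φ.continuous
  have hL'c : IsCompact L' := (hCcomp p₂).image φ.continuous
  have hK'p : IsPreconnected K' :=
    isPreconnected_connectedComponentIn.image _ φ.continuous.continuousOn
  have hL'p : IsPreconnected L' :=
    isPreconnected_connectedComponentIn.image _ φ.continuous.continuousOn
  have hdisj' : ∀ w ∈ K', w ∉ L' := by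
    rintro w ⟨z1, hz1, rfl⟩ ⟨z2, hz2, heq⟩
    exact hdisjC z1 hz1 (φ.injective heq ▸ hz2)
  have hK'b : K' ⊆ Metric.closedBall 0 1 := by
    rintro w ⟨z, hz, rfl⟩
    rw [mem_closedBall_zero_iff, hφnorm]
    exact mem_closedBall_zero_iff.1 ((hCsub p₁ hz).1)
  have hL'b : L' ⊆ Metric.closedBall 0 1 := by
    rintro w ⟨z, hz, rfl⟩
    rw [mem_closedBall_zero_iff, hφnorm]
    exact mem_closedBall_zero_iff.1 ((hCsub p₂ hz).1)
  -- angles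
  have habs : ∀ z ∈ S, norm (φ z) = 1 := fun z hz => by
    rw [hφnorm]; exact mem_sphere_zero_iff_norm.1 hz
  have hexp_of_S : ∀ z ∈ S, Complex.exp ((Complex.arg (φ z) : ℂ) * Complex.I) = φ z := by
    intro z hz
    conv_rhs => rw [← Complex.norm_mul_exp_arg_mul_I (φ z)]
    rw [habs z hz, Complex.ofReal_one, one_mul]
  set α := Complex.arg (φ a) with hα_def
  have hexpa : Complex.exp ((α:ℂ) * Complex.I) = φ a := hexp_of_S a haS
  have ha'0 : φ a ≠ 0 := by
    intro h
    have := habs a haS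
    rw [h] at this; simp at this
  set t := Complex.arg (φ b / φ a) with ht_def
  have habsdiv : norm (φ b / φ a) = 1 := by
    rw [norm_div, habs a haS, habs b hbS]; norm_num
  have hexpt : Complex.exp ((t:ℂ) * Complex.I) = φ b / φ a := by
    conv_rhs => rw [← Complex.norm_mul_exp_arg_mul_I (φ b / φ a)]
    rw [habsdiv, Complex.ofReal_one, one_mul]
  have ht0 : t ≠ 0 := by
    intro h
    rw [h] at hexpt
    rw [show ((0:ℝ):ℂ) = 0 by norm_num, zero_mul, Complex.exp_zero] at hexpt
    have hba : φ b = φ a := by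
      have h2 := (eq_div_iff ha'0).1 hexpt
      rw [one_mul] at h2
      exact h2.symm
    exact hab (φ.injective hba).symm
  have htlo : -Real.pi < t := Complex.neg_pi_lt_arg _
  have hthi : t ≤ Real.pi := Complex.arg_le_pi _
  set β := if 0 < t then α + t else α + t + 2*Real.pi with hβ_def
  have hexpab : Complex.exp ((α:ℂ) * Complex.I) * Complex.exp ((t:ℂ) * Complex.I) = φ b := by
    rw [hexpa, hexpt]
    field_simp
  have hexpb : Complex.exp ((β:ℂ) * Complex.I) = φ b := by
    rw [hβ_def]
    split_ifs with h
    · rw [show ((α + t : ℝ):ℂ) = (α:ℂ) + (t:ℂ) by push_cast; ring, add_mul,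
        Complex.exp_add, hexpab]
    · rw [show ((α + t + 2*Real.pi : ℝ):ℂ) * Complex.I
          = ((α:ℂ) * Complex.I + (t:ℂ) * Complex.I) + (2*(Real.pi:ℂ)*Complex.I) by push_cast; ring,
        Complex.exp_add, Complex.exp_add, Complex.exp_two_pi_mul_I, mul_one, hexpab]
  have hαβ : α < β ∧ β < α + 2*Real.pi := by
    rw [hβ_def]
    split_ifs with h
    · constructor <;> linarith
    · push_neg at h
      have : t < 0 := lt_of_le_of_ne h ht0
      constructor <;> linarith
  -- the parametrization of the circle
  set ψ : ℝ → Plane := fun θ => φ.symm (Complex.exp ((θ:ℂ)*Complex.I)) with hψ_def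
  have hψcont : Continuous ψ :=
    φ.symm.continuous.comp (Complex.continuous_exp.comp
      (Complex.continuous_ofReal.mul continuous_const))
  have hψS : ∀ θ : ℝ, ψ θ ∈ S := by
    intro θ
    rw [mem_sphere_zero_iff_norm]
    show ‖φ.symm _‖ = 1
    rw [hφsnorm, Complex.norm_exp_ofReal_mul_I]
  have hψa : ψ α = a := by
    show φ.symm _ = a
    rw [hexpa, φ.symm_apply_apply]
  have hψb : ψ β = b := by
    show φ.symm _ = b
    rw [hexpb, φ.symm_apply_apply]
  have hψa2 : ψ (α + 2*Real.pi) = a := by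
    show φ.symm _ = a
    rw [show ((α + 2*Real.pi : ℝ):ℂ) * Complex.I
        = (α:ℂ) * Complex.I + 2*(Real.pi:ℂ)*Complex.I by push_cast; ring,
      Complex.exp_add, Complex.exp_two_pi_mul_I, mul_one, hexpa, φ.symm_apply_apply]
  -- helper to conclude from an arc avoiding s₁
  have conclude : ∀ u v : ℝ, u ≤ v → ∀ x y : Plane, ψ u = x → ψ v = y →
      (∀ θ ∈ Icc u v, ψ θ ∉ s₁) →
      connectedComponentIn (S \ s₁) x = connectedComponentIn (S \ s₁) y := by
    intro u v huv x y hu hv havoid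
    have hconn : IsPreconnected (ψ '' Icc u v) :=
      (isPreconnected_Icc).image ψ hψcont.continuousOn
    have hsub : ψ '' Icc u v ⊆ S \ s₁ := by
      rintro w ⟨θ, hθ, rfl⟩
      exact ⟨hψS θ, havoid θ hθ⟩
    have hamem : x ∈ ψ '' Icc u v := ⟨u, ⟨le_refl u, huv⟩, hu⟩
    have hbmem : y ∈ ψ '' Icc u v := ⟨v, ⟨huv, le_refl v⟩, hv⟩
    exact connectedComponentIn_eq (hconn.subset_connectedComponentIn hamem hsub hbmem)
  by_cases harc1 : ∃ θ ∈ Icc α β, ψ θ ∈ s₁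
  · by_cases harc2 : ∃ θ ∈ Icc β (α + 2*Real.pi), ψ θ ∈ s₁
    · -- interleaving: contradiction
      exfalso
      obtain ⟨θ₁, hθ₁, hP₁⟩ := harc1
      obtain ⟨θ₂, hθ₂, hP₂⟩ := harc2
      have hθ₁α : θ₁ ≠ α := fun h => hanots₁ (by rw [← hψa, ← h]; exact hP₁)
      have hθ₁β : θ₁ ≠ β := fun h => hbnots₁ (by rw [← hψb, ← h]; exact hP₁)
      have hθ₂β : θ₂ ≠ β := fun h => hbnots₁ (by rw [← hψb, ← h]; exact hP₂)
      have hθ₂top : θ₂ ≠ α + 2*Real.pi := fun h => hanots₁ (by rw [← hψa2, ← h]; exact hP₂)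
      have h1 : α < θ₁ := lt_of_le_of_ne hθ₁.1 (Ne.symm hθ₁α)
      have h2 : θ₁ < β := lt_of_le_of_ne hθ₁.2 hθ₁β
      have h3 : β < θ₂ := lt_of_le_of_ne hθ₂.1 (Ne.symm hθ₂β)
      have h4 : θ₂ < α + 2*Real.pi := lt_of_le_of_ne hθ₂.2 hθ₂top
      refine no_interleave hK'c hL'c hK'p hL'p hdisj' hK'b hL'b h1 h2 h3 h4 ?_ ?_ ?_ ?_
      · exact ⟨a, ha', hexpa.symm⟩
      · refine ⟨ψ θ₁, hs₁C₁ hP₁, ?_⟩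
        show φ (φ.symm _) = _
        rw [φ.apply_symm_apply]
      · exact ⟨b, hb', hexpb.symm⟩
      · refine ⟨ψ θ₂, hs₁C₁ hP₂, ?_⟩
        show φ (φ.symm _) = _
        rw [φ.apply_symm_apply]
    · push_neg at harc2
      exact (conclude β (α + 2*Real.pi) (by linarith [hαβ.2]) b a hψb hψa2 harc2).symm
  · push_neg at harc1
    exact conclude α β hαβ.1.le a b hψa hψb harc1
end
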